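/- arXiv:math/0702311 — 12 statements merged into one kernel-verified Lean document; each statement's English description precedes it below -/
import Mathlib

section
/- For every c > 0 and every n ≥ 3, the linear diffeomorphism φ_c : ℝⁿ → ℝⁿ, φ_c(x₀,x₁,x₂,…,x_{n−1}) = (c²x₀, cx₁, cx₂, …, cx_{n−1}), whose derivative at every point is the diagonal matrix D = diag(c², c, …, c), satisfies D · G¹ₙ(φ_c(x)) · D = c² · G^cₙ(x) for every x ∈ ℝⁿ; i.e. g^cₙ = (1/c²)·φ_c*(g¹ₙ), so that c²·g^cₙ is isometric to g¹ₙ. -/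
/-! Conjugating by the diagonal matrix `D = diag(d)` multiplies the `(i, j)` entry by `dᵢ dⱼ`.
Since `φ_c` scales `x₂` by `c`, the upper `3 × 3` block is the case `n = 3`, an entrywise
identity; on the identity block the diagonal entries become `c · c = c²`. -/

/-- The matrix representing the Lorentzian metric `g^c₃` on `ℝ³`. -/
noncomputable def Gc3 (c : ℝ) (x : Fin 3 → ℝ) : Matrix (Fin 3) (Fin 3) ℝ :=
  !![-c^2, -c^2 * x 2, 0;
     -c^2 * x 2, 1 - c^2 * (x 2)^2, 0;
     0, 0, 1]

/-- The matrix representing the Lorentzian metric `g^cₙ` on `ℝⁿ` (`n ≥ 3`):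
block diagonal with upper-left `3×3` block `Gc3` and lower-right block the identity. -/
noncomputable def Gcn (c : ℝ) (n : ℕ) (hn : 3 ≤ n) (x : Fin n → ℝ) :
    Matrix (Fin n) (Fin n) ℝ := fun i j =>
  if hi : (i : ℕ) < 3 then
    if hj : (j : ℕ) < 3 then
      Gc3 c (fun k => x (Fin.castLE hn k)) ⟨i, hi⟩ ⟨j, hj⟩
    else 0
  else if i = j then 1 else 0

/-- The linear diffeomorphism `φ_c(x₀,x₁,…) = (c²x₀, cx₁, …, cx_{n-1})`. -/
noncomputable def phi (c : ℝ) (n : ℕ) (x : Fin n → ℝ) : Fin n → ℝ :=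
  fun i => (if (i : ℕ) = 0 then c^2 else c) * x i

def phiScale (c : ℝ) (n : ℕ) (i : Fin n) : ℝ := if (i : ℕ) = 0 then c^2 else c

lemma Gcn_apply_of_lt {c : ℝ} {n : ℕ} (hn : 3 ≤ n) (x : Fin n → ℝ) {i j : Fin n}
    (hi : (i : ℕ) < 3) (hj : (j : ℕ) < 3) :
    Gcn c n hn x i j = Gc3 c (fun k => x (Fin.castLE hn k)) ⟨i, hi⟩ ⟨j, hj⟩ := by
  simp [Gcn, hi, hj]

lemma Gcn_apply_of_not_lt {c : ℝ} {n : ℕ} (hn : 3 ≤ n) (x : Fin n → ℝ) {i j : Fin n}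
    (h : ¬((i : ℕ) < 3 ∧ (j : ℕ) < 3)) :
    Gcn c n hn x i j = (1 : Matrix (Fin n) (Fin n) ℝ) i j := by
  by_cases hi : (i : ℕ) < 3
  · have hj : ¬(j : ℕ) < 3 := fun hj => h ⟨hi, hj⟩
    have hij : i ≠ j := fun hij => hj (hij ▸ hi)
    simp [Gcn, hi, hj, hij]
  · simp [Gcn, hi, Matrix.one_apply]

theorem Gc3_conj_phiScale (c : ℝ) (x : Fin 3 → ℝ) :
    Matrix.diagonal (phiScale c 3) * Gc3 1 (phi c 3 x) * Matrix.diagonal (phiScale c 3) =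
      c^2 • Gc3 c x := by
  ext i j
  fin_cases i <;> fin_cases j <;>
    simp [Gc3, phi, phiScale, Matrix.mul_diagonal, Matrix.diagonal_mul] <;> ring

theorem stmt_0_general (c : ℝ) (n : ℕ) (hn : 3 ≤ n) (x : Fin n → ℝ)
    (D : Matrix (Fin n) (Fin n) ℝ)
    (hD : D = Matrix.diagonal (fun i : Fin n => if (i : ℕ) = 0 then c^2 else c)) :
    D * Gcn 1 n hn (phi c n x) * D = c^2 • Gcn c n hn x := by
  subst hD
  ext i j
  rw [Matrix.mul_diagonal, Matrix.diagonal_mul, Matrix.smul_apply, smul_eq_mul]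
  by_cases hij : (i : ℕ) < 3 ∧ (j : ℕ) < 3
  · obtain ⟨hi, hj⟩ := hij
    have block := congrFun (congrFun (Gc3_conj_phiScale c fun k => x (Fin.castLE hn k))
      ⟨i, hi⟩) ⟨j, hj⟩
    rw [Matrix.mul_diagonal, Matrix.diagonal_mul, Matrix.smul_apply, smul_eq_mul] at block
    rw [Gcn_apply_of_lt hn _ hi hj, Gcn_apply_of_lt hn _ hi hj, ← block]
    -- `phi` commutes with restriction to the first three coordinates
    rfl
  · rw [Gcn_apply_of_not_lt hn _ hij, Gcn_apply_of_not_lt hn _ hij, Matrix.one_apply]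
    by_cases h : i = j
    · subst h
      have hi : (i : ℕ) ≠ 0 := by omega
      simp only [hi, ↓reduceIte, mul_one]
      ring
    · simp [h]

/-- `D · G¹ₙ(φ_c(x)) · D = c² · G^cₙ(x)`, where
`D = diag(c², c, …, c)` is the derivative of `φ_c`; i.e.
`g^cₙ = (1/c²)·φ_c*(g¹ₙ)`, so `c²·g^cₙ` is isometric to `g¹ₙ`. -/
theorem stmt_0 (c : ℝ) (hc : 0 < c) (n : ℕ) (hn : 3 ≤ n) (x : Fin n → ℝ)
    (D : Matrix (Fin n) (Fin n) ℝ)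
    (hD : D = Matrix.diagonal (fun i : Fin n => if (i : ℕ) = 0 then c^2 else c)) :
    D * Gcn 1 n hn (phi c n x) * D = c^2 • Gcn c n hn x :=
  stmt_0_general c n hn x D hD
end

section
/- For every c > 0 and x = (x₀,x₁,x₂) ∈ ℝ³: (a) the inverse of the matrix G^c(x) is ![![-1/c² + x₂², -x₂, 0], ![-x₂, 1, 0], ![0, 0, 1]]; and (b) the Christoffel symbols Γ^k_{ij}(x) := (1/2)·Σ_m (G^c(x)⁻¹)_{km}·(∂ᵢ(G^c)_{jm} + ∂ⱼ(G^c)_{im} − ∂ₘ(G^c)_{ij})(x) are given by: Γ⁰₀₂ = Γ⁰₂₀ = (c²/2)·x₂, Γ¹₀₂ = Γ¹₂₀ = −c²/2, Γ²₀₁ = Γ²₁₀ = c²/2, Γ⁰₁₂ = Γ⁰₂₁ = (1 + c²·x₂²)/2, Γ¹₁₂ = Γ¹₂₁ = −(c²/2)·x₂, Γ²₁₁ = c²·x₂, and Γ^k_{ij}(x) = 0 for all other index triples (i,j,k). -/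
/-- The partial derivative `∂ᵢ f` at `x` of a function `f : ℝ³ → ℝ`. -/
noncomputable def pd (i : Fin 3) (f : (Fin 3 → ℝ) → ℝ) (x : Fin 3 → ℝ) : ℝ :=
  fderiv ℝ f x (Pi.single i 1)

/-- The Christoffel symbols `Γ^k_{ij}` of the metric `g^c₃` in standard coordinates:
`Γ^k_{ij} = (1/2)·Σ_m (G^c)⁻¹_{km}·(∂ᵢ(G^c)_{jm} + ∂ⱼ(G^c)_{im} − ∂ₘ(G^c)_{ij})`. -/
noncomputable def Christoffel (c : ℝ) (x : Fin 3 → ℝ) (k i j : Fin 3) : ℝ :=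
  (1/2) * ∑ m : Fin 3, (Gc3 c x)⁻¹ k m *
    (pd i (fun y => Gc3 c y j m) x + pd j (fun y => Gc3 c y i m) x
      - pd m (fun y => Gc3 c y i j) x)

lemma pd_poly (a b d : ℝ) (i : Fin 3) (x : Fin 3 → ℝ) :
    pd i (fun y => a + b * y 2 + d * (y 2)^2) x
      = (b + 2*d*(x 2)) * ((Pi.single i 1 : Fin 3 → ℝ) 2) := by
  have h : HasFDerivAt (fun y : Fin 3 → ℝ => y 2)
      (ContinuousLinearMap.proj 2 : (Fin 3 → ℝ) →L[ℝ] ℝ) x :=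
    (ContinuousLinearMap.proj (R := ℝ) (φ := fun _ : Fin 3 => ℝ) 2).hasFDerivAt
  have h2 : HasFDerivAt (fun y : Fin 3 → ℝ => a + b * y 2 + d * (y 2)^2)
      (b • (ContinuousLinearMap.proj 2 : (Fin 3 → ℝ) →L[ℝ] ℝ)
        + d • ((x 2) • (ContinuousLinearMap.proj 2 : (Fin 3 → ℝ) →L[ℝ] ℝ)
          + (x 2) • (ContinuousLinearMap.proj 2 : (Fin 3 → ℝ) →L[ℝ] ℝ))) x := by
    have := ((h.const_mul b).const_add a).add ((h.mul h).const_mul d)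
    simpa [pow_two, Pi.add_def] using this
  rw [pd, h2.fderiv]
  simp
  ring

def Am (c : ℝ) : Matrix (Fin 3) (Fin 3) ℝ := !![-c^2,0,0;0,1,0;0,0,1]
def Bm (c : ℝ) : Matrix (Fin 3) (Fin 3) ℝ := !![0,-c^2,0;-c^2,0,0;0,0,0]
def Cm (c : ℝ) : Matrix (Fin 3) (Fin 3) ℝ := !![0,0,0;0,-c^2,0;0,0,0]

lemma entry_poly (c : ℝ) (j m : Fin 3) (y : Fin 3 → ℝ) :
    Gc3 c y j m = Am c j m + Bm c j m * y 2 + Cm c j m * (y 2)^2 := by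
  fin_cases j <;> fin_cases m <;> (simp [Gc3, Am, Bm, Cm, Matrix.vecHead, Matrix.vecTail]; try ring)

lemma pd_entry (c : ℝ) (x : Fin 3 → ℝ) (i j m : Fin 3) :
    pd i (fun y => Gc3 c y j m) x
      = (Bm c j m + 2 * Cm c j m * x 2) * ((Pi.single i 1 : Fin 3 → ℝ) 2) := by
  rw [show (fun y => Gc3 c y j m)
      = fun y : Fin 3 → ℝ => Am c j m + Bm c j m * y 2 + Cm c j m * (y 2)^2 from
    funext (entry_poly c j m)]
  exact pd_poly _ _ _ _ _


set_option maxHeartbeats 2000000 in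
/-- the inverse matrix of `G^c(x)` and the Christoffel symbols of `g^c₃`. -/
theorem stmt_1 (c : ℝ) (hc : 0 < c) (x : Fin 3 → ℝ) :
    (Gc3 c x)⁻¹ =
      !![-1/c^2 + (x 2)^2, -(x 2), 0;
         -(x 2), 1, 0;
         0, 0, 1] ∧
    Christoffel c x 0 0 2 = c^2/2 * x 2 ∧
    Christoffel c x 0 2 0 = c^2/2 * x 2 ∧
    Christoffel c x 1 0 2 = -(c^2/2) ∧
    Christoffel c x 1 2 0 = -(c^2/2) ∧
    Christoffel c x 2 0 1 = c^2/2 ∧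
    Christoffel c x 2 1 0 = c^2/2 ∧
    Christoffel c x 0 1 2 = (1 + c^2 * (x 2)^2)/2 ∧
    Christoffel c x 0 2 1 = (1 + c^2 * (x 2)^2)/2 ∧
    Christoffel c x 1 1 2 = -(c^2/2) * x 2 ∧
    Christoffel c x 1 2 1 = -(c^2/2) * x 2 ∧
    Christoffel c x 2 1 1 = c^2 * x 2 ∧
    (∀ k i j : Fin 3,
      (k, i, j) ∉ ({(0,0,2), (0,2,0), (1,0,2), (1,2,0), (2,0,1), (2,1,0),
        (0,1,2), (0,2,1), (1,1,2), (1,2,1), (2,1,1)} :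
        Set (Fin 3 × Fin 3 × Fin 3)) →
      Christoffel c x k i j = 0) := by
  have hc0 : c ≠ 0 := ne_of_gt hc
  have hc2 : (c:ℝ)^2 ≠ 0 := by positivity
  have hinv : (Gc3 c x)⁻¹ =
      !![-1/c^2 + (x 2)^2, -(x 2), 0;
         -(x 2), 1, 0;
         0, 0, 1] := by
    apply Matrix.inv_eq_right_inv
    ext i j
    fin_cases i <;> fin_cases j <;>
      (simp [Gc3, Matrix.mul_apply, Fin.sum_univ_three, Matrix.vecHead, Matrix.vecTail];
       try (first | ring1 | (field_simp; ring1) | field_simp))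
  have hzero : ∀ k i j : Fin 3,
      (k, i, j) ∉ ({(0,0,2), (0,2,0), (1,0,2), (1,2,0), (2,0,1), (2,1,0),
        (0,1,2), (0,2,1), (1,1,2), (1,2,1), (2,1,1)} :
        Set (Fin 3 × Fin 3 × Fin 3)) →
      Christoffel c x k i j = 0 := by
    intro k i j hk
    simp only [Set.mem_insert_iff, Set.mem_singleton_iff] at hk
    fin_cases k <;> fin_cases i <;> fin_cases j <;>
      first
      | exact absurd (by decide) hk
      | (simp [Christoffel, hinv, pd_entry, Fin.sum_univ_three, Bm, Cm,
           Pi.single_apply, Matrix.vecHead, Matrix.vecTail];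
         try (first | ring1 | (field_simp; ring1) | field_simp))
  refine ⟨hinv, ?_, ?_, ?_, ?_, ?_, ?_, ?_, ?_, ?_, ?_, ?_, hzero⟩
  all_goals
    (simp [Christoffel, hinv, pd_entry, Fin.sum_univ_three, Bm, Cm,
       Pi.single_apply, Matrix.vecHead, Matrix.vecTail];
     try (first | ring1 | (field_simp; ring1) | field_simp))
end

section
/- Let c > 0, p = (p₀,p₁,p₂) ∈ ℝ³, v = (v₀,v₁,v₂) ∈ ℝ³, and suppose ω := c²·(v₀ + p₂·v₁) ≠ 0. Define γ = (γ₀,γ₁,γ₂) : ℝ → ℝ³ by γ₀(t) = (v₁v₂/(2ω²))·cos(2ωt) + ((v₂² − v₁²)/(4ω²))·sin(2ωt) − ((p₂ω − v₁)/ω²)·(v₁·sin(ωt) − v₂·cos(ωt)) + (ω/c² − (v₁² + v₂²)/(2ω))·t + (2p₀ω² − 2p₂v₂ω + v₁v₂)/(2ω²), γ₁(t) = (v₁·sin(ωt) − v₂·cos(ωt) + p₁ω + v₂)/ω, γ₂(t) = (v₂·sin(ωt) + v₁·cos(ωt) + p₂ω − v₁)/ω. Then γ is twice differentiable, γ(0)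 = p, γ'(0) = v, and γ solves the geodesic equation of g^c₃ on all of ℝ. -/
lemma hsin' (a t : ℝ) : HasDerivAt (fun x : ℝ => Real.sin (a * x)) (a * Real.cos (a * t)) t := by
  have h : HasDerivAt (fun x : ℝ => a * x) a t := by
    simpa using (hasDerivAt_id t).const_mul a
  have H : HasDerivAt (fun x : ℝ => Real.sin (a * x)) _ t := (Real.hasDerivAt_sin (a * t)).comp t h
  simpa [Function.comp, mul_comm] using H

lemma hcos' (a t : ℝ) : HasDerivAt (fun x : ℝ => Real.cos (a * x)) (-(a * Real.sin (a * t))) t := by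
  have h : HasDerivAt (fun x : ℝ => a * x) a t := by
    simpa using (hasDerivAt_id t).const_mul a
  have H : HasDerivAt (fun x : ℝ => Real.cos (a * x)) _ t := (Real.hasDerivAt_cos (a * t)).comp t h
  simpa [Function.comp, mul_comm] using H


/-- A curve `γ = (γ₀,γ₁,γ₂) : ℝ → ℝ³` solves the geodesic equation of the
Lorentzian metric `g^c₃` iff it is twice differentiable and satisfies the
geodesic ODE computed from the Christoffel symbols of `g^c₃`. -/
def SolvesGeodesic (c : ℝ) (γ₀ γ₁ γ₂ : ℝ → ℝ) : Prop :=
  Differentiable ℝ γ₀ ∧ Differentiable ℝ (deriv γ₀) ∧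
  Differentiable ℝ γ₁ ∧ Differentiable ℝ (deriv γ₁) ∧
  Differentiable ℝ γ₂ ∧ Differentiable ℝ (deriv γ₂) ∧
  ∀ t : ℝ,
    deriv (deriv γ₀) t =
      -c^2 * γ₂ t * deriv γ₀ t * deriv γ₂ t
        - (1 + c^2 * (γ₂ t)^2) * deriv γ₁ t * deriv γ₂ t ∧
    deriv (deriv γ₁) t =
      c^2 * deriv γ₀ t * deriv γ₂ t + c^2 * γ₂ t * deriv γ₁ t * deriv γ₂ t ∧
    deriv (deriv γ₂) t =
      -c^2 * deriv γ₀ t * deriv γ₁ t - c^2 * γ₂ t * (deriv γ₁ t)^2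

/-- explicit formula for the geodesics of `g^c₃` with `ω ≠ 0`. -/
theorem stmt_2 (c p₀ p₁ p₂ v₀ v₁ v₂ ω : ℝ) (hc : 0 < c)
    (hω : ω = c^2 * (v₀ + p₂ * v₁)) (hω0 : ω ≠ 0)
    (γ₀ γ₁ γ₂ : ℝ → ℝ)
    (h₀ : γ₀ = fun t =>
      (v₁ * v₂ / (2 * ω^2)) * Real.cos (2 * ω * t)
        + ((v₂^2 - v₁^2) / (4 * ω^2)) * Real.sin (2 * ω * t)
        - ((p₂ * ω - v₁) / ω^2) * (v₁ * Real.sin (ω * t) - v₂ * Real.cos (ω * t))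
        + (ω / c^2 - (v₁^2 + v₂^2) / (2 * ω)) * t
        + (2 * p₀ * ω^2 - 2 * p₂ * v₂ * ω + v₁ * v₂) / (2 * ω^2))
    (h₁ : γ₁ = fun t =>
      (v₁ * Real.sin (ω * t) - v₂ * Real.cos (ω * t) + p₁ * ω + v₂) / ω)
    (h₂ : γ₂ = fun t =>
      (v₂ * Real.sin (ω * t) + v₁ * Real.cos (ω * t) + p₂ * ω - v₁) / ω) :
    SolvesGeodesic c γ₀ γ₁ γ₂ ∧
    γ₀ 0 = p₀ ∧ γ₁ 0 = p₁ ∧ γ₂ 0 = p₂ ∧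
    deriv γ₀ 0 = v₀ ∧ deriv γ₁ 0 = v₁ ∧ deriv γ₂ 0 = v₂ := by
  have hc0 : (c:ℝ) ≠ 0 := ne_of_gt hc
  subst h₀ h₁ h₂
  -- first derivatives
  have hd0 : ∀ t : ℝ, HasDerivAt (fun t =>
      (v₁ * v₂ / (2 * ω^2)) * Real.cos (2 * ω * t)
        + ((v₂^2 - v₁^2) / (4 * ω^2)) * Real.sin (2 * ω * t)
        - ((p₂ * ω - v₁) / ω^2) * (v₁ * Real.sin (ω * t) - v₂ * Real.cos (ω * t))
        + (ω / c^2 - (v₁^2 + v₂^2) / (2 * ω)) * t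
        + (2 * p₀ * ω^2 - 2 * p₂ * v₂ * ω + v₁ * v₂) / (2 * ω^2))
      (-(v₁ * v₂ / ω) * Real.sin (2 * ω * t)
        + ((v₂^2 - v₁^2) / (2 * ω)) * Real.cos (2 * ω * t)
        - ((p₂ * ω - v₁) / ω) * (v₁ * Real.cos (ω * t) + v₂ * Real.sin (ω * t))
        + (ω / c^2 - (v₁^2 + v₂^2) / (2 * ω))) t := by
    intro t
    have H := (((((hcos' (2*ω) t).const_mul (v₁ * v₂ / (2 * ω^2))).add
        ((hsin' (2*ω) t).const_mul ((v₂^2 - v₁^2) / (4 * ω^2)))).sub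
        ((((hsin' ω t).const_mul v₁).sub ((hcos' ω t).const_mul v₂)).const_mul
          ((p₂ * ω - v₁) / ω^2))).add
        ((hasDerivAt_id t).const_mul (ω / c^2 - (v₁^2 + v₂^2) / (2 * ω)))).add_const
        ((2 * p₀ * ω^2 - 2 * p₂ * v₂ * ω + v₁ * v₂) / (2 * ω^2))
    convert H using 1
    · rfl
    · rfl
    · rfl
    field_simp
    ring
  have hd1 : ∀ t : ℝ, HasDerivAt (fun t =>
      (v₁ * Real.sin (ω * t) - v₂ * Real.cos (ω * t) + p₁ * ω + v₂) / ω)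
      (v₁ * Real.cos (ω * t) + v₂ * Real.sin (ω * t)) t := by
    intro t
    have H := ((((hsin' ω t).const_mul v₁).sub ((hcos' ω t).const_mul v₂)).add_const
        (p₁ * ω + v₂)).div_const ω
    convert H using 1
    · rfl
    · rfl
    · funext x; simp only [Pi.sub_apply]; ring
    · rw [eq_div_iff hω0]; ring
  have hd2 : ∀ t : ℝ, HasDerivAt (fun t =>
      (v₂ * Real.sin (ω * t) + v₁ * Real.cos (ω * t) + p₂ * ω - v₁) / ω)
      (v₂ * Real.cos (ω * t) - v₁ * Real.sin (ω * t)) t := by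
    intro t
    have H := ((((hsin' ω t).const_mul v₂).add ((hcos' ω t).const_mul v₁)).add_const
        (p₂ * ω - v₁)).div_const ω
    convert H using 1
    · rfl
    · rfl
    · funext x; simp only [Pi.add_apply]; ring
    · rw [eq_div_iff hω0]; ring
  have e0 : deriv (fun t =>
      (v₁ * v₂ / (2 * ω^2)) * Real.cos (2 * ω * t)
        + ((v₂^2 - v₁^2) / (4 * ω^2)) * Real.sin (2 * ω * t)
        - ((p₂ * ω - v₁) / ω^2) * (v₁ * Real.sin (ω * t) - v₂ * Real.cos (ω * t))
        + (ω / c^2 - (v₁^2 + v₂^2) / (2 * ω)) * t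
        + (2 * p₀ * ω^2 - 2 * p₂ * v₂ * ω + v₁ * v₂) / (2 * ω^2)) = fun t =>
      -(v₁ * v₂ / ω) * Real.sin (2 * ω * t)
        + ((v₂^2 - v₁^2) / (2 * ω)) * Real.cos (2 * ω * t)
        - ((p₂ * ω - v₁) / ω) * (v₁ * Real.cos (ω * t) + v₂ * Real.sin (ω * t))
        + (ω / c^2 - (v₁^2 + v₂^2) / (2 * ω)) :=
    funext fun t => (hd0 t).deriv
  have e1 : deriv (fun t =>
      (v₁ * Real.sin (ω * t) - v₂ * Real.cos (ω * t) + p₁ * ω + v₂) / ω) = fun t =>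
      v₁ * Real.cos (ω * t) + v₂ * Real.sin (ω * t) :=
    funext fun t => (hd1 t).deriv
  have e2 : deriv (fun t =>
      (v₂ * Real.sin (ω * t) + v₁ * Real.cos (ω * t) + p₂ * ω - v₁) / ω) = fun t =>
      v₂ * Real.cos (ω * t) - v₁ * Real.sin (ω * t) :=
    funext fun t => (hd2 t).deriv
  -- second derivatives
  have hdd0 : ∀ t : ℝ, HasDerivAt (fun t =>
      -(v₁ * v₂ / ω) * Real.sin (2 * ω * t)
        + ((v₂^2 - v₁^2) / (2 * ω)) * Real.cos (2 * ω * t)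
        - ((p₂ * ω - v₁) / ω) * (v₁ * Real.cos (ω * t) + v₂ * Real.sin (ω * t))
        + (ω / c^2 - (v₁^2 + v₂^2) / (2 * ω)))
      (-(2 * v₁ * v₂) * Real.cos (2 * ω * t) - (v₂^2 - v₁^2) * Real.sin (2 * ω * t)
        - (p₂ * ω - v₁) * (v₂ * Real.cos (ω * t) - v₁ * Real.sin (ω * t))) t := by
    intro t
    have H := ((((hsin' (2*ω) t).const_mul (-(v₁ * v₂ / ω))).add
        ((hcos' (2*ω) t).const_mul ((v₂^2 - v₁^2) / (2 * ω)))).sub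
        ((((hcos' ω t).const_mul v₁).add ((hsin' ω t).const_mul v₂)).const_mul
          ((p₂ * ω - v₁) / ω))).add_const (ω / c^2 - (v₁^2 + v₂^2) / (2 * ω))
    convert H using 1
    · rfl
    · rfl
    · rfl
    field_simp
    ring
  have hdd1 : ∀ t : ℝ, HasDerivAt (fun t =>
      v₁ * Real.cos (ω * t) + v₂ * Real.sin (ω * t))
      (ω * (v₂ * Real.cos (ω * t) - v₁ * Real.sin (ω * t))) t := by
    intro t
    have H := ((hcos' ω t).const_mul v₁).add ((hsin' ω t).const_mul v₂)
    convert H using 1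
    · rfl
    · rfl
    · rfl
    ring
  have hdd2 : ∀ t : ℝ, HasDerivAt (fun t =>
      v₂ * Real.cos (ω * t) - v₁ * Real.sin (ω * t))
      (-(ω * (v₁ * Real.cos (ω * t) + v₂ * Real.sin (ω * t)))) t := by
    intro t
    have H := ((hcos' ω t).const_mul v₂).sub ((hsin' ω t).const_mul v₁)
    convert H using 1
    · rfl
    · rfl
    · rfl
    ring
  refine ⟨⟨fun t => (hd0 t).differentiableAt, ?_, fun t => (hd1 t).differentiableAt, ?_,
      fun t => (hd2 t).differentiableAt, ?_, ?_⟩, ?_, ?_, ?_, ?_, ?_, ?_⟩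
  · rw [e0]; exact fun t => (hdd0 t).differentiableAt
  · rw [e1]; exact fun t => (hdd1 t).differentiableAt
  · rw [e2]; exact fun t => (hdd2 t).differentiableAt
  · intro t
    rw [e0, e1, e2]
    have E0 : deriv (fun t =>
        -(v₁ * v₂ / ω) * Real.sin (2 * ω * t)
          + ((v₂^2 - v₁^2) / (2 * ω)) * Real.cos (2 * ω * t)
          - ((p₂ * ω - v₁) / ω) * (v₁ * Real.cos (ω * t) + v₂ * Real.sin (ω * t))
          + (ω / c^2 - (v₁^2 + v₂^2) / (2 * ω))) t =
        -(2 * v₁ * v₂) * Real.cos (2 * ω * t) - (v₂^2 - v₁^2) * Real.sin (2 * ω * t)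
          - (p₂ * ω - v₁) * (v₂ * Real.cos (ω * t) - v₁ * Real.sin (ω * t)) := (hdd0 t).deriv
    have E1 : deriv (fun t => v₁ * Real.cos (ω * t) + v₂ * Real.sin (ω * t)) t =
        ω * (v₂ * Real.cos (ω * t) - v₁ * Real.sin (ω * t)) := (hdd1 t).deriv
    have E2 : deriv (fun t => v₂ * Real.cos (ω * t) - v₁ * Real.sin (ω * t)) t =
        -(ω * (v₁ * Real.cos (ω * t) + v₂ * Real.sin (ω * t))) := (hdd2 t).deriv
    rw [E0, E1, E2]
    simp only
    rw [show (2:ℝ) * ω * t = 2 * (ω * t) by ring, Real.sin_two_mul, Real.cos_two_mul]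
    have hp := Real.sin_sq_add_cos_sq (ω * t)
    have hcc : c^2 * (ω / c^2) = ω := by field_simp
    have hoo : ω * ω⁻¹ = 1 := mul_inv_cancel₀ hω0
    refine ⟨?_, ?_, ?_⟩
    · linear_combination ((v₂ * Real.sin (ω*t) + v₁ * Real.cos (ω*t) + p₂*ω - v₁)/ω
        * (v₂ * Real.cos (ω*t) - v₁ * Real.sin (ω*t)) * c^2 * v₂^2 / ω - 2*v₁*v₂) * hp
        + ((v₂ * Real.sin (ω*t) + v₁ * Real.cos (ω*t) + p₂*ω - v₁)/ω
          * (v₂ * Real.cos (ω*t) - v₁ * Real.sin (ω*t))) * hcc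
        - (v₁*v₂*Real.cos (ω*t) - v₁*v₂*Real.cos (ω*t)^2 + v₁*v₂*Real.sin (ω*t)^2
          + p₂*ω*v₁*Real.sin (ω*t) - p₂*ω*v₂*Real.cos (ω*t)
          + v₁^2*Real.cos (ω*t)*Real.sin (ω*t) - v₁^2*Real.sin (ω*t)
          - v₂^2*Real.cos (ω*t)*Real.sin (ω*t)) * hoo
    · linear_combination (-(v₂ * Real.cos (ω*t) - v₁ * Real.sin (ω*t)) * c^2 * v₂^2 / ω) * hp
        - (v₂ * Real.cos (ω*t) - v₁ * Real.sin (ω*t)) * hcc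
    · linear_combination ((v₁ * Real.cos (ω*t) + v₂ * Real.sin (ω*t)) * c^2 * v₂^2 / ω) * hp
        + (v₁ * Real.cos (ω*t) + v₂ * Real.sin (ω*t)) * hcc
  · simp only [mul_zero, Real.cos_zero, Real.sin_zero]
    field_simp
    ring
  · simp only [mul_zero, Real.cos_zero, Real.sin_zero]
    field_simp
    ring
  · simp only [mul_zero, Real.cos_zero, Real.sin_zero]
    field_simp
    ring
  · rw [e0]
    simp only [mul_zero, Real.cos_zero, Real.sin_zero]
    have hv : v₀ + p₂ * v₁ ≠ 0 := fun h => hω0 (by rw [hω, h, mul_zero])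
    have hv' : v₁ * p₂ + v₀ ≠ 0 := by rwa [add_comm, mul_comm]
    rw [hω]
    field_simp
    ring_nf
    field_simp
  · rw [e1]
    simp only [mul_zero, Real.cos_zero, Real.sin_zero]
    ring
  · rw [e2]
    simp only [mul_zero, Real.cos_zero, Real.sin_zero]
    ring
end

section
/- Let c > 0, p = (p₀,p₁,p₂) ∈ ℝ³, v = (v₀,v₁,v₂) ∈ ℝ³, and suppose c²·(v₀ + p₂·v₁) = 0. Define γ = (γ₀,γ₁,γ₂) : ℝ → ℝ³ by γ₀(t) = −(1/2)·v₁·v₂·t² − p₂·v₁·t + p₀, γ₁(t) = v₁·t + p₁, γ₂(t) = v₂·t + p₂. Then γ is twice differentiable, γ(0) = p, γ'(0) = v, and γ solves the geodesic equation of g^c₃ on all of ℝ. -/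
/-- explicit formula for the geodesics of `g^c₃` with `ω = 0`. -/
theorem stmt_3 (c p₀ p₁ p₂ v₀ v₁ v₂ : ℝ) (hc : 0 < c)
    (hω0 : c^2 * (v₀ + p₂ * v₁) = 0)
    (γ₀ γ₁ γ₂ : ℝ → ℝ)
    (h₀ : γ₀ = fun t => -(1/2) * v₁ * v₂ * t^2 - p₂ * v₁ * t + p₀)
    (h₁ : γ₁ = fun t => v₁ * t + p₁)
    (h₂ : γ₂ = fun t => v₂ * t + p₂) :
    SolvesGeodesic c γ₀ γ₁ γ₂ ∧
    γ₀ 0 = p₀ ∧ γ₁ 0 = p₁ ∧ γ₂ 0 = p₂ ∧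
    deriv γ₀ 0 = v₀ ∧ deriv γ₁ 0 = v₁ ∧ deriv γ₂ 0 = v₂ := by
  have hv₀ : v₀ = -(p₂ * v₁) := by
    have hc2 : c^2 ≠ 0 := pow_ne_zero 2 (ne_of_gt hc)
    have := (mul_eq_zero.mp hω0).resolve_left hc2
    linarith
  have hd0 : ∀ t : ℝ, HasDerivAt γ₀ (-v₁ * v₂ * t - p₂ * v₁) t := by
    intro t
    rw [h₀]
    have h := (((hasDerivAt_pow 2 t).const_mul (-(1/2) * v₁ * v₂)).sub
        ((hasDerivAt_id t).const_mul (p₂ * v₁))).add_const p₀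
    refine h.congr_deriv ?_
    push_cast; ring
  have hd1 : ∀ t : ℝ, HasDerivAt γ₁ v₁ t := by
    intro t
    rw [h₁]
    simpa using ((hasDerivAt_id t).const_mul v₁).add_const p₁
  have hd2 : ∀ t : ℝ, HasDerivAt γ₂ v₂ t := by
    intro t
    rw [h₂]
    simpa using ((hasDerivAt_id t).const_mul v₂).add_const p₂
  have e0 : deriv γ₀ = fun t => -v₁ * v₂ * t - p₂ * v₁ :=
    funext fun t => (hd0 t).deriv
  have e1 : deriv γ₁ = fun _ => v₁ := funext fun t => (hd1 t).deriv
  have e2 : deriv γ₂ = fun _ => v₂ := funext fun t => (hd2 t).deriv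
  have hdd0 : ∀ t : ℝ, HasDerivAt (deriv γ₀) (-v₁ * v₂) t := by
    intro t
    rw [e0]
    simpa using (((hasDerivAt_id t).const_mul (-v₁ * v₂)).sub_const (p₂ * v₁))
  have ee0 : deriv (deriv γ₀) = fun _ => -v₁ * v₂ := funext fun t => (hdd0 t).deriv
  have ee1 : deriv (deriv γ₁) = fun _ => (0:ℝ) := by
    rw [e1]; funext t; simp
  have ee2 : deriv (deriv γ₂) = fun _ => (0:ℝ) := by
    rw [e2]; funext t; simp
  refine ⟨⟨fun t => (hd0 t).differentiableAt, fun t => (hdd0 t).differentiableAt,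
    fun t => (hd1 t).differentiableAt, by rw [e1]; exact differentiable_const _,
    fun t => (hd2 t).differentiableAt, by rw [e2]; exact differentiable_const _,
    fun t => ?_⟩, ?_, ?_, ?_, ?_, ?_, ?_⟩
  · rw [ee0, ee1, ee2, e0, e1, e2, h₂]
    refine ⟨by ring, by ring, by ring⟩
  · rw [h₀]; ring_nf
  · rw [h₁]; ring_nf
  · rw [h₂]; ring_nf
  · rw [e0, hv₀]; ring_nf
  · rw [e1]
  · rw [e2]
end

section
/- The metric g^c₃ is geodesically complete: for every c > 0 and all p, v ∈ ℝ³ there exists a twice differentiable curve γ : ℝ → ℝ³, defined on all of ℝ, which solves the geodesic equation of g^c₃ and satisfies γ(0) = p and γ'(0) = v. -/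
lemma aux_geo (c A p₀ : ℝ) (γ₁ γ₂ : ℝ → ℝ)
    (h₁ : Differentiable ℝ γ₁) (h₁' : Differentiable ℝ (deriv γ₁))
    (h₂ : Differentiable ℝ γ₂) (h₂' : Differentiable ℝ (deriv γ₂))
    (heq1 : ∀ t, deriv (deriv γ₁) t = (c^2 * A) * deriv γ₂ t)
    (heq2 : ∀ t, deriv (deriv γ₂) t = -(c^2 * A) * deriv γ₁ t) :
    ∃ γ₀ : ℝ → ℝ, SolvesGeodesic c γ₀ γ₁ γ₂ ∧ γ₀ 0 = p₀ ∧
      deriv γ₀ 0 = A - γ₂ 0 * deriv γ₁ 0 := by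
  set f : ℝ → ℝ := fun s => A - γ₂ s * deriv γ₁ s with hf
  have hfc : Continuous f := continuous_const.sub (h₂.continuous.mul h₁'.continuous)
  set γ₀ : ℝ → ℝ := fun t => p₀ + ∫ s in (0:ℝ)..t, f s with hγ₀
  have hdg0 : ∀ t, HasDerivAt γ₀ (f t) t := fun t =>
    ((hfc.integral_hasStrictDerivAt 0 t).hasDerivAt).const_add p₀
  have hd0 : deriv γ₀ = f := funext fun t => (hdg0 t).deriv
  have hdf : ∀ t, HasDerivAt f
      (-(deriv γ₂ t * deriv γ₁ t + γ₂ t * deriv (deriv γ₁) t)) t := fun t => by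
    simpa using (((h₂ t).hasDerivAt.mul (h₁' t).hasDerivAt).const_sub A)
  refine ⟨γ₀, ⟨fun t => (hdg0 t).differentiableAt, ?_, h₁, h₁', h₂, h₂', ?_⟩, by simp [hγ₀], ?_⟩
  · rw [hd0]; exact fun t => (hdf t).differentiableAt
  · intro t
    rw [hd0]
    refine ⟨?_, ?_, ?_⟩
    · rw [(hdf t).deriv, heq1 t, hf]
      ring
    · rw [heq1 t, hf]
      ring
    · rw [heq2 t, hf]
      ring
  · rw [hd0]

/-- the metric `g^c₃` is geodesically complete. -/
theorem stmt_4 (c : ℝ) (hc : 0 < c) (p₀ p₁ p₂ v₀ v₁ v₂ : ℝ) :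
    ∃ γ₀ γ₁ γ₂ : ℝ → ℝ,
      SolvesGeodesic c γ₀ γ₁ γ₂ ∧
      γ₀ 0 = p₀ ∧ γ₁ 0 = p₁ ∧ γ₂ 0 = p₂ ∧
      deriv γ₀ 0 = v₀ ∧ deriv γ₁ 0 = v₁ ∧ deriv γ₂ 0 = v₂ := by
  set A : ℝ := v₀ + p₂ * v₁ with hA
  set ω : ℝ := c^2 * A with hω
  by_cases h0 : ω = 0
  · -- straight-line case
    set γ₁ : ℝ → ℝ := fun t => p₁ + v₁ * t with hγ₁
    set γ₂ : ℝ → ℝ := fun t => p₂ + v₂ * t with hγ₂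
    have hd1 : ∀ t : ℝ, HasDerivAt γ₁ v₁ t := fun t => by
      simpa [hγ₁] using ((hasDerivAt_id t).const_mul v₁).const_add p₁
    have hd2 : ∀ t : ℝ, HasDerivAt γ₂ v₂ t := fun t => by
      simpa [hγ₂] using ((hasDerivAt_id t).const_mul v₂).const_add p₂
    have e1 : deriv γ₁ = fun _ => v₁ := funext fun t => (hd1 t).deriv
    have e2 : deriv γ₂ = fun _ => v₂ := funext fun t => (hd2 t).deriv
    obtain ⟨γ₀, hsol, h00, h01⟩ := aux_geo c A p₀ γ₁ γ₂
      (fun t => (hd1 t).differentiableAt) (by rw [e1]; exact differentiable_const _)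
      (fun t => (hd2 t).differentiableAt) (by rw [e2]; exact differentiable_const _)
      (fun t => by rw [e1, ← hω, h0]; simp)
      (fun t => by rw [e2, ← hω, h0]; simp)
    exact ⟨γ₀, γ₁, γ₂, hsol, h00, by simp [hγ₁], by simp [hγ₂],
      by rw [h01, e1]; simp [hγ₂, hA], by rw [e1], by rw [e2]⟩
  · -- rotating case
    set d₁ : ℝ → ℝ := fun t => v₁ * Real.cos (ω*t) + v₂ * Real.sin (ω*t) with hd₁def
    set d₂ : ℝ → ℝ := fun t => v₂ * Real.cos (ω*t) - v₁ * Real.sin (ω*t) with hd₂def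
    set γ₁ : ℝ → ℝ := fun t => p₁ + (v₁ * Real.sin (ω*t) + v₂ * (1 - Real.cos (ω*t)))/ω with hγ₁
    set γ₂ : ℝ → ℝ := fun t => p₂ + (v₂ * Real.sin (ω*t) - v₁ * (1 - Real.cos (ω*t)))/ω with hγ₂
    have hsin : ∀ t : ℝ, HasDerivAt (fun t => Real.sin (ω*t)) (Real.cos (ω*t) * ω) t := by
      intro t
      simpa only [mul_one] using ((hasDerivAt_id' t).const_mul ω).sin
    have hcos : ∀ t : ℝ, HasDerivAt (fun t => Real.cos (ω*t)) (-Real.sin (ω*t) * ω) t := by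
      intro t
      simpa only [mul_one] using ((hasDerivAt_id' t).const_mul ω).cos
    have hd1 : ∀ t : ℝ, HasDerivAt γ₁ (d₁ t) t := by
      intro t
      have := ((((hsin t).const_mul v₁).add (((hcos t).const_sub 1).const_mul v₂)).div_const
        ω).const_add p₁
      refine this.congr_deriv ?_
      field_simp [hd₁def]
      ring
    have hd2 : ∀ t : ℝ, HasDerivAt γ₂ (d₂ t) t := by
      intro t
      have := ((((hsin t).const_mul v₂).sub (((hcos t).const_sub 1).const_mul v₁)).div_const
        ω).const_add p₂
      refine this.congr_deriv ?_
      field_simp [hd₂def]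
      ring
    have e1 : deriv γ₁ = d₁ := funext fun t => (hd1 t).deriv
    have e2 : deriv γ₂ = d₂ := funext fun t => (hd2 t).deriv
    have hdd1 : ∀ t : ℝ, HasDerivAt d₁ (ω * d₂ t) t := by
      intro t
      have := ((hcos t).const_mul v₁).add ((hsin t).const_mul v₂)
      refine this.congr_deriv ?_
      simp only [hd₂def]
      ring
    have hdd2 : ∀ t : ℝ, HasDerivAt d₂ (-ω * d₁ t) t := by
      intro t
      have := ((hcos t).const_mul v₂).sub ((hsin t).const_mul v₁)
      refine this.congr_deriv ?_
      simp only [hd₁def]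
      ring
    obtain ⟨γ₀, hsol, h00, h01⟩ := aux_geo c A p₀ γ₁ γ₂
      (fun t => (hd1 t).differentiableAt)
      (by rw [e1]; exact fun t => (hdd1 t).differentiableAt)
      (fun t => (hd2 t).differentiableAt)
      (by rw [e2]; exact fun t => (hdd2 t).differentiableAt)
      (fun t => by rw [e1, e2, (hdd1 t).deriv, ← hω])
      (fun t => by rw [e1, e2, (hdd2 t).deriv, ← hω])
    refine ⟨γ₀, γ₁, γ₂, hsol, h00, by simp [hγ₁], by simp [hγ₂], ?_, ?_, ?_⟩
    · rw [h01, e1]; simp [hγ₂, hd₁def, hA]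
    · rw [e1]; simp [hd₁def]
    · rw [e2]; simp [hd₂def]
end

section
/- Let c > 0, p, v ∈ ℝ³ with ω := c²·(v₀ + p₂·v₁) ≠ 0, and let γ : ℝ → ℝ³ be a twice differentiable solution of the geodesic equation of g^c₃ with γ(0) = p and γ'(0) = v. Then there exists T > 0 with γ(T) = p and γ'(T) = v if and only if 2c²·(v₀ + p₂·v₁)² = v₁² + v₂². -/
set_option maxHeartbeats 1000000 in
/-- a geodesic of `g^c₃` with `ω := c²(v₀+p₂v₁) ≠ 0` is closed
iff `2c²(v₀+p₂v₁)² = v₁²+v₂²`. -/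
theorem stmt_6 (c p₀ p₁ p₂ v₀ v₁ v₂ ω : ℝ) (hc : 0 < c)
    (hω : ω = c^2 * (v₀ + p₂ * v₁)) (hω0 : ω ≠ 0)
    (γ₀ γ₁ γ₂ : ℝ → ℝ) (hgeo : SolvesGeodesic c γ₀ γ₁ γ₂)
    (hp : γ₀ 0 = p₀ ∧ γ₁ 0 = p₁ ∧ γ₂ 0 = p₂)
    (hV : deriv γ₀ 0 = v₀ ∧ deriv γ₁ 0 = v₁ ∧ deriv γ₂ 0 = v₂) :
    (∃ T > (0 : ℝ),
        γ₀ T = p₀ ∧ γ₁ T = p₁ ∧ γ₂ T = p₂ ∧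
        deriv γ₀ T = v₀ ∧ deriv γ₁ T = v₁ ∧ deriv γ₂ T = v₂) ↔
      2 * c^2 * (v₀ + p₂ * v₁)^2 = v₁^2 + v₂^2 := by
  obtain ⟨hd₀, hd₀', hd₁, hd₁', hd₂, hd₂', hode⟩ := hgeo
  obtain ⟨hp₀, hp₁, hp₂⟩ := hp
  obtain ⟨hv₀, hv₁, hv₂⟩ := hV
  have hc0 : (c:ℝ) ≠ 0 := ne_of_gt hc
  have hc2 : c^2 ≠ 0 := pow_ne_zero _ hc0
  have hlin : ∀ t : ℝ, HasDerivAt (fun s : ℝ => ω*s) ω t := by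
    intro t; simpa using (hasDerivAt_id t).const_mul ω
  -- conserved quantity
  have hE : ∀ t, c^2 * (deriv γ₀ t + γ₂ t * deriv γ₁ t) = ω := by
    have hq : ∀ t, HasDerivAt (fun s => c^2 * (deriv γ₀ s + γ₂ s * deriv γ₁ s)) 0 t := by
      intro s
      have H := (((hd₀' s).hasDerivAt.add ((hd₂ s).hasDerivAt.mul
        (hd₁' s).hasDerivAt)).const_mul (c^2))
      convert H using 1
      case e'_4 => rfl
      case e'_5 => rfl
      case e'_8 => rfl
      obtain ⟨e0, e1, _⟩ := hode s
      rw [e0, e1]; ring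
    intro t
    have hconst := is_const_of_deriv_eq_zero (fun x => (hq x).differentiableAt)
      (fun x => (hq x).deriv) t 0
    rw [hconst, hv₀, hv₁, hp₂, hω]
  have hu1' : ∀ t, deriv (deriv γ₁) t = ω * deriv γ₂ t := by
    intro t
    rw [(hode t).2.1]
    linear_combination (deriv γ₂ t) * (hE t)
  have hu2' : ∀ t, deriv (deriv γ₂) t = -(ω * deriv γ₁ t) := by
    intro t
    rw [(hode t).2.2]
    linear_combination (-(deriv γ₁ t)) * (hE t)
  -- the velocity components (γ₁', γ₂') rotate with angular speed ω
  have hD1D2 : ∀ t, deriv γ₁ t = v₁ * Real.cos (ω*t) + v₂ * Real.sin (ω*t)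
      ∧ deriv γ₂ t = -v₁ * Real.sin (ω*t) + v₂ * Real.cos (ω*t) := by
    have hq : ∀ t, HasDerivAt (fun s =>
        (deriv γ₁ s - (v₁ * Real.cos (ω*s) + v₂ * Real.sin (ω*s)))^2
        + (deriv γ₂ s - (-v₁ * Real.sin (ω*s) + v₂ * Real.cos (ω*s)))^2) 0 t := by
      intro t
      have hw1 : HasDerivAt (fun s => v₁ * Real.cos (ω*s) + v₂ * Real.sin (ω*s))
          (v₁ * (-Real.sin (ω*t) * ω) + v₂ * (Real.cos (ω*t) * ω)) t :=
        (((hlin t).cos).const_mul v₁).add (((hlin t).sin).const_mul v₂)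
      have hw2 : HasDerivAt (fun s => -v₁ * Real.sin (ω*s) + v₂ * Real.cos (ω*s))
          (-v₁ * (Real.cos (ω*t) * ω) + v₂ * (-Real.sin (ω*t) * ω)) t :=
        (((hlin t).sin).const_mul (-v₁)).add (((hlin t).cos).const_mul v₂)
      have H := (((hd₁' t).hasDerivAt.sub hw1).pow 2).add
        (((hd₂' t).hasDerivAt.sub hw2).pow 2)
      convert H using 1
      case e'_4 => rfl
      case e'_5 => rfl
      case e'_8 => rfl
      rw [hu1' t, hu2' t]
      push_cast
      simp only [Pi.sub_apply]
      ring
    have hq0 : ∀ t, ((deriv γ₁ t - (v₁ * Real.cos (ω*t) + v₂ * Real.sin (ω*t)))^2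
        + (deriv γ₂ t - (-v₁ * Real.sin (ω*t) + v₂ * Real.cos (ω*t)))^2) = 0 := by
      intro t
      have hconst := is_const_of_deriv_eq_zero (fun x => (hq x).differentiableAt)
        (fun x => (hq x).deriv) t 0
      rw [hconst, hv₁, hv₂]
      simp
    intro t
    have h := hq0 t
    have ha : (deriv γ₁ t - (v₁ * Real.cos (ω*t) + v₂ * Real.sin (ω*t)))^2 = 0 := by
      nlinarith [sq_nonneg (deriv γ₁ t - (v₁ * Real.cos (ω*t) + v₂ * Real.sin (ω*t))),
        sq_nonneg (deriv γ₂ t - (-v₁ * Real.sin (ω*t) + v₂ * Real.cos (ω*t)))]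
    have hb : (deriv γ₂ t - (-v₁ * Real.sin (ω*t) + v₂ * Real.cos (ω*t)))^2 = 0 := by
      nlinarith [sq_nonneg (deriv γ₁ t - (v₁ * Real.cos (ω*t) + v₂ * Real.sin (ω*t))),
        sq_nonneg (deriv γ₂ t - (-v₁ * Real.sin (ω*t) + v₂ * Real.cos (ω*t)))]
    constructor
    · have := pow_eq_zero_iff (two_ne_zero) |>.mp ha
      linarith
    · have := pow_eq_zero_iff (two_ne_zero) |>.mp hb
      linarith
  have hD1 : ∀ t, deriv γ₁ t = v₁ * Real.cos (ω*t) + v₂ * Real.sin (ω*t) :=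
    fun t => (hD1D2 t).1
  have hD2 : ∀ t, deriv γ₂ t = -v₁ * Real.sin (ω*t) + v₂ * Real.cos (ω*t) :=
    fun t => (hD1D2 t).2
  -- closed form for γ₂
  have hZ : ∀ t, γ₂ t = p₂ + (v₁ * Real.cos (ω*t) + v₂ * Real.sin (ω*t) - v₁)/ω := by
    have hq : ∀ t, HasDerivAt (fun s =>
        γ₂ s - (p₂ + (v₁ * Real.cos (ω*s) + v₂ * Real.sin (ω*s) - v₁)/ω)) 0 t := by
      intro t
      have hw : HasDerivAt (fun s => p₂ + (v₁ * Real.cos (ω*s) + v₂ * Real.sin (ω*s) - v₁)/ω)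
          ((v₁ * (-Real.sin (ω*t) * ω) + v₂ * (Real.cos (ω*t) * ω))/ω) t :=
        (((((hlin t).cos).const_mul v₁).add (((hlin t).sin).const_mul v₂)).sub_const v₁
          |>.div_const ω).const_add p₂
      convert (hd₂ t).hasDerivAt.sub hw using 1
      case e'_4 => rfl
      case e'_5 => rfl
      case e'_8 => rfl
      rw [hD2 t]
      field_simp
      ring
    intro t
    have hconst := is_const_of_deriv_eq_zero (fun x => (hq x).differentiableAt)
      (fun x => (hq x).deriv) t 0
    have h0 : γ₂ 0 - (p₂ + (v₁ * Real.cos (ω*0) + v₂ * Real.sin (ω*0) - v₁)/ω) = 0 := by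
      rw [hp₂]; simp
    rw [h0] at hconst
    linarith [hconst]
  -- closed form for γ₁
  have hY : ∀ t, γ₁ t = p₁ + (v₁ * Real.sin (ω*t) - v₂ * Real.cos (ω*t) + v₂)/ω := by
    have hq : ∀ t, HasDerivAt (fun s =>
        γ₁ s - (p₁ + (v₁ * Real.sin (ω*s) - v₂ * Real.cos (ω*s) + v₂)/ω)) 0 t := by
      intro t
      have hw : HasDerivAt (fun s => p₁ + (v₁ * Real.sin (ω*s) - v₂ * Real.cos (ω*s) + v₂)/ω)
          ((v₁ * (Real.cos (ω*t) * ω) - v₂ * (-Real.sin (ω*t) * ω))/ω) t :=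
        (((((hlin t).sin).const_mul v₁).sub (((hlin t).cos).const_mul v₂)).add_const v₂
          |>.div_const ω).const_add p₁
      convert (hd₁ t).hasDerivAt.sub hw using 1
      case e'_4 => rfl
      case e'_5 => rfl
      case e'_8 => rfl
      rw [hD1 t]
      field_simp
      ring
    intro t
    have hconst := is_const_of_deriv_eq_zero (fun x => (hq x).differentiableAt)
      (fun x => (hq x).deriv) t 0
    have h0 : γ₁ 0 - (p₁ + (v₁ * Real.sin (ω*0) - v₂ * Real.cos (ω*0) + v₂)/ω) = 0 := by
      rw [hp₁]; simp
    rw [h0] at hconst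
    linarith [hconst]
  -- γ₀'
  have hD0 : ∀ t, deriv γ₀ t = ω/c^2 - γ₂ t * deriv γ₁ t := by
    intro t
    field_simp
    linear_combination hE t
  -- closed form for γ₀
  have hX : ∀ t, γ₀ t = p₀ + (ω/c^2)*t
      - (p₂ - v₁/ω) * ((v₁ * Real.sin (ω*t) - v₂ * Real.cos (ω*t) + v₂)/ω)
      - ((v₁^2+v₂^2)*t/2 + ((v₁^2-v₂^2)/(4*ω)) * Real.sin (2*(ω*t))
          + (v₁*v₂/(2*ω)) * (1 - Real.cos (2*(ω*t))))/ω := by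
    have hlin2 : ∀ t : ℝ, HasDerivAt (fun s : ℝ => 2*(ω*s)) (2*ω) t := by
      intro t; simpa using ((hasDerivAt_id t).const_mul ω).const_mul 2
    have hq : ∀ t, HasDerivAt (fun s => γ₀ s - (p₀ + (ω/c^2)*s
        - (p₂ - v₁/ω) * ((v₁ * Real.sin (ω*s) - v₂ * Real.cos (ω*s) + v₂)/ω)
        - ((v₁^2+v₂^2)*s/2 + ((v₁^2-v₂^2)/(4*ω)) * Real.sin (2*(ω*s))
            + (v₁*v₂/(2*ω)) * (1 - Real.cos (2*(ω*s))))/ω)) 0 t := by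
      intro t
      have hA : HasDerivAt (fun s : ℝ => (ω/c^2)*s) (ω/c^2) t := by
        simpa using (hasDerivAt_id t).const_mul (ω/c^2)
      have hB : HasDerivAt (fun s => (p₂ - v₁/ω) * ((v₁ * Real.sin (ω*s) - v₂ * Real.cos (ω*s) + v₂)/ω))
          ((p₂ - v₁/ω) * ((v₁ * (Real.cos (ω*t) * ω) - v₂ * (-Real.sin (ω*t) * ω))/ω)) t :=
        ((((((hlin t).sin).const_mul v₁).sub (((hlin t).cos).const_mul v₂)).add_const v₂
          |>.div_const ω).const_mul (p₂ - v₁/ω))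
      have hC1 : HasDerivAt (fun s : ℝ => (v₁^2+v₂^2)*s/2) ((v₁^2+v₂^2)/2) t := by
        simpa using ((hasDerivAt_id t).const_mul (v₁^2+v₂^2)).div_const 2
      have hC2 : HasDerivAt (fun s => ((v₁^2-v₂^2)/(4*ω)) * Real.sin (2*(ω*s)))
          (((v₁^2-v₂^2)/(4*ω)) * (Real.cos (2*(ω*t)) * (2*ω))) t :=
        ((hlin2 t).sin).const_mul _
      have hC3 : HasDerivAt (fun s => (v₁*v₂/(2*ω)) * (1 - Real.cos (2*(ω*s))))
          ((v₁*v₂/(2*ω)) * (0 - (-Real.sin (2*(ω*t)) * (2*ω)))) t :=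
        ((hasDerivAt_const t (1:ℝ)).sub ((hlin2 t).cos)).const_mul _
      have hF : HasDerivAt (fun s => p₀ + (ω/c^2)*s
          - (p₂ - v₁/ω) * ((v₁ * Real.sin (ω*s) - v₂ * Real.cos (ω*s) + v₂)/ω)
          - ((v₁^2+v₂^2)*s/2 + ((v₁^2-v₂^2)/(4*ω)) * Real.sin (2*(ω*s))
              + (v₁*v₂/(2*ω)) * (1 - Real.cos (2*(ω*s))))/ω)
          ((ω/c^2)
            - (p₂ - v₁/ω) * ((v₁ * (Real.cos (ω*t) * ω) - v₂ * (-Real.sin (ω*t) * ω))/ω)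
            - ((v₁^2+v₂^2)/2 + ((v₁^2-v₂^2)/(4*ω)) * (Real.cos (2*(ω*t)) * (2*ω))
              + (v₁*v₂/(2*ω)) * (0 - (-Real.sin (2*(ω*t)) * (2*ω))))/ω) t :=
        ((hA.const_add p₀).sub hB).sub (((hC1.add hC2).add hC3).div_const ω)
      convert (hd₀ t).hasDerivAt.sub hF using 1
      case e'_4 => rfl
      case e'_5 => rfl
      case e'_8 => rfl
      rw [hD0 t, hZ t, hD1 t, Real.sin_two_mul, Real.cos_two_mul]
      have hsc : Real.sin (ω*t)^2 = 1 - Real.cos (ω*t)^2 := by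
        have := Real.sin_sq_add_cos_sq (ω*t); linarith
      field_simp
      linear_combination (8*c^2*v₂^2*ω) * hsc
    intro t
    have hconst := is_const_of_deriv_eq_zero (fun x => (hq x).differentiableAt)
      (fun x => (hq x).deriv) t 0
    have h0 : γ₀ 0 - (p₀ + (ω/c^2)*0
        - (p₂ - v₁/ω) * ((v₁ * Real.sin (ω*0) - v₂ * Real.cos (ω*0) + v₂)/ω)
        - ((v₁^2+v₂^2)*0/2 + ((v₁^2-v₂^2)/(4*ω)) * Real.sin (2*(ω*0))
            + (v₁*v₂/(2*ω)) * (1 - Real.cos (2*(ω*0))))/ω) = 0 := by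
      rw [hp₀]; simp
    rw [h0] at hconst
    linarith [hconst]
  -- the equivalence
  constructor
  · rintro ⟨T, hT, e0, e1, e2, f0, f1, f2⟩
    have hf1 : v₁ * Real.cos (ω*T) + v₂ * Real.sin (ω*T) = v₁ := (hD1 T).symm.trans f1
    have hf2 : -v₁ * Real.sin (ω*T) + v₂ * Real.cos (ω*T) = v₂ := (hD2 T).symm.trans f2
    by_cases hv : v₁ = 0 ∧ v₂ = 0
    · exfalso
      obtain ⟨h1, h2⟩ := hv
      have hx := hX T
      rw [e0, h1, h2] at hx
      have hzero : (ω/c^2)*T = 0 := by linear_combination -hx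
      exact mul_ne_zero (div_ne_zero hω0 hc2) (ne_of_gt hT) hzero
    · have hvv : v₁^2 + v₂^2 ≠ 0 := by
        intro h0
        apply hv
        constructor
        · have h1 : v₁^2 = 0 := by nlinarith [sq_nonneg v₁, sq_nonneg v₂]
          exact pow_eq_zero_iff two_ne_zero |>.mp h1
        · have h2 : v₂^2 = 0 := by nlinarith [sq_nonneg v₁, sq_nonneg v₂]
          exact pow_eq_zero_iff two_ne_zero |>.mp h2
      have hC : Real.cos (ω*T) = 1 := by
        have key : (v₁^2+v₂^2) * Real.cos (ω*T) = (v₁^2+v₂^2) * 1 := by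
          linear_combination v₁*hf1 + v₂*hf2
        exact mul_left_cancel₀ hvv key
      have hS : Real.sin (ω*T) = 0 := by
        have h := Real.sin_sq_add_cos_sq (ω*T)
        rw [hC] at h
        have h2 : Real.sin (ω*T)^2 = 0 := by nlinarith
        exact pow_eq_zero_iff two_ne_zero |>.mp h2
      have hx := hX T
      rw [e0, Real.sin_two_mul, Real.cos_two_mul, hC, hS] at hx
      have key : (ω/c^2)*T - ((v₁^2+v₂^2)*T/2)/ω = 0 := by linear_combination -hx
      have key2 : (2*ω^2) * T = (c^2*(v₁^2+v₂^2)) * T := by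
        field_simp at key
        linear_combination key
      have hrel : 2*ω^2 = c^2*(v₁^2+v₂^2) := mul_right_cancel₀ (ne_of_gt hT) key2
      rw [hω] at hrel
      apply mul_left_cancel₀ hc2
      linear_combination hrel
  · intro h
    have hrel : 2*ω^2 = c^2*(v₁^2+v₂^2) := by
      rw [hω]
      linear_combination c^2 * h
    have hclose : ∀ T : ℝ, Real.sin (ω*T) = 0 → Real.cos (ω*T) = 1 →
        (γ₀ T = p₀ ∧ γ₁ T = p₁ ∧ γ₂ T = p₂ ∧
          deriv γ₀ T = v₀ ∧ deriv γ₁ T = v₁ ∧ deriv γ₂ T = v₂) := by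
      intro T hs hc1
      refine ⟨?_, ?_, ?_, ?_, ?_, ?_⟩
      · rw [hX T, Real.sin_two_mul, Real.cos_two_mul, hs, hc1]
        field_simp
        linear_combination (4*ω*T) * hrel
      · rw [hY T, hs, hc1]; ring
      · rw [hZ T, hs, hc1]; ring
      · have hA0 : c^2*(v₀+p₂*v₁) ≠ 0 := by rw [← hω]; exact hω0
        rw [hD0 T, hZ T, hD1 T, hs, hc1, hω]
        field_simp
        ring
      · rw [hD1 T, hs, hc1]; ring
      · rw [hD2 T, hs, hc1]; ring
    rcases hω0.lt_or_gt with hneg | hpos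
    · refine ⟨2*Real.pi/(-ω), div_pos Real.two_pi_pos (neg_pos.mpr hneg), ?_⟩
      have harg : ω*(2*Real.pi/(-ω)) = -(2*Real.pi) := by
        field_simp
      exact hclose _ (by rw [harg, Real.sin_neg, Real.sin_two_pi, neg_zero])
        (by rw [harg, Real.cos_neg, Real.cos_two_pi])
    · refine ⟨2*Real.pi/ω, div_pos Real.two_pi_pos hpos, ?_⟩
      have harg : ω*(2*Real.pi/ω) = 2*Real.pi := by field_simp
      exact hclose _ (by rw [harg, Real.sin_two_pi]) (by rw [harg, Real.cos_two_pi])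
end

section
/- Every timelike path of g^c₃ extends to a closed timelike path: for every c > 0, every compact interval [a,b] with a < b, and every C¹ path w : [a,b] → ℝ³ which is g^c₃-timelike, there exist α < a and β > b and a C¹ path W : [α,β] → ℝ³ such that W restricted to [a,b] equals w, W is g^c₃-timelike on all of [α,β], W(α) = W(β), and W'(α) = W'(β). -/
open Set Real MeasureTheory intervalIntegral Topology


def TimelikeOn (c : ℝ) (w₀ w₁ w₂ : ℝ → ℝ) (s : Set ℝ) : Prop :=
  ∀ t ∈ s,
    (derivWithin w₁ s t)^2 + (derivWithin w₂ s t)^2 <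
      c^2 * (derivWithin w₀ s t + w₂ t * derivWithin w₁ s t)^2
noncomputable section

/-- clamp to `[0,1]`. -/
def cl (s : ℝ) : ℝ := max 0 (min 1 s)

lemma cl_nonneg (s : ℝ) : 0 ≤ cl s := le_max_left _ _
lemma cl_le_one (s : ℝ) : cl s ≤ 1 := max_le zero_le_one (min_le_left _ _)
lemma cl_of_nonpos {s : ℝ} (h : s ≤ 0) : cl s = 0 :=
  max_eq_left ((min_le_right _ _).trans h)
lemma cl_of_one_le {s : ℝ} (h : 1 ≤ s) : cl s = 1 := by
  rw [cl, min_eq_left h, max_eq_right zero_le_one]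
lemma cl_of_mem {s : ℝ} (h0 : 0 ≤ s) (h1 : s ≤ 1) : cl s = s := by
  rw [cl, min_eq_right h1, max_eq_right h0]
lemma continuous_cl : Continuous cl :=
  continuous_const.max (continuous_const.min continuous_id)
lemma cl_lt_one_imp {s : ℝ} (h : cl s < 1) : s ≤ 1 := by
  by_contra hs
  rw [cl_of_one_le (le_of_lt (not_le.1 hs))] at h
  exact lt_irrefl _ h

/-- bump function supported on `[x, x+1]`, with integral 1. -/
def bp (x t : ℝ) : ℝ := 1 - Real.cos (2 * π * cl (t - x))

lemma bp_nonneg (x t : ℝ) : 0 ≤ bp x t := by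
  have := Real.neg_one_le_cos (2 * π * cl (t - x))
  have := Real.cos_le_one (2 * π * cl (t - x))
  simp only [bp]; linarith

lemma continuous_bp (x : ℝ) : Continuous (bp x) :=
  continuous_const.sub (Real.continuous_cos.comp
    (continuous_const.mul (continuous_cl.comp (continuous_id.sub continuous_const))))

lemma bp_eq_zero_left {x t : ℝ} (h : t ≤ x) : bp x t = 0 := by
  rw [bp, cl_of_nonpos (by linarith), mul_zero, Real.cos_zero]; ring

lemma bp_eq_zero_right {x t : ℝ} (h : x + 1 ≤ t) : bp x t = 0 := by
  rw [bp, cl_of_one_le (by linarith), mul_one, Real.cos_two_pi]; ring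

lemma integral_bp_core (x : ℝ) : ∫ t in x..(x+1), bp x t = 1 := by
  have h1 : ∀ t ∈ uIcc x (x+1), bp x t = 1 - Real.cos (2 * π * (t - x)) := by
    intro t ht
    rw [uIcc_of_le (by linarith)] at ht
    rw [bp, cl_of_mem (by linarith [ht.1]) (by linarith [ht.2])]
  rw [intervalIntegral.integral_congr h1]
  have h2 : (∫ t in x..(x+1), (1 - Real.cos (2 * π * (t - x))))
      = ∫ s in (0:ℝ)..1, (1 - Real.cos (2 * π * s)) := by
    have := intervalIntegral.integral_comp_sub_right
      (fun s => 1 - Real.cos (2 * π * s)) x (a := x) (b := x + 1)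
    simpa using this
  rw [h2]
  have hπ : (2 * π) ≠ 0 := by positivity
  rw [intervalIntegral.integral_sub ((continuous_const : Continuous fun _ : ℝ => (1:ℝ)).intervalIntegrable _ _)
    ((by continuity : Continuous fun s : ℝ => Real.cos (2 * π * s)).intervalIntegrable _ _)]
  rw [intervalIntegral.integral_comp_mul_left (fun s => Real.cos s) hπ]
  simp [Real.sin_two_pi]

lemma integral_bp_zero_left {x y z : ℝ} (hy : y ≤ x) (hz : z ≤ x) :
    ∫ t in y..z, bp x t = 0 := by
  have h1 : ∀ t ∈ uIcc y z, bp x t = 0 := by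
    intro t ht
    exact bp_eq_zero_left (ht.2.trans (max_le hy hz))
  rw [intervalIntegral.integral_congr h1, intervalIntegral.integral_const, smul_zero]

lemma integral_bp_zero_right {x y z : ℝ} (hy : x + 1 ≤ y) (hz : x + 1 ≤ z) :
    ∫ t in y..z, bp x t = 0 := by
  have h1 : ∀ t ∈ uIcc y z, bp x t = 0 := by
    intro t ht
    exact bp_eq_zero_right ((le_min hy hz).trans ht.1)
  rw [intervalIntegral.integral_congr h1, intervalIntegral.integral_const, smul_zero]

/-- integral of `bp x` over an interval containing its support. -/
lemma integral_bp {x y z : ℝ} (hy : y ≤ x) (hz : x + 1 ≤ z) :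
    ∫ t in y..z, bp x t = 1 := by
  have i1 : IntervalIntegrable (bp x) volume y x := (continuous_bp x).intervalIntegrable _ _
  have i2 : IntervalIntegrable (bp x) volume x (x+1) := (continuous_bp x).intervalIntegrable _ _
  have i3 : IntervalIntegrable (bp x) volume (x+1) z := (continuous_bp x).intervalIntegrable _ _
  have e1 := intervalIntegral.integral_add_adjacent_intervals i1 (i2.trans i3)
  have e2 := intervalIntegral.integral_add_adjacent_intervals i2 i3
  rw [integral_bp_zero_left hy le_rfl] at e1
  rw [integral_bp_zero_right le_rfl hz] at e2
  rw [← e1, ← e2, integral_bp_core]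
  ring

/-- partial integral of `bp x` from the left, stopped before the support. -/
lemma integral_bp_partial {x y z : ℝ} (hy : y ≤ x) (hz : z ≤ x) :
    ∫ t in y..z, bp x t = 0 := integral_bp_zero_left hy hz

theorem tst : True := trivial

-- ramp integrals
lemma continuous_ramp_r (b : ℝ) : Continuous (fun t : ℝ => 1 - cl (t - b)) :=
  continuous_const.sub (continuous_cl.comp (continuous_id.sub continuous_const))

lemma continuous_ramp_l (a : ℝ) : Continuous (fun t : ℝ => 1 - cl (a - t)) :=
  continuous_const.sub (continuous_cl.comp (continuous_const.sub continuous_id))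

lemma integral_ramp_r {b z : ℝ} (hz : b + 1 ≤ z) :
    ∫ t in b..z, (1 - cl (t - b)) = 1/2 := by
  have i1 : IntervalIntegrable (fun t : ℝ => 1 - cl (t - b)) volume b (b+1) :=
    (continuous_ramp_r b).intervalIntegrable _ _
  have i2 : IntervalIntegrable (fun t : ℝ => 1 - cl (t - b)) volume (b+1) z :=
    (continuous_ramp_r b).intervalIntegrable _ _
  rw [← intervalIntegral.integral_add_adjacent_intervals i1 i2]
  have e2 : ∫ t in (b+1)..z, (1 - cl (t - b)) = 0 := by
    have h1 : ∀ t ∈ uIcc (b+1) z, (1 - cl (t - b)) = 0 := by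
      intro t ht
      have h2 : b + 1 ≤ t := le_trans (le_min le_rfl hz) ht.1
      rw [cl_of_one_le (by linarith)]
      ring
    rw [intervalIntegral.integral_congr h1, intervalIntegral.integral_const, smul_zero]
  have e1 : ∫ t in b..(b+1), (1 - cl (t - b)) = 1/2 := by
    have h1 : ∀ t ∈ uIcc b (b+1), (1 - cl (t - b)) = 1 - (t - b) := by
      intro t ht
      rw [uIcc_of_le (by linarith)] at ht
      rw [cl_of_mem (by linarith [ht.1]) (by linarith [ht.2])]
    rw [intervalIntegral.integral_congr h1]
    have h2 : (∫ t in b..(b+1), (1 - (t - b)))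
        = ∫ s in (0:ℝ)..1, (1 - s) := by
      have := intervalIntegral.integral_comp_sub_right (fun s => 1 - s) b (a := b) (b := b + 1)
      simpa using this
    rw [h2]
    have h3 := intervalIntegral.integral_comp_sub_left (fun s : ℝ => s) 1 (a := (0:ℝ)) (b := 1)
    rw [h3]
    simp [integral_id]
  rw [e1, e2]; ring

lemma integral_ramp_l {a y : ℝ} (hy : y ≤ a - 1) :
    ∫ t in y..a, (1 - cl (a - t)) = 1/2 := by
  have i1 : IntervalIntegrable (fun t : ℝ => 1 - cl (a - t)) volume y (a-1) :=
    (continuous_ramp_l a).intervalIntegrable _ _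
  have i2 : IntervalIntegrable (fun t : ℝ => 1 - cl (a - t)) volume (a-1) a :=
    (continuous_ramp_l a).intervalIntegrable _ _
  rw [← intervalIntegral.integral_add_adjacent_intervals i1 i2]
  have e1 : ∫ t in y..(a-1), (1 - cl (a - t)) = 0 := by
    have h1 : ∀ t ∈ uIcc y (a-1), (1 - cl (a - t)) = 0 := by
      intro t ht
      have h2 : t ≤ a - 1 := le_trans ht.2 (max_le hy le_rfl)
      rw [cl_of_one_le (by linarith)]
      ring
    rw [intervalIntegral.integral_congr h1, intervalIntegral.integral_const, smul_zero]
  have e2 : ∫ t in (a-1)..a, (1 - cl (a - t)) = 1/2 := by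
    have h1 : ∀ t ∈ uIcc (a-1) a, (1 - cl (a - t)) = t - (a-1) := by
      intro t ht
      rw [uIcc_of_le (by linarith)] at ht
      rw [cl_of_mem (by linarith [ht.2]) (by linarith [ht.1])]
      ring
    rw [intervalIntegral.integral_congr h1]
    have h2 : (∫ t in (a-1)..a, (t - (a-1)))
        = ∫ s in (0:ℝ)..1, s := by
      have := intervalIntegral.integral_comp_sub_right (fun s => s) (a-1) (a := a-1) (b := a)
      simpa using this
    rw [h2, integral_id]
    norm_num
  rw [e1, e2]; ring


/-- FTC-1 wrapper. -/
lemma ftc1 {G : ℝ → ℝ} (hG : Continuous G) (C a x : ℝ) :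
    HasDerivAt (fun t => C + ∫ s in a..t, G s) (G x) x := by
  have := intervalIntegral.integral_hasDerivAt_right
    (hG.intervalIntegrable a x)
    (hG.stronglyMeasurableAtFilter volume (𝓝 x))
    hG.continuousAt
  exact this.const_add C

lemma ftc1_contDiff {G : ℝ → ℝ} (hG : Continuous G) (C a : ℝ) :
    ContDiff ℝ 1 (fun t => C + ∫ s in a..t, G s) := by
  rw [contDiff_one_iff_deriv]
  constructor
  · exact fun x => (ftc1 hG C a x).differentiableAt
  · have h : deriv (fun t => C + ∫ s in a..t, G s) = G := by
      funext x; exact (ftc1 hG C a x).deriv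
    rw [h]; exact hG

lemma ftc1_derivWithin {G : ℝ → ℝ} (hG : Continuous G) (C a : ℝ) {α β x : ℝ}
    (hαβ : α < β) (hx : x ∈ Icc α β) :
    derivWithin (fun t => C + ∫ s in a..t, G s) (Icc α β) x = G x :=
  (ftc1 hG C a x).hasDerivWithinAt.derivWithin (uniqueDiffOn_Icc hαβ x hx)

/-- FTC-2 wrapper for `C¹` functions on `[a,b]`. -/
lemma ftc2 {f : ℝ → ℝ} {a b : ℝ} (hab : a < b) (hf : ContDiffOn ℝ 1 f (Icc a b))
    {t : ℝ} (ht : t ∈ Icc a b) :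
    ∫ s in a..t, derivWithin f (Icc a b) s = f t - f a := by
  apply intervalIntegral.integral_eq_sub_of_hasDeriv_right_of_le ht.1
  · exact (hf.continuousOn).mono (Icc_subset_Icc le_rfl ht.2)
  · intro x hx
    have hx' : x ∈ Icc a b := ⟨le_of_lt hx.1, le_of_lt (lt_of_lt_of_le hx.2 ht.2)⟩
    have hd : HasDerivWithinAt f (derivWithin f (Icc a b) x) (Icc a b) x :=
      ((hf.differentiableOn one_ne_zero) x hx').hasDerivWithinAt
    have : HasDerivAt f (derivWithin f (Icc a b) x) x :=
      hd.hasDerivAt (Icc_mem_nhds hx.1 (lt_of_lt_of_le hx.2 ht.2))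
    exact this.hasDerivWithinAt
  · have hC : ContinuousOn (derivWithin f (Icc a b)) (Icc a b) :=
      hf.continuousOn_derivWithin (uniqueDiffOn_Icc hab) le_rfl
    exact (hC.mono (Icc_subset_Icc le_rfl ht.2)).intervalIntegrable_of_Icc ht.1

set_option maxHeartbeats 1000000 in
/-- the key pointwise cone inequality. -/
lemma cone_ineq {c σ F u1 u2 r B1 B2 E1 E2 : ℝ} (hc : 0 < c)
    (hσ : σ = 1 ∨ σ = -1) (hσF : 0 < σ * F)
    (htl : u1^2 + u2^2 < c^2 * F^2) (hr0 : 0 ≤ r) (hr1 : r ≤ 1)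
    (hB1 : |B1| ≤ E1) (hB2 : |B2| ≤ E2) (hBr : r < 1 → B1 = 0 ∧ B2 = 0) :
    ((1-r)*u1 + B1)^2 + ((1-r)*u2 + B2)^2 <
      c^2 * ((1-r)*F + r*(σ/c)*(1 + 2*((1-r)*|u1| + E1) + 2*((1-r)*|u2| + E2)))^2 := by
  have hE1 : 0 ≤ E1 := (abs_nonneg _).trans hB1
  have hE2 : 0 ≤ E2 := (abs_nonneg _).trans hB2
  have hσ2 : σ * σ = 1 := by rcases hσ with h | h <;> rw [h] <;> norm_num
  have hc' : c ≠ 0 := ne_of_gt hc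
  set S : ℝ := 1 + 2*((1-r)*|u1| + E1) + 2*((1-r)*|u2| + E2) with hS_def
  set X : ℝ := (1-r)*F + r*(σ/c)*S with hX_def
  have hS1 : 1 ≤ S := by
    have h1 : 0 ≤ (1-r)*|u1| := mul_nonneg (by linarith) (abs_nonneg _)
    have h2 : 0 ≤ (1-r)*|u2| := mul_nonneg (by linarith) (abs_nonneg _)
    simp only [hS_def]; linarith
  have hXsq : c^2 * X^2 = (c*(σ*X))^2 := by
    have : (c*(σ*X))^2 = (σ*σ) * (c^2 * X^2) := by ring
    rw [this, hσ2, one_mul]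
  have hσ2' : σ^2 = 1 := by rw [← hσ2]; ring
  have hXc : c*(σ*X) = (1-r)*(c*(σ*F)) + r*S := by
    simp only [hX_def]
    field_simp
    ring_nf
    simp only [hσ2']
    ring
  have hA : 0 ≤ (1-r)*(c*(σ*F)) :=
    mul_nonneg (by linarith) (mul_nonneg hc.le hσF.le)
  have hB : 0 ≤ r*S := mul_nonneg hr0 (by linarith)
  have hA2 : ((1-r)*(c*(σ*F)))^2 = (1-r)^2 * (c^2*F^2) := by
    have : ((1-r)*(c*(σ*F)))^2 = (σ*σ) * ((1-r)^2 * (c^2*F^2)) := by ring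
    rw [this, hσ2, one_mul]
  have sq_le_add : ∀ A B : ℝ, 0 ≤ A → 0 ≤ B → A^2 ≤ (A+B)^2 := by
    intro A B h1 h2; nlinarith [mul_nonneg h1 h2]
  rcases lt_or_eq_of_le hr1 with hr | hr
  · obtain ⟨h1, h2⟩ := hBr hr
    rw [h1, h2, add_zero, add_zero]
    have hr'' : 0 < 1 - r := by linarith
    have hr' : 0 < (1-r)^2 := by positivity
    have key1 : (1-r)^2 * (u1^2 + u2^2) < (1-r)^2 * (c^2*F^2) :=
      mul_lt_mul_of_pos_left htl hr'
    have key2 : ((1-r)*(c*(σ*F)))^2 ≤ (c*(σ*X))^2 := by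
      rw [hXc]; exact sq_le_add _ _ hA hB
    rw [hXsq]
    have hring : ((1-r)*u1)^2 + ((1-r)*u2)^2 = (1-r)^2*(u1^2+u2^2) := by ring
    linarith [hA2 ▸ key2]
  · subst hr
    have hX1 : c*(σ*X) = S := by rw [hXc]; ring
    have hS' : S = 1 + 2*E1 + 2*E2 := by simp only [hS_def]; ring
    rw [hXsq, hX1, hS']
    simp only [sub_self, zero_mul, zero_add]
    have hq1 : B1^2 ≤ E1^2 := by rw [← sq_abs]; exact pow_le_pow_left₀ (abs_nonneg _) hB1 2
    have hq2 : B2^2 ≤ E2^2 := by rw [← sq_abs]; exact pow_le_pow_left₀ (abs_nonneg _) hB2 2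
    have h3 : (1+2*E1+2*E2)^2 = E1^2 + E2^2 + (1 + 4*E1 + 4*E2 + (3*E1^2 + 3*E2^2 + 8*(E1*E2))) := by ring
    have h4 : 0 ≤ 3*E1^2 + 3*E2^2 + 8*(E1*E2) := by positivity
    linarith only [hq1, hq2, h3, h4, hE1, hE2]


/-- gluing three functions continuously. -/
def glue (a b : ℝ) (L M R : ℝ → ℝ) : ℝ → ℝ := fun t =>
  if a ≤ t then (if t ≤ b then M t else R t) else L t

lemma glue_left {a b : ℝ} {L M R : ℝ → ℝ} {t : ℝ} (h : t < a) :
    glue a b L M R t = L t := by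
  simp [glue, not_le.2 h]

lemma glue_mid {a b : ℝ} {L M R : ℝ → ℝ} {t : ℝ} (h1 : a ≤ t) (h2 : t ≤ b) :
    glue a b L M R t = M t := by
  simp [glue, h1, h2]

lemma glue_right {a b : ℝ} {L M R : ℝ → ℝ} {t : ℝ} (hab : a ≤ b) (h : b < t) :
    glue a b L M R t = R t := by
  simp [glue, hab.trans h.le, not_le.2 h]

lemma glue_continuous {a b : ℝ} {L M R : ℝ → ℝ} (hab : a ≤ b)
    (hL : Continuous L) (hM : Continuous M) (hR : Continuous R)
    (ha : L a = M a) (hb : M b = R b) : Continuous (glue a b L M R) := by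
  unfold glue
  have hin : Continuous fun t => if t ≤ b then M t else R t :=
    Continuous.if_le hM hR continuous_id continuous_const (fun x hx => by rw [hx]; exact hb)
  exact Continuous.if_le hin hL continuous_const continuous_id
    (fun x hx => by rw [← hx]; simp [hab, ha.symm])

/-- sign of a nonvanishing continuous function on an interval. -/
lemma sign_const {a b : ℝ} {f : ℝ → ℝ} (hab : a ≤ b) (hf : ContinuousOn f (Icc a b))
    (hne : ∀ t ∈ Icc a b, f t ≠ 0) :
    ∃ σ : ℝ, (σ = 1 ∨ σ = -1) ∧ ∀ t ∈ Icc a b, 0 < σ * f t := by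
  have haa : a ∈ Icc a b := ⟨le_rfl, hab⟩
  by_cases hpos : 0 < f a
  · refine ⟨1, Or.inl rfl, fun t ht => ?_⟩
    rw [one_mul]
    by_contra hle
    have hlt : f t < 0 := lt_of_le_of_ne (not_lt.1 hle) (hne t ht)
    have : (0:ℝ) ∈ f '' Icc a t := by
      apply intermediate_value_Icc' ht.1 (hf.mono (Icc_subset_Icc le_rfl ht.2))
      exact ⟨hlt.le, hpos.le⟩
    obtain ⟨s, hs, hs0⟩ := this
    exact hne s ⟨hs.1, hs.2.trans ht.2⟩ hs0
  · have hneg : f a < 0 := lt_of_le_of_ne (not_lt.1 hpos) (hne a haa)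
    refine ⟨-1, Or.inr rfl, fun t ht => ?_⟩
    have : f t < 0 := by
      by_contra hle
      have hlt : 0 < f t := lt_of_le_of_ne (not_lt.1 hle) (Ne.symm (hne t ht))
      have : (0:ℝ) ∈ f '' Icc a t := by
        apply intermediate_value_Icc ht.1 (hf.mono (Icc_subset_Icc le_rfl ht.2))
        exact ⟨hneg.le, hlt.le⟩
      obtain ⟨s, hs, hs0⟩ := this
      exact hne s ⟨hs.1, hs.2.trans ht.2⟩ hs0
    nlinarith
/-- solving for the gadget parameters. -/
lemma solve_param {c : ℝ} (hc : 0 < c) (q : ℝ) :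
    ∃ lam δ : ℝ, 0 ≤ lam ∧ 0 ≤ δ ∧ (5 + 8*lam + 4*δ)/c - 2*lam*δ = q := by
  set lam : ℝ := 4/c + c*(|q|+1)/8 with hlam_def
  have hlam : 0 ≤ lam := by positivity
  have hden : 0 < 2*lam - 4/c := by
    rw [hlam_def]
    have : 2*(4/c + c*(|q|+1)/8) - 4/c = 4/c + c*(|q|+1)/4 := by ring
    rw [this]; positivity
  have hnum : 0 ≤ (5 + 8*lam)/c - q := by
    have h1 : (5 + 8*lam)/c = 5/c + 32/c^2 + (|q|+1) := by
      rw [hlam_def]; field_simp; ring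
    have h2 : q ≤ |q| := le_abs_self q
    have h3 : 0 < 5/c := by positivity
    have h4 : 0 < 32/c^2 := by positivity
    linarith
  refine ⟨lam, ((5 + 8*lam)/c - q)/(2*lam - 4/c), hlam, div_nonneg hnum hden.le, ?_⟩
  set δ := ((5 + 8*lam)/c - q)/(2*lam - 4/c) with hδ_def
  have hδ : δ * (2*lam - 4/c) = (5 + 8*lam)/c - q := by
    rw [hδ_def, div_mul_cancel₀ _ (ne_of_gt hden)]
  have expand : (5 + 8*lam + 4*δ)/c - 2*lam*δ = (5 + 8*lam)/c - δ*(2*lam - 4/c) := by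
    field_simp; ring
  rw [expand, hδ]; ring

lemma iadd {f g : ℝ → ℝ} (hf : Continuous f) (hg : Continuous g) (x y : ℝ) :
    ∫ t in x..y, (f t + g t) = (∫ t in x..y, f t) + ∫ t in x..y, g t :=
  intervalIntegral.integral_add (hf.intervalIntegrable _ _) (hg.intervalIntegrable _ _)

lemma split3 {F : ℝ → ℝ} (hF : Continuous F) (x y z w : ℝ) :
    ∫ t in x..w, F t = (∫ t in x..y, F t) + (∫ t in y..z, F t) + (∫ t in z..w, F t) := by
  rw [← intervalIntegral.integral_add_adjacent_intervals
      (hF.intervalIntegrable x z : IntervalIntegrable F volume x z)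
      (hF.intervalIntegrable z w : IntervalIntegrable F volume z w),
    ← intervalIntegral.integral_add_adjacent_intervals
      (hF.intervalIntegrable x y : IntervalIntegrable F volume x y)
      (hF.intervalIntegrable y z : IntervalIntegrable F volume y z)]

lemma split2 {F : ℝ → ℝ} (hF : Continuous F) (x y z : ℝ) :
    ∫ t in x..z, F t = (∫ t in x..y, F t) + (∫ t in y..z, F t) :=
  (intervalIntegral.integral_add_adjacent_intervals
    (hF.intervalIntegrable x y : IntervalIntegrable F volume x y)
    (hF.intervalIntegrable y z : IntervalIntegrable F volume y z)).symm

set_option maxHeartbeats 2000000 in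
/-- every timelike path of `g^c₃` extends to a closed timelike path. -/
theorem stmt_8 (c a b : ℝ) (hc : 0 < c) (hab : a < b) (w₀ w₁ w₂ : ℝ → ℝ)
    (hw₀ : ContDiffOn ℝ 1 w₀ (Icc a b))
    (hw₁ : ContDiffOn ℝ 1 w₁ (Icc a b))
    (hw₂ : ContDiffOn ℝ 1 w₂ (Icc a b))
    (htl : TimelikeOn c w₀ w₁ w₂ (Icc a b)) :
    ∃ α < a, ∃ β > b, ∃ W₀ W₁ W₂ : ℝ → ℝ,
      ContDiffOn ℝ 1 W₀ (Icc α β) ∧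
      ContDiffOn ℝ 1 W₁ (Icc α β) ∧
      ContDiffOn ℝ 1 W₂ (Icc α β) ∧
      (∀ t ∈ Icc a b, W₀ t = w₀ t ∧ W₁ t = w₁ t ∧ W₂ t = w₂ t) ∧
      TimelikeOn c W₀ W₁ W₂ (Icc α β) ∧
      W₀ α = W₀ β ∧ W₁ α = W₁ β ∧ W₂ α = W₂ β ∧
      derivWithin W₀ (Icc α β) α = derivWithin W₀ (Icc α β) β ∧
      derivWithin W₁ (Icc α β) α = derivWithin W₁ (Icc α β) β ∧
      derivWithin W₂ (Icc α β) α = derivWithin W₂ (Icc α β) β := by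
  classical
  have hab' : a ≤ b := hab.le
  have hUD : UniqueDiffOn ℝ (Icc a b) := uniqueDiffOn_Icc hab
  set D0 := derivWithin w₀ (Icc a b) with hD0_def
  set D1 := derivWithin w₁ (Icc a b) with hD1_def
  set D2 := derivWithin w₂ (Icc a b) with hD2_def
  have hD0c : ContinuousOn D0 (Icc a b) := hw₀.continuousOn_derivWithin hUD le_rfl
  have hD1c : ContinuousOn D1 (Icc a b) := hw₁.continuousOn_derivWithin hUD le_rfl
  have hD2c : ContinuousOn D2 (Icc a b) := hw₂.continuousOn_derivWithin hUD le_rfl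
  have hw2c : ContinuousOn w₂ (Icc a b) := hw₂.continuousOn
  set f : ℝ → ℝ := fun t => D0 t + w₂ t * D1 t with hf_def
  have hfc : ContinuousOn f (Icc a b) := hD0c.add (hw2c.mul hD1c)
  have htlf : ∀ t ∈ Icc a b, (D1 t)^2 + (D2 t)^2 < c^2 * (f t)^2 := htl
  have hfne : ∀ t ∈ Icc a b, f t ≠ 0 := by
    intro t ht h0
    have h1 := htlf t ht
    rw [h0] at h1
    nlinarith [sq_nonneg (D1 t), sq_nonneg (D2 t)]
  obtain ⟨σ, hσ, hσf⟩ := sign_const hab' hfc hfne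
  have ha_mem : a ∈ Icc a b := ⟨le_rfl, hab'⟩
  have hb_mem : b ∈ Icc a b := ⟨hab', le_rfl⟩
  set u1 := D1 b with hu1_def
  set u2 := D2 b with hu2_def
  set v1 := D1 a with hv1_def
  set v2 := D2 a with hv2_def
  set fa := f a with hfa_def
  set fb := f b with hfb_def
  set ρ : ℝ := -(v1/2 + u1/2 + (w₁ b - w₁ a)) with hρ_def
  set ζ : ℝ := (w₂ a - v2/2) - w₂ b - u2/2 with hζ_def
  set α := a - 1 with hα_def
  set β := b + 8 with hβ_def
  have hαa : α < a := by rw [hα_def]; linarith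
  have hbβ : b < β := by rw [hβ_def]; linarith
  have hαβ : α < β := by rw [hα_def, hβ_def]; linarith
  -- clamp to [a,b]
  set clab : ℝ → ℝ := fun t => max a (min b t) with hclab_def
  have hclab_mem : ∀ t, clab t ∈ Icc a b := fun t =>
    ⟨le_max_left _ _, max_le hab' (min_le_left _ _)⟩
  have hclab_id : ∀ t ∈ Icc a b, clab t = t := by
    intro t ht
    rw [hclab_def]
    simp only
    rw [min_eq_right ht.2, max_eq_right ht.1]
  have hclab_cont : Continuous clab := continuous_const.max (continuous_const.min continuous_id)
  -- the pieces
  set lg1 : ℝ → ℝ := fun t => (1 - cl (a - t)) * v1 + 0 with hlg1_def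
  set lg2 : ℝ → ℝ := fun t => (1 - cl (a - t)) * v2 + 0 with hlg2_def
  set lh : ℝ → ℝ := fun t => (1 - cl (a - t)) * fa + cl (a - t) * (σ/c) *
    (1 + 2*((1 - cl (a - t)) * |v1| + 0) + 2*((1 - cl (a - t)) * |v2| + 0)) with hlh_def
  set gB1 : ℝ → ℝ → ℝ := fun d t => ρ * bp (b+2) t + σ*d*(bp (b+4) t - bp (b+6) t) with hgB1_def
  set gB2 : ℝ → ℝ → ℝ := fun l t =>
    ζ * bp (b+1) t + l*(bp (b+3) t + bp (b+7) t) - 2*l*bp (b+5) t with hgB2_def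
  set eB1 : ℝ → ℝ → ℝ := fun d t => |ρ| * bp (b+2) t + d*(bp (b+4) t + bp (b+6) t) with heB1_def
  set eB2 : ℝ → ℝ → ℝ := fun l t =>
    |ζ| * bp (b+1) t + l*(bp (b+3) t + bp (b+7) t) + 2*l*bp (b+5) t with heB2_def
  set rg1 : ℝ → ℝ → ℝ := fun d t => (1 - cl (t - b)) * u1 + gB1 d t with hrg1_def
  set rg2 : ℝ → ℝ → ℝ := fun l t => (1 - cl (t - b)) * u2 + gB2 l t with hrg2_def
  set rh : ℝ → ℝ → ℝ → ℝ := fun l d t => (1 - cl (t - b)) * fb + cl (t - b) * (σ/c) *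
    (1 + 2*((1 - cl (t - b)) * |u1| + eB1 d t) + 2*((1 - cl (t - b)) * |u2| + eB2 l t)) with hrh_def
  set mid1 : ℝ → ℝ := fun t => D1 (clab t) with hmid1_def
  set mid2 : ℝ → ℝ := fun t => D2 (clab t) with hmid2_def
  set midF : ℝ → ℝ := fun t => f (clab t) with hmidF_def
  set Gm1 : ℝ → ℝ → ℝ := fun d => glue a b lg1 mid1 (rg1 d) with hGm1_def
  set Gm2 : ℝ → ℝ → ℝ := fun l => glue a b lg2 mid2 (rg2 l) with hGm2_def
  set Hm : ℝ → ℝ → ℝ → ℝ := fun l d => glue a b lh midF (rh l d) with hHm_def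
  -- continuity of the pieces
  have hlg1c : Continuous lg1 := ((continuous_ramp_l a).mul continuous_const).add continuous_const
  have hlg2c : Continuous lg2 := ((continuous_ramp_l a).mul continuous_const).add continuous_const
  have hclc : Continuous (fun t : ℝ => cl (a - t)) :=
    continuous_cl.comp (continuous_const.sub continuous_id)
  have hclrc : Continuous (fun t : ℝ => cl (t - b)) :=
    continuous_cl.comp (continuous_id.sub continuous_const)
  have hlhc : Continuous lh := by
    apply Continuous.add
    · exact (continuous_ramp_l a).mul continuous_const
    · apply Continuous.mul
      · exact hclc.mul continuous_const
      · apply Continuous.add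
        · apply Continuous.add continuous_const
          exact continuous_const.mul (((continuous_ramp_l a).mul continuous_const).add
            continuous_const)
        · exact continuous_const.mul (((continuous_ramp_l a).mul continuous_const).add
            continuous_const)
  have hgB1c : ∀ d, Continuous (gB1 d) := fun d =>
    (continuous_const.mul (continuous_bp _)).add
      (continuous_const.mul ((continuous_bp _).sub (continuous_bp _)))
  have hgB2c : ∀ l, Continuous (gB2 l) := fun l =>
    ((continuous_const.mul (continuous_bp _)).add
      (continuous_const.mul ((continuous_bp _).add (continuous_bp _)))).sub
      (continuous_const.mul (continuous_bp _))
  have heB1c : ∀ d, Continuous (eB1 d) := fun d =>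
    (continuous_const.mul (continuous_bp _)).add
      (continuous_const.mul ((continuous_bp _).add (continuous_bp _)))
  have heB2c : ∀ l, Continuous (eB2 l) := fun l =>
    ((continuous_const.mul (continuous_bp _)).add
      (continuous_const.mul ((continuous_bp _).add (continuous_bp _)))).add
      (continuous_const.mul (continuous_bp _))
  have hrg1c : ∀ d, Continuous (rg1 d) := fun d =>
    ((continuous_ramp_r b).mul continuous_const).add (hgB1c d)
  have hrg2c : ∀ l, Continuous (rg2 l) := fun l =>
    ((continuous_ramp_r b).mul continuous_const).add (hgB2c l)
  have hrhc : ∀ l d, Continuous (rh l d) := by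
    intro l d
    apply Continuous.add
    · exact (continuous_ramp_r b).mul continuous_const
    · apply Continuous.mul
      · exact hclrc.mul continuous_const
      · apply Continuous.add
        · apply Continuous.add continuous_const
          exact continuous_const.mul
            (((continuous_ramp_r b).mul continuous_const).add (heB1c d))
        · exact continuous_const.mul
            (((continuous_ramp_r b).mul continuous_const).add (heB2c l))
  have hmid1c : Continuous mid1 := hD1c.comp_continuous hclab_cont hclab_mem
  have hmid2c : Continuous mid2 := hD2c.comp_continuous hclab_cont hclab_mem
  have hmidFc : Continuous midF := hfc.comp_continuous hclab_cont hclab_mem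
  -- junction values
  have hcl0 : cl 0 = 0 := cl_of_nonpos le_rfl
  have hclaa : cl (a - a) = 0 := by rw [sub_self]; exact hcl0
  have hclbb : cl (b - b) = 0 := by rw [sub_self]; exact hcl0
  have hclaba : clab a = a := hclab_id a ha_mem
  have hclabb : clab b = b := hclab_id b hb_mem
  have hjl1 : lg1 a = mid1 a := by
    rw [hlg1_def, hmid1_def]; simp only; rw [hclaa, hclaba]; ring
  have hjl2 : lg2 a = mid2 a := by
    rw [hlg2_def, hmid2_def]; simp only; rw [hclaa, hclaba]; ring
  have hjlh : lh a = midF a := by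
    rw [hlh_def, hmidF_def]; simp only; rw [hclaa, hclaba, ← hfa_def]; ring
  have hgB1b : ∀ d, gB1 d b = 0 := by
    intro d
    rw [hgB1_def]; simp only
    rw [bp_eq_zero_left (by linarith : b ≤ b + 2), bp_eq_zero_left (by linarith : b ≤ b + 4),
      bp_eq_zero_left (by linarith : b ≤ b + 6)]
    ring
  have hgB2b : ∀ l, gB2 l b = 0 := by
    intro l
    rw [hgB2_def]; simp only
    rw [bp_eq_zero_left (by linarith : b ≤ b + 1), bp_eq_zero_left (by linarith : b ≤ b + 3),
      bp_eq_zero_left (by linarith : b ≤ b + 5), bp_eq_zero_left (by linarith : b ≤ b + 7)]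
    ring
  have heB1b : ∀ d, eB1 d b = 0 := by
    intro d
    rw [heB1_def]; simp only
    rw [bp_eq_zero_left (by linarith : b ≤ b + 2), bp_eq_zero_left (by linarith : b ≤ b + 4),
      bp_eq_zero_left (by linarith : b ≤ b + 6)]
    ring
  have heB2b : ∀ l, eB2 l b = 0 := by
    intro l
    rw [heB2_def]; simp only
    rw [bp_eq_zero_left (by linarith : b ≤ b + 1), bp_eq_zero_left (by linarith : b ≤ b + 3),
      bp_eq_zero_left (by linarith : b ≤ b + 5), bp_eq_zero_left (by linarith : b ≤ b + 7)]
    ring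
  have hjr1 : ∀ d, mid1 b = rg1 d b := by
    intro d
    rw [hmid1_def, hrg1_def]; simp only
    rw [hclbb, hclabb, hgB1b d, ← hu1_def]; ring
  have hjr2 : ∀ l, mid2 b = rg2 l b := by
    intro l
    rw [hmid2_def, hrg2_def]; simp only
    rw [hclbb, hclabb, hgB2b l, ← hu2_def]; ring
  have hjrh : ∀ l d, midF b = rh l d b := by
    intro l d
    rw [hmidF_def, hrh_def]; simp only
    rw [hclbb, hclabb, heB1b d, heB2b l, ← hfb_def]; ring
  -- the glued functions are continuous
  have hGm1c : ∀ d, Continuous (Gm1 d) := by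
    intro d
    rw [hGm1_def]
    exact glue_continuous hab' hlg1c hmid1c (hrg1c d) hjl1 (hjr1 d)
  have hGm2c : ∀ l, Continuous (Gm2 l) := by
    intro l
    rw [hGm2_def]
    exact glue_continuous hab' hlg2c hmid2c (hrg2c l) hjl2 (hjr2 l)
  have hHmc : ∀ l d, Continuous (Hm l d) := by
    intro l d
    rw [hHm_def]
    exact glue_continuous hab' hlhc hmidFc (hrhc l d) hjlh (hjrh l d)
  -- integrated second coordinate
  set W2m : ℝ → ℝ → ℝ := fun l t => w₂ a + ∫ s in a..t, Gm2 l s with hW2m_def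
  have hW2mc : ∀ l, Continuous (W2m l) := fun l =>
    (ftc1_contDiff (hGm2c l) (w₂ a) a).continuous
  set G0m : ℝ → ℝ → ℝ → ℝ := fun l d t => Hm l d t - W2m l t * Gm1 d t with hG0m_def
  have hG0mc : ∀ l d, Continuous (G0m l d) := fun l d =>
    (hHmc l d).sub ((hW2mc l).mul (hGm1c d))
  -- choose the gadget parameters
  set K : ℝ := ∫ t in α..(b+3), G0m 0 0 t with hK_def
  obtain ⟨lam, δ, hlam0, hδ0, hsolve⟩ := solve_param hc (-σ*K)
  set G1 : ℝ → ℝ := Gm1 δ with hG1_def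
  set G2 : ℝ → ℝ := Gm2 lam with hG2_def
  set H : ℝ → ℝ := Hm lam δ with hH_def
  set G0 : ℝ → ℝ := G0m lam δ with hG0_def
  have hG1c : Continuous G1 := hGm1c δ
  have hG2c : Continuous G2 := hGm2c lam
  have hHc : Continuous H := hHmc lam δ
  have hG0c : Continuous G0 := hG0mc lam δ
  set WW0 : ℝ → ℝ := fun t => w₀ a + ∫ s in a..t, G0 s with hWW0_def
  set WW1 : ℝ → ℝ := fun t => w₁ a + ∫ s in a..t, G1 s with hWW1_def
  set WW2 : ℝ → ℝ := fun t => w₂ a + ∫ s in a..t, G2 s with hWW2_def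
  have hWW2_eq : WW2 = W2m lam := rfl
  have hG0_sum : ∀ t, G0 t + WW2 t * G1 t = H t := by
    intro t
    rw [hG0_def, hG0m_def, hWW2_eq]
    simp only [hG1_def, hH_def]
    ring
  -- shapes on the three regions
  have hG1_left : ∀ t, t ≤ a → G1 t = lg1 t := by
    intro t ht
    rcases lt_or_eq_of_le ht with h | h
    · rw [hG1_def, hGm1_def]; exact glue_left h
    · simp only [h, hG1_def, hGm1_def]; rw [glue_mid le_rfl hab']; exact hjl1.symm
  have hG2_left : ∀ t, t ≤ a → G2 t = lg2 t := by
    intro t ht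
    rcases lt_or_eq_of_le ht with h | h
    · rw [hG2_def, hGm2_def]; exact glue_left h
    · simp only [h, hG2_def, hGm2_def]; rw [glue_mid le_rfl hab']; exact hjl2.symm
  have hH_left : ∀ t, t ≤ a → H t = lh t := by
    intro t ht
    rcases lt_or_eq_of_le ht with h | h
    · rw [hH_def, hHm_def]; exact glue_left h
    · simp only [h, hH_def, hHm_def]; rw [glue_mid le_rfl hab']; exact hjlh.symm
  have hG1_mid : ∀ t, a ≤ t → t ≤ b → G1 t = D1 t := by
    intro t h1 h2
    simp only [hG1_def, hGm1_def]
    rw [glue_mid h1 h2]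
    simp only [hmid1_def]
    rw [hclab_id t ⟨h1, h2⟩]
  have hG2_mid : ∀ t, a ≤ t → t ≤ b → G2 t = D2 t := by
    intro t h1 h2
    simp only [hG2_def, hGm2_def]
    rw [glue_mid h1 h2]
    simp only [hmid2_def]
    rw [hclab_id t ⟨h1, h2⟩]
  have hH_mid : ∀ t, a ≤ t → t ≤ b → H t = f t := by
    intro t h1 h2
    simp only [hH_def, hHm_def]
    rw [glue_mid h1 h2]
    simp only [hmidF_def]
    rw [hclab_id t ⟨h1, h2⟩]
  have hG1_right : ∀ t, b ≤ t → G1 t = rg1 δ t := by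
    intro t ht
    rcases lt_or_eq_of_le ht with h | h
    · rw [hG1_def, hGm1_def]; exact glue_right hab' h
    · simp only [← h, hG1_def, hGm1_def]; rw [glue_mid hab' le_rfl]; exact hjr1 δ
  have hG2_right : ∀ t, b ≤ t → G2 t = rg2 lam t := by
    intro t ht
    rcases lt_or_eq_of_le ht with h | h
    · rw [hG2_def, hGm2_def]; exact glue_right hab' h
    · simp only [← h, hG2_def, hGm2_def]; rw [glue_mid hab' le_rfl]; exact hjr2 lam
  have hH_right : ∀ t, b ≤ t → H t = rh lam δ t := by
    intro t ht
    rcases lt_or_eq_of_le ht with h | h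
    · rw [hH_def, hHm_def]; exact glue_right hab' h
    · simp only [← h, hH_def, hHm_def]; rw [glue_mid hab' le_rfl]; exact hjrh lam δ
  -- restriction to [a,b]
  have hrest1 : ∀ t ∈ Icc a b, WW1 t = w₁ t := by
    intro t ht
    simp only [hWW1_def]
    have hcong : ∀ s ∈ uIcc a t, G1 s = derivWithin w₁ (Icc a b) s := by
      intro s hs
      rw [uIcc_of_le ht.1] at hs
      rw [hG1_mid s hs.1 (hs.2.trans ht.2), hD1_def]
    rw [intervalIntegral.integral_congr hcong, ftc2 hab hw₁ ht]
    ring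
  have hrest2 : ∀ t ∈ Icc a b, WW2 t = w₂ t := by
    intro t ht
    simp only [hWW2_def]
    have hcong : ∀ s ∈ uIcc a t, G2 s = derivWithin w₂ (Icc a b) s := by
      intro s hs
      rw [uIcc_of_le ht.1] at hs
      rw [hG2_mid s hs.1 (hs.2.trans ht.2), hD2_def]
    rw [intervalIntegral.integral_congr hcong, ftc2 hab hw₂ ht]
    ring
  have hrest0 : ∀ t ∈ Icc a b, WW0 t = w₀ t := by
    intro t ht
    simp only [hWW0_def]
    have hcong : ∀ s ∈ uIcc a t, G0 s = derivWithin w₀ (Icc a b) s := by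
      intro s hs
      rw [uIcc_of_le ht.1] at hs
      have hs' : s ∈ Icc a b := ⟨hs.1, hs.2.trans ht.2⟩
      have e : G0 s = H s - WW2 s * G1 s := rfl
      have ef : f s = D0 s + w₂ s * D1 s := rfl
      rw [e, hH_mid s hs'.1 hs'.2, hG1_mid s hs'.1 hs'.2, hrest2 s hs', ef, hD0_def]
      ring
    rw [intervalIntegral.integral_congr hcong, ftc2 hab hw₀ ht]
    ring
  -- the cone inequality everywhere
  have habsσ : |σ| = 1 := by rcases hσ with h | h <;> rw [h] <;> norm_num
  have habs_sub : ∀ x y : ℝ, 0 ≤ x → 0 ≤ y → |x - y| ≤ x + y := by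
    intro x y hx hy
    rw [abs_le]
    constructor <;> linarith
  have hcone : ∀ t ∈ Icc α β, (G1 t)^2 + (G2 t)^2 < c^2 * (H t)^2 := by
    intro t ht
    rcases lt_or_ge t a with hta | hta
    · rw [hG1_left t hta.le, hG2_left t hta.le, hH_left t hta.le]
      simp only [hlg1_def, hlg2_def, hlh_def]
      exact cone_ineq hc hσ (hσf a ha_mem) (htlf a ha_mem) (cl_nonneg _) (cl_le_one _)
        (by simp) (by simp) (fun _ => ⟨rfl, rfl⟩)
    · rcases le_or_gt t b with htb | htb
      · rw [hG1_mid t hta htb, hG2_mid t hta htb, hH_mid t hta htb]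
        exact htlf t ⟨hta, htb⟩
      · rw [hG1_right t htb.le, hG2_right t htb.le, hH_right t htb.le]
        simp only [hrg1_def, hrg2_def, hrh_def]
        have habs1 : |gB1 δ t| ≤ eB1 δ t := by
          simp only [hgB1_def, heB1_def]
          have h1 : |bp (b+4) t - bp (b+6) t| ≤ bp (b+4) t + bp (b+6) t :=
            habs_sub _ _ (bp_nonneg _ _) (bp_nonneg _ _)
          calc |ρ * bp (b+2) t + σ*δ*(bp (b+4) t - bp (b+6) t)|
              ≤ |ρ * bp (b+2) t| + |σ*δ*(bp (b+4) t - bp (b+6) t)| := abs_add_le _ _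
            _ = |ρ| * bp (b+2) t + δ * |bp (b+4) t - bp (b+6) t| := by
                rw [abs_mul, abs_of_nonneg (bp_nonneg _ _), abs_mul, abs_mul, habsσ,
                  abs_of_nonneg hδ0, one_mul]
            _ ≤ |ρ| * bp (b+2) t + δ * (bp (b+4) t + bp (b+6) t) := by
                have := mul_le_mul_of_nonneg_left h1 hδ0
                linarith
        have habs2 : |gB2 lam t| ≤ eB2 lam t := by
          simp only [hgB2_def, heB2_def]
          calc |ζ * bp (b+1) t + lam*(bp (b+3) t + bp (b+7) t) - 2*lam*bp (b+5) t|
              ≤ |ζ * bp (b+1) t + lam*(bp (b+3) t + bp (b+7) t)| + |2*lam*bp (b+5) t| := by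
                rw [sub_eq_add_neg]
                refine (abs_add_le _ _).trans ?_
                rw [abs_neg]
            _ ≤ |ζ * bp (b+1) t| + |lam*(bp (b+3) t + bp (b+7) t)| + |2*lam*bp (b+5) t| := by
                have := abs_add_le (ζ * bp (b+1) t) (lam*(bp (b+3) t + bp (b+7) t))
                linarith
            _ = |ζ| * bp (b+1) t + lam*(bp (b+3) t + bp (b+7) t) + 2*lam*bp (b+5) t := by
                rw [abs_mul, abs_of_nonneg (bp_nonneg _ _),
                  abs_of_nonneg (mul_nonneg hlam0 (add_nonneg (bp_nonneg _ _) (bp_nonneg _ _))),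
                  abs_of_nonneg (mul_nonneg (mul_nonneg (by norm_num) hlam0) (bp_nonneg _ _))]
        have hbr : cl (t - b) < 1 → gB1 δ t = 0 ∧ gB2 lam t = 0 := by
          intro hlt
          have ht1 : t ≤ b + 1 := by
            have := cl_lt_one_imp hlt
            linarith
          constructor
          · simp only [hgB1_def]
            rw [bp_eq_zero_left (by linarith : t ≤ b+2), bp_eq_zero_left (by linarith : t ≤ b+4),
              bp_eq_zero_left (by linarith : t ≤ b+6)]
            ring
          · simp only [hgB2_def]
            rw [bp_eq_zero_left (by linarith : t ≤ b+1), bp_eq_zero_left (by linarith : t ≤ b+3),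
              bp_eq_zero_left (by linarith : t ≤ b+5), bp_eq_zero_left (by linarith : t ≤ b+7)]
            ring
        exact cone_ineq hc hσ (hσf b hb_mem) (htlf b hb_mem) (cl_nonneg _) (cl_le_one _)
          habs1 habs2 hbr
  -- total integrals vanish
  have hαa1 : α ≤ a - 1 := le_of_eq hα_def
  have hb1β : b + 1 ≤ β := by rw [hβ_def]; linarith
  have hIl1 : ∫ t in α..a, G1 t = v1/2 := by
    have hcong : ∀ s ∈ uIcc α a, G1 s = v1 * (1 - cl (a - s)) := by
      intro s hs
      rw [uIcc_of_le hαa.le] at hs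
      rw [hG1_left s hs.2]
      simp only [hlg1_def]
      ring
    rw [intervalIntegral.integral_congr hcong, intervalIntegral.integral_const_mul,
      integral_ramp_l hαa1]
    ring
  have hIl2 : ∫ t in α..a, G2 t = v2/2 := by
    have hcong : ∀ s ∈ uIcc α a, G2 s = v2 * (1 - cl (a - s)) := by
      intro s hs
      rw [uIcc_of_le hαa.le] at hs
      rw [hG2_left s hs.2]
      simp only [hlg2_def]
      ring
    rw [intervalIntegral.integral_congr hcong, intervalIntegral.integral_const_mul,
      integral_ramp_l hαa1]
    ring
  have hIm1 : ∫ t in a..b, G1 t = w₁ b - w₁ a := by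
    have hcong : ∀ s ∈ uIcc a b, G1 s = derivWithin w₁ (Icc a b) s := by
      intro s hs
      rw [uIcc_of_le hab'] at hs
      rw [hG1_mid s hs.1 hs.2, hD1_def]
    rw [intervalIntegral.integral_congr hcong, ftc2 hab hw₁ hb_mem]
  have hIm2 : ∫ t in a..b, G2 t = w₂ b - w₂ a := by
    have hcong : ∀ s ∈ uIcc a b, G2 s = derivWithin w₂ (Icc a b) s := by
      intro s hs
      rw [uIcc_of_le hab'] at hs
      rw [hG2_mid s hs.1 hs.2, hD2_def]
    rw [intervalIntegral.integral_congr hcong, ftc2 hab hw₂ hb_mem]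
  have hIr1 : ∫ t in b..β, G1 t = u1/2 + ρ := by
    have hcong : ∀ s ∈ uIcc b β, G1 s =
        u1 * (1 - cl (s - b)) + (ρ * bp (b+2) s +
          (σ*δ * bp (b+4) s + (-(σ*δ)) * bp (b+6) s)) := by
      intro s hs
      rw [uIcc_of_le hbβ.le] at hs
      rw [hG1_right s hs.1]
      simp only [hrg1_def, hgB1_def]
      ring
    rw [intervalIntegral.integral_congr hcong]
    rw [iadd (continuous_const.fun_mul (continuous_ramp_r b))
      ((continuous_const.fun_mul (continuous_bp _)).fun_add
        ((continuous_const.fun_mul (continuous_bp _)).fun_add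
          (continuous_const.fun_mul (continuous_bp _))))]
    rw [iadd (continuous_const.fun_mul (continuous_bp _))
      ((continuous_const.fun_mul (continuous_bp _)).fun_add (continuous_const.fun_mul (continuous_bp _)))]
    rw [iadd (continuous_const.fun_mul (continuous_bp _)) (continuous_const.fun_mul (continuous_bp _))]
    have e0 : ∫ s in b..β, u1 * (1 - cl (s - b)) = u1/2 := by
      rw [intervalIntegral.integral_const_mul, integral_ramp_r hb1β]
      ring
    have e1 : ∫ s in b..β, ρ * bp (b+2) s = ρ := by
      rw [intervalIntegral.integral_const_mul,
        integral_bp (by linarith) (by rw [hβ_def]; linarith)]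
      ring
    have e2 : ∫ s in b..β, σ*δ * bp (b+4) s = σ*δ := by
      rw [intervalIntegral.integral_const_mul,
        integral_bp (by linarith) (by rw [hβ_def]; linarith)]
      ring
    have e3 : ∫ s in b..β, (-(σ*δ)) * bp (b+6) s = -(σ*δ) := by
      rw [intervalIntegral.integral_const_mul,
        integral_bp (by linarith) (by rw [hβ_def]; linarith)]
      ring
    rw [e0, e1, e2, e3]
    ring
  have hIr2 : ∫ t in b..β, G2 t = u2/2 + ζ := by
    have hcong : ∀ s ∈ uIcc b β, G2 s =
        u2 * (1 - cl (s - b)) + (ζ * bp (b+1) s +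
          (lam * bp (b+3) s + (lam * bp (b+7) s + (-(2*lam)) * bp (b+5) s))) := by
      intro s hs
      rw [uIcc_of_le hbβ.le] at hs
      rw [hG2_right s hs.1]
      simp only [hrg2_def, hgB2_def]
      ring
    rw [intervalIntegral.integral_congr hcong]
    rw [iadd (continuous_const.fun_mul (continuous_ramp_r b))
      ((continuous_const.fun_mul (continuous_bp _)).fun_add
        ((continuous_const.fun_mul (continuous_bp _)).fun_add
          ((continuous_const.fun_mul (continuous_bp _)).fun_add
            (continuous_const.fun_mul (continuous_bp _)))))]
    rw [iadd (continuous_const.fun_mul (continuous_bp _))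
      ((continuous_const.fun_mul (continuous_bp _)).fun_add
        ((continuous_const.fun_mul (continuous_bp _)).fun_add
          (continuous_const.fun_mul (continuous_bp _))))]
    rw [iadd (continuous_const.fun_mul (continuous_bp _))
      ((continuous_const.fun_mul (continuous_bp _)).fun_add (continuous_const.fun_mul (continuous_bp _)))]
    rw [iadd (continuous_const.fun_mul (continuous_bp _)) (continuous_const.fun_mul (continuous_bp _))]
    have e0 : ∫ s in b..β, u2 * (1 - cl (s - b)) = u2/2 := by
      rw [intervalIntegral.integral_const_mul, integral_ramp_r hb1β]
      ring
    have e1 : ∫ s in b..β, ζ * bp (b+1) s = ζ := by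
      rw [intervalIntegral.integral_const_mul,
        integral_bp (by linarith) (by rw [hβ_def]; linarith)]
      ring
    have e2 : ∫ s in b..β, lam * bp (b+3) s = lam := by
      rw [intervalIntegral.integral_const_mul,
        integral_bp (by linarith) (by rw [hβ_def]; linarith)]
      ring
    have e3 : ∫ s in b..β, lam * bp (b+7) s = lam := by
      rw [intervalIntegral.integral_const_mul,
        integral_bp (by linarith) (by rw [hβ_def]; linarith)]
      ring
    have e4 : ∫ s in b..β, (-(2*lam)) * bp (b+5) s = -(2*lam) := by
      rw [intervalIntegral.integral_const_mul,
        integral_bp (by linarith) (by rw [hβ_def]; linarith)]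
      ring
    rw [e0, e1, e2, e3, e4]
    ring
  have hI1 : ∫ t in α..β, G1 t = 0 := by
    rw [split3 hG1c α a b β, hIl1, hIm1, hIr1, hρ_def]
    ring
  have hI2 : ∫ t in α..β, G2 t = 0 := by
    rw [split3 hG2c α a b β, hIl2, hIm2, hIr2, hζ_def]
    ring
  have hWW2c : Continuous WW2 := by
    rw [hWW2_def]; exact (ftc1_contDiff hG2c (w₂ a) a).continuous
  have hW2_at : ∀ t : ℝ, WW2 t = w₂ b + ∫ s in b..t, G2 s := by
    intro t
    simp only [hWW2_def]
    rw [split2 hG2c a b t, hIm2]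
    ring
  have hint_rg2 : ∀ t, b ≤ t → ∫ s in b..t, G2 s =
      u2 * (∫ s in b..t, (1 - cl (s - b))) + (ζ * (∫ s in b..t, bp (b+1) s) +
        (lam * (∫ s in b..t, bp (b+3) s) + (lam * (∫ s in b..t, bp (b+7) s) +
          (-(2*lam)) * (∫ s in b..t, bp (b+5) s)))) := by
    intro t ht
    have hcong : ∀ s ∈ uIcc b t, G2 s =
        u2 * (1 - cl (s - b)) + (ζ * bp (b+1) s + (lam * bp (b+3) s +
          (lam * bp (b+7) s + (-(2*lam)) * bp (b+5) s))) := by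
      intro s hs
      rw [uIcc_of_le ht] at hs
      rw [hG2_right s hs.1]
      simp only [hrg2_def, hgB2_def]
      ring
    rw [intervalIntegral.integral_congr hcong]
    rw [iadd (continuous_const.fun_mul (continuous_ramp_r b))
      ((continuous_const.fun_mul (continuous_bp _)).fun_add
        ((continuous_const.fun_mul (continuous_bp _)).fun_add
          ((continuous_const.fun_mul (continuous_bp _)).fun_add
            (continuous_const.fun_mul (continuous_bp _)))))]
    rw [iadd (continuous_const.fun_mul (continuous_bp _))
      ((continuous_const.fun_mul (continuous_bp _)).fun_add
        ((continuous_const.fun_mul (continuous_bp _)).fun_add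
          (continuous_const.fun_mul (continuous_bp _))))]
    rw [iadd (continuous_const.fun_mul (continuous_bp _))
      ((continuous_const.fun_mul (continuous_bp _)).fun_add (continuous_const.fun_mul (continuous_bp _)))]
    rw [iadd (continuous_const.fun_mul (continuous_bp _)) (continuous_const.fun_mul (continuous_bp _))]
    rw [intervalIntegral.integral_const_mul, intervalIntegral.integral_const_mul,
      intervalIntegral.integral_const_mul, intervalIntegral.integral_const_mul,
      intervalIntegral.integral_const_mul]
  have hW2_g2 : ∀ t, b+4 ≤ t → t ≤ b+5 → WW2 t = (w₂ b + u2/2 + ζ) + lam := by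
    intro t h4 h5
    rw [hW2_at t, hint_rg2 t (by linarith),
      integral_ramp_r (by linarith),
      integral_bp (by linarith) (by linarith),
      integral_bp (by linarith) (by linarith),
      integral_bp_zero_left (by linarith) (by linarith : t ≤ b+7),
      integral_bp_zero_left (by linarith) (by linarith : t ≤ b+5)]
    ring
  have hW2_g4 : ∀ t, b+6 ≤ t → t ≤ b+7 → WW2 t = (w₂ b + u2/2 + ζ) - lam := by
    intro t h6 h7
    rw [hW2_at t, hint_rg2 t (by linarith),
      integral_ramp_r (by linarith),
      integral_bp (by linarith) (by linarith),
      integral_bp (by linarith) (by linarith : b+3+1 ≤ t),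
      integral_bp_zero_left (by linarith) (by linarith : t ≤ b+7),
      integral_bp (by linarith) (by linarith : b+5+1 ≤ t)]
    ring
  -- the left part of the integral of G0 does not depend on the parameters
  have hGm1_eq : ∀ x, x ≤ b+4 → Gm1 δ x = Gm1 0 x := by
    intro x hx
    rcases lt_or_ge x a with h | h
    · simp only [hGm1_def]; rw [glue_left h, glue_left h]
    · rcases le_or_gt x b with h2 | h2
      · simp only [hGm1_def]; rw [glue_mid h h2, glue_mid h h2]
      · simp only [hGm1_def]; rw [glue_right hab' h2, glue_right hab' h2]
        simp only [hrg1_def, hgB1_def]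
        rw [bp_eq_zero_left (by linarith : x ≤ b+4), bp_eq_zero_left (by linarith : x ≤ b+6)]
        ring
  have hGm2_eq : ∀ x, x ≤ b+3 → Gm2 lam x = Gm2 0 x := by
    intro x hx
    rcases lt_or_ge x a with h | h
    · simp only [hGm2_def]; rw [glue_left h, glue_left h]
    · rcases le_or_gt x b with h2 | h2
      · simp only [hGm2_def]; rw [glue_mid h h2, glue_mid h h2]
      · simp only [hGm2_def]; rw [glue_right hab' h2, glue_right hab' h2]
        simp only [hrg2_def, hgB2_def]
        rw [bp_eq_zero_left (by linarith : x ≤ b+3), bp_eq_zero_left (by linarith : x ≤ b+5),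
          bp_eq_zero_left (by linarith : x ≤ b+7)]
        ring
  have hHm_eq : ∀ x, x ≤ b+3 → Hm lam δ x = Hm 0 0 x := by
    intro x hx
    rcases lt_or_ge x a with h | h
    · simp only [hHm_def]; rw [glue_left h, glue_left h]
    · rcases le_or_gt x b with h2 | h2
      · simp only [hHm_def]; rw [glue_mid h h2, glue_mid h h2]
      · simp only [hHm_def]; rw [glue_right hab' h2, glue_right hab' h2]
        simp only [hrh_def, heB1_def, heB2_def]
        rw [bp_eq_zero_left (by linarith : x ≤ b+3), bp_eq_zero_left (by linarith : x ≤ b+4),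
          bp_eq_zero_left (by linarith : x ≤ b+5), bp_eq_zero_left (by linarith : x ≤ b+6),
          bp_eq_zero_left (by linarith : x ≤ b+7)]
        ring
  have hW2m_eq : ∀ x, x ≤ b+3 → W2m lam x = W2m 0 x := by
    intro x hx
    simp only [hW2m_def]
    congr 1
    apply intervalIntegral.integral_congr
    intro y hy
    apply hGm2_eq
    calc y ≤ max a x := hy.2
      _ ≤ b + 3 := max_le (by linarith) hx
  have hK2 : ∫ t in α..(b+3), G0 t = K := by
    rw [hK_def]
    apply intervalIntegral.integral_congr
    intro t ht
    rw [uIcc_of_le (by rw [hα_def]; linarith : α ≤ b+3)] at ht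
    simp only [hG0_def, hG0m_def]
    rw [hHm_eq t ht.2, hW2m_eq t ht.2, hGm1_eq t (by linarith [ht.2])]
  -- the gadget integral
  have hIH : ∫ s in (b+3)..β, H s = (σ/c)*5 + ((2*(σ/c)*δ) + ((2*(σ/c)*δ) +
      ((2*(σ/c)*lam) + ((2*(σ/c)*lam) + (4*(σ/c)*lam))))) := by
    have hcong : ∀ s ∈ uIcc (b+3) β, H s = σ/c + ((2*(σ/c)*δ) * bp (b+4) s +
        ((2*(σ/c)*δ) * bp (b+6) s + ((2*(σ/c)*lam) * bp (b+3) s +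
          ((2*(σ/c)*lam) * bp (b+7) s + (4*(σ/c)*lam) * bp (b+5) s)))) := by
      intro s hs
      rw [uIcc_of_le (by rw [hβ_def]; linarith : b+3 ≤ β)] at hs
      rw [hH_right s (by linarith [hs.1])]
      simp only [hrh_def, heB1_def, heB2_def]
      rw [cl_of_one_le (by linarith [hs.1] : 1 ≤ s - b),
        bp_eq_zero_right (by linarith [hs.1] : b+1+1 ≤ s),
        bp_eq_zero_right (by linarith [hs.1] : b+2+1 ≤ s)]
      ring
    rw [intervalIntegral.integral_congr hcong]
    rw [iadd continuous_const
      ((continuous_const.fun_mul (continuous_bp _)).fun_add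
        ((continuous_const.fun_mul (continuous_bp _)).fun_add
          ((continuous_const.fun_mul (continuous_bp _)).fun_add
            ((continuous_const.fun_mul (continuous_bp _)).fun_add
              (continuous_const.fun_mul (continuous_bp _))))))]
    rw [iadd (continuous_const.fun_mul (continuous_bp _))
      ((continuous_const.fun_mul (continuous_bp _)).fun_add
        ((continuous_const.fun_mul (continuous_bp _)).fun_add
          ((continuous_const.fun_mul (continuous_bp _)).fun_add
            (continuous_const.fun_mul (continuous_bp _)))))]
    rw [iadd (continuous_const.fun_mul (continuous_bp _))
      ((continuous_const.fun_mul (continuous_bp _)).fun_add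
        ((continuous_const.fun_mul (continuous_bp _)).fun_add
          (continuous_const.fun_mul (continuous_bp _))))]
    rw [iadd (continuous_const.fun_mul (continuous_bp _))
      ((continuous_const.fun_mul (continuous_bp _)).fun_add (continuous_const.fun_mul (continuous_bp _)))]
    rw [iadd (continuous_const.fun_mul (continuous_bp _)) (continuous_const.fun_mul (continuous_bp _))]
    rw [intervalIntegral.integral_const, intervalIntegral.integral_const_mul,
      intervalIntegral.integral_const_mul, intervalIntegral.integral_const_mul,
      intervalIntegral.integral_const_mul, intervalIntegral.integral_const_mul]
    rw [integral_bp (by linarith) (by rw [hβ_def]; linarith),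
      integral_bp (by linarith) (by rw [hβ_def]; linarith),
      integral_bp le_rfl (by rw [hβ_def]; linarith),
      integral_bp (by linarith) (by rw [hβ_def]; linarith),
      integral_bp (by linarith) (by rw [hβ_def]; linarith)]
    have h5 : β - (b+3) = (5:ℝ) := by rw [hβ_def]; ring
    rw [h5]
    simp only [smul_eq_mul]
    ring
  have hG1z_a : ∀ s, b+3 ≤ s → s ≤ b+4 → G1 s = 0 := by
    intro s h1 h2
    rw [hG1_right s (by linarith)]
    simp only [hrg1_def, hgB1_def]
    rw [cl_of_one_le (by linarith : 1 ≤ s - b),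
      bp_eq_zero_right (by linarith : b+2+1 ≤ s),
      bp_eq_zero_left (by linarith : s ≤ b+4),
      bp_eq_zero_left (by linarith : s ≤ b+6)]
    ring
  have hG1z_b : ∀ s, b+5 ≤ s → s ≤ b+6 → G1 s = 0 := by
    intro s h1 h2
    rw [hG1_right s (by linarith)]
    simp only [hrg1_def, hgB1_def]
    rw [cl_of_one_le (by linarith : 1 ≤ s - b),
      bp_eq_zero_right (by linarith : b+2+1 ≤ s),
      bp_eq_zero_right (by linarith : b+4+1 ≤ s),
      bp_eq_zero_left (by linarith : s ≤ b+6)]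
    ring
  have hG1z_c : ∀ s, b+7 ≤ s → G1 s = 0 := by
    intro s h1
    rw [hG1_right s (by linarith)]
    simp only [hrg1_def, hgB1_def]
    rw [cl_of_one_le (by linarith : 1 ≤ s - b),
      bp_eq_zero_right (by linarith : b+2+1 ≤ s),
      bp_eq_zero_right (by linarith : b+4+1 ≤ s),
      bp_eq_zero_right (by linarith : b+6+1 ≤ s)]
    ring
  have hFWG : Continuous fun s => WW2 s * G1 s := hWW2c.mul hG1c
  have hIz : ∀ x y : ℝ, (∀ s ∈ uIcc x y, G1 s = 0) → ∫ s in x..y, WW2 s * G1 s = 0 := by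
    intro x y h
    have hcong : ∀ s ∈ uIcc x y, WW2 s * G1 s = 0 := by
      intro s hs; rw [h s hs, mul_zero]
    rw [intervalIntegral.integral_congr hcong, intervalIntegral.integral_const, smul_zero]
  have hIWG : ∫ s in (b+3)..β, WW2 s * G1 s = 2*lam*(σ*δ) := by
    rw [split3 hFWG (b+3) (b+4) (b+6) β, split2 hFWG (b+4) (b+5) (b+6),
      split2 hFWG (b+6) (b+7) β]
    have i1 : ∫ s in (b+3)..(b+4), WW2 s * G1 s = 0 := by
      apply hIz
      intro s hs
      rw [uIcc_of_le (by linarith)] at hs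
      exact hG1z_a s hs.1 hs.2
    have i3 : ∫ s in (b+5)..(b+6), WW2 s * G1 s = 0 := by
      apply hIz
      intro s hs
      rw [uIcc_of_le (by linarith)] at hs
      exact hG1z_b s hs.1 hs.2
    have i5 : ∫ s in (b+7)..β, WW2 s * G1 s = 0 := by
      apply hIz
      intro s hs
      rw [uIcc_of_le (by rw [hβ_def]; linarith)] at hs
      exact hG1z_c s hs.1
    have i2 : ∫ s in (b+4)..(b+5), WW2 s * G1 s = ((w₂ b + u2/2 + ζ) + lam)*(σ*δ) := by
      have hcong : ∀ s ∈ uIcc (b+4) (b+5), WW2 s * G1 s =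
          (((w₂ b + u2/2 + ζ) + lam)*(σ*δ)) * bp (b+4) s := by
        intro s hs
        rw [uIcc_of_le (by linarith)] at hs
        rw [hW2_g2 s hs.1 hs.2, hG1_right s (by linarith [hs.1])]
        simp only [hrg1_def, hgB1_def]
        rw [cl_of_one_le (by linarith [hs.1] : 1 ≤ s - b),
          bp_eq_zero_right (by linarith [hs.1] : b+2+1 ≤ s),
          bp_eq_zero_left (by linarith [hs.2] : s ≤ b+6)]
        ring
      rw [intervalIntegral.integral_congr hcong, intervalIntegral.integral_const_mul,
        integral_bp le_rfl (by linarith)]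
      ring
    have i4 : ∫ s in (b+6)..(b+7), WW2 s * G1 s = -(((w₂ b + u2/2 + ζ) - lam)*(σ*δ)) := by
      have hcong : ∀ s ∈ uIcc (b+6) (b+7), WW2 s * G1 s =
          (-(((w₂ b + u2/2 + ζ) - lam)*(σ*δ))) * bp (b+6) s := by
        intro s hs
        rw [uIcc_of_le (by linarith)] at hs
        rw [hW2_g4 s hs.1 hs.2, hG1_right s (by linarith [hs.1])]
        simp only [hrg1_def, hgB1_def]
        rw [cl_of_one_le (by linarith [hs.1] : 1 ≤ s - b),
          bp_eq_zero_right (by linarith [hs.1] : b+2+1 ≤ s),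
          bp_eq_zero_right (by linarith [hs.1] : b+4+1 ≤ s)]
        ring
      rw [intervalIntegral.integral_congr hcong, intervalIntegral.integral_const_mul,
        integral_bp le_rfl (by linarith)]
      ring
    rw [i1, i2, i3, i4, i5]
    ring
  have hσ2 : σ * σ = 1 := by rcases hσ with h | h <;> rw [h] <;> norm_num
  have hIG0r : ∫ t in (b+3)..β, G0 t = -K := by
    have hcong : ∀ s ∈ uIcc (b+3) β, G0 s = H s - WW2 s * G1 s := fun s _ => rfl
    rw [intervalIntegral.integral_congr hcong,
      intervalIntegral.integral_sub (hHc.intervalIntegrable _ _)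
        (hFWG.intervalIntegrable _ _), hIH, hIWG]
    have e1 : (σ/c)*5 + ((2*(σ/c)*δ) + ((2*(σ/c)*δ) +
        ((2*(σ/c)*lam) + ((2*(σ/c)*lam) + (4*(σ/c)*lam))))) - 2*lam*(σ*δ)
        = σ*((5 + 8*lam + 4*δ)/c - 2*lam*δ) := by
      field_simp
      ring
    rw [e1, hsolve]
    calc σ*(-σ*K) = -(σ*σ)*K := by ring
      _ = -K := by rw [hσ2]; ring
  have hI0 : ∫ t in α..β, G0 t = 0 := by
    rw [split2 hG0c α (b+3) β, hK2, hIG0r]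
    ring
  -- endpoint values of the derivatives
  have ha_sub : a - α = (1:ℝ) := by rw [hα_def]; ring
  have hβ_sub : β - b = (8:ℝ) := by rw [hβ_def]; ring
  have hG1α : G1 α = 0 := by
    rw [hG1_left α hαa.le]
    simp only [hlg1_def]
    rw [ha_sub, cl_of_one_le le_rfl]
    ring
  have hG2α : G2 α = 0 := by
    rw [hG2_left α hαa.le]
    simp only [hlg2_def]
    rw [ha_sub, cl_of_one_le le_rfl]
    ring
  have hG0α : G0 α = σ/c := by
    have e : G0 α = H α - WW2 α * G1 α := rfl
    rw [e, hG1α, hH_left α hαa.le]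
    simp only [hlh_def]
    rw [ha_sub, cl_of_one_le le_rfl]
    ring
  have hbβ' : b ≤ β := hbβ.le
  have hG1β : G1 β = 0 := by
    rw [hG1_right β hbβ', hrg1_def]
    simp only [hgB1_def]
    rw [hβ_sub, cl_of_one_le (by norm_num),
      bp_eq_zero_right (show b+2+1 ≤ β by rw [hβ_def]; linarith),
      bp_eq_zero_right (show b+4+1 ≤ β by rw [hβ_def]; linarith),
      bp_eq_zero_right (show b+6+1 ≤ β by rw [hβ_def]; linarith)]
    ring
  have hG2β : G2 β = 0 := by
    rw [hG2_right β hbβ', hrg2_def]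
    simp only [hgB2_def]
    rw [hβ_sub, cl_of_one_le (by norm_num),
      bp_eq_zero_right (show b+1+1 ≤ β by rw [hβ_def]; linarith),
      bp_eq_zero_right (show b+3+1 ≤ β by rw [hβ_def]; linarith),
      bp_eq_zero_right (show b+5+1 ≤ β by rw [hβ_def]; linarith),
      bp_eq_zero_right (show b+7+1 ≤ β by rw [hβ_def]; linarith)]
    ring
  have hG0β : G0 β = σ/c := by
    have e : G0 β = H β - WW2 β * G1 β := rfl
    rw [e, hG1β, hH_right β hbβ', hrh_def]
    simp only [heB1_def, heB2_def]
    rw [hβ_sub, cl_of_one_le (by norm_num),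
      bp_eq_zero_right (show b+1+1 ≤ β by rw [hβ_def]; linarith),
      bp_eq_zero_right (show b+2+1 ≤ β by rw [hβ_def]; linarith),
      bp_eq_zero_right (show b+3+1 ≤ β by rw [hβ_def]; linarith),
      bp_eq_zero_right (show b+4+1 ≤ β by rw [hβ_def]; linarith),
      bp_eq_zero_right (show b+5+1 ≤ β by rw [hβ_def]; linarith),
      bp_eq_zero_right (show b+6+1 ≤ β by rw [hβ_def]; linarith),
      bp_eq_zero_right (show b+7+1 ≤ β by rw [hβ_def]; linarith)]
    ring
  -- closure of positions
  have hclose : ∀ (G : ℝ → ℝ) (C : ℝ), Continuous G → (∫ t in α..β, G t = 0) →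
      C + ∫ s in a..α, G s = C + ∫ s in a..β, G s := by
    intro G C hG hint
    have h1 := intervalIntegral.integral_add_adjacent_intervals
      (hG.intervalIntegrable a α : IntervalIntegrable G volume a α)
      (hG.intervalIntegrable α β : IntervalIntegrable G volume α β)
    rw [hint] at h1
    have h2 : a ≤ β := by rw [hβ_def]; linarith
    rw [add_zero] at h1
    rw [h1]
  -- derivWithin values
  have hdW0 : ∀ t ∈ Icc α β, derivWithin WW0 (Icc α β) t = G0 t := by
    intro t ht
    rw [hWW0_def]
    exact ftc1_derivWithin hG0c (w₀ a) a hαβ ht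
  have hdW1 : ∀ t ∈ Icc α β, derivWithin WW1 (Icc α β) t = G1 t := by
    intro t ht
    rw [hWW1_def]
    exact ftc1_derivWithin hG1c (w₁ a) a hαβ ht
  have hdW2 : ∀ t ∈ Icc α β, derivWithin WW2 (Icc α β) t = G2 t := by
    intro t ht
    rw [hWW2_def]
    exact ftc1_derivWithin hG2c (w₂ a) a hαβ ht
  have hα_mem : α ∈ Icc α β := ⟨le_rfl, hαβ.le⟩
  have hβ_mem : β ∈ Icc α β := ⟨hαβ.le, le_rfl⟩
  -- assemble
  refine ⟨α, hαa, β, hbβ, WW0, WW1, WW2, ?_, ?_, ?_, ?_, ?_, ?_, ?_, ?_, ?_, ?_, ?_⟩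
  · rw [hWW0_def]; exact (ftc1_contDiff hG0c (w₀ a) a).contDiffOn
  · rw [hWW1_def]; exact (ftc1_contDiff hG1c (w₁ a) a).contDiffOn
  · rw [hWW2_def]; exact (ftc1_contDiff hG2c (w₂ a) a).contDiffOn
  · exact fun t ht => ⟨hrest0 t ht, hrest1 t ht, hrest2 t ht⟩
  · intro t ht
    rw [hdW0 t ht, hdW1 t ht, hdW2 t ht, hG0_sum t]
    exact hcone t ht
  · rw [hWW0_def]; simp only; rw [hclose G0 (w₀ a) hG0c hI0]
  · rw [hWW1_def]; simp only; rw [hclose G1 (w₁ a) hG1c hI1]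
  · rw [hWW2_def]; simp only; rw [hclose G2 (w₂ a) hG2c hI2]
  · rw [hdW0 α hα_mem, hdW0 β hβ_mem, hG0α, hG0β]
  · rw [hdW1 α hα_mem, hdW1 β hβ_mem, hG1α, hG1β]
  · rw [hdW2 α hα_mem, hdW2 β hβ_mem, hG2α, hG2β]
end
end

section
/- Through every point of (ℝ³, g^c₃) there exists a closed timelike path: for every c > 0 and every p ∈ ℝ³ there exist a < b and a C¹ path γ : [a,b] → ℝ³ which is g^c₃-timelike and satisfies γ(a) = γ(b) = p and γ'(a) = γ'(b). -/
/-!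
The loop projects onto a circle of radius `r` in the `(x₁, x₂)`-plane, and `x₀` is chosen so that
`x₀' + x₂ x₁'` is the constant `r² / 2`; this constant is forced by closing up `x₀`, because
`∮ x₂ dx₁` over the circle is `π r²`. The timelike condition then reads `r² < c² r⁴ / 4`, which
holds as soon as `r > 2 / c`: a large enough circle, lifted this way, is a closed timelike loop.
-/

open Set

open Function Real

theorem Function.Periodic.deriv {𝕜 F : Type*} [NontriviallyNormedField 𝕜] [NormedAddCommGroup F]
    [NormedSpace 𝕜 F] {f : 𝕜 → F} {T : 𝕜} (hf : Periodic f T) : Periodic (deriv f) T :=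
  fun x ↦ by rw [← deriv_comp_add_const, hf.funext]

theorem Function.Periodic.derivWithin_Icc_left_eq_right {F : Type*} [NormedAddCommGroup F]
    [NormedSpace ℝ F] {f : ℝ → F} {a b : ℝ} (hab : a < b) (hf : Periodic f (b - a))
    (hdiff : Differentiable ℝ f) :
    derivWithin f (Icc a b) a = derivWithin f (Icc a b) b := by
  rw [(hdiff a).derivWithin (uniqueDiffOn_Icc hab a (left_mem_Icc.2 hab.le)),
    (hdiff b).derivWithin (uniqueDiffOn_Icc hab b (right_mem_Icc.2 hab.le)),
    ← hf.deriv a, add_sub_cancel]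

theorem timelikeOn_Icc_of_deriv {c a b : ℝ} (hab : a < b) {w₀ w₁ w₂ : ℝ → ℝ}
    (h₀ : Differentiable ℝ w₀) (h₁ : Differentiable ℝ w₁) (h₂ : Differentiable ℝ w₂)
    (h : ∀ t ∈ Icc a b,
      deriv w₁ t ^ 2 + deriv w₂ t ^ 2 < c ^ 2 * (deriv w₀ t + w₂ t * deriv w₁ t) ^ 2) :
    TimelikeOn c w₀ w₁ w₂ (Icc a b) := by
  intro t ht
  have hU := uniqueDiffOn_Icc hab t ht
  rw [(h₀ t).derivWithin hU, (h₁ t).derivWithin hU, (h₂ t).derivWithin hU]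
  exact h t ht

noncomputable section Loop

variable (p₀ p₁ p₂ r : ℝ)

def loopCoord₁ (t : ℝ) : ℝ := p₁ + r * sin t

def loopCoord₂ (t : ℝ) : ℝ := p₂ - r + r * cos t

def loopCoord₀ (t : ℝ) : ℝ := p₀ - (p₂ - r) * r * sin t - r ^ 2 / 4 * sin (2 * t)

theorem hasDerivAt_loopCoord₁ (t : ℝ) : HasDerivAt (loopCoord₁ p₁ r) (r * cos t) t :=
  ((hasDerivAt_sin t).const_mul r).const_add p₁

theorem hasDerivAt_loopCoord₂ (t : ℝ) : HasDerivAt (loopCoord₂ p₂ r) (r * -sin t) t :=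
  ((hasDerivAt_cos t).const_mul r).const_add (p₂ - r)

theorem hasDerivAt_loopCoord₀ (t : ℝ) :
    HasDerivAt (loopCoord₀ p₀ p₂ r) (-((p₂ - r) * r * cos t) - r ^ 2 / 2 * cos (2 * t)) t := by
  have h2t : HasDerivAt (fun t ↦ sin (2 * t)) (cos (2 * t) * 2) t := by
    simpa using ((hasDerivAt_id t).const_mul 2).sin
  exact ((((hasDerivAt_sin t).const_mul ((p₂ - r) * r)).const_sub p₀).sub
    (h2t.const_mul (r ^ 2 / 4))).congr_deriv (by ring)

theorem deriv_loopCoord₀_add_mul_deriv_loopCoord₁ (t : ℝ) :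
    deriv (loopCoord₀ p₀ p₂ r) t + loopCoord₂ p₂ r t * deriv (loopCoord₁ p₁ r) t = r ^ 2 / 2 := by
  rw [(hasDerivAt_loopCoord₀ p₀ p₂ r t).deriv, (hasDerivAt_loopCoord₁ p₁ r t).deriv, loopCoord₂,
    cos_two_mul]
  nlinarith [sin_sq_add_cos_sq t]

theorem deriv_loopCoord₁_sq_add_deriv_loopCoord₂_sq (t : ℝ) :
    deriv (loopCoord₁ p₁ r) t ^ 2 + deriv (loopCoord₂ p₂ r) t ^ 2 = r ^ 2 := by
  rw [(hasDerivAt_loopCoord₁ p₁ r t).deriv, (hasDerivAt_loopCoord₂ p₂ r t).deriv]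
  nlinarith [sin_sq_add_cos_sq t]

theorem contDiff_loopCoord₀ : ContDiff ℝ 1 (loopCoord₀ p₀ p₂ r) := by
  unfold loopCoord₀; fun_prop

theorem contDiff_loopCoord₁ : ContDiff ℝ 1 (loopCoord₁ p₁ r) := by
  unfold loopCoord₁; fun_prop

theorem contDiff_loopCoord₂ : ContDiff ℝ 1 (loopCoord₂ p₂ r) := by
  unfold loopCoord₂; fun_prop

theorem periodic_loopCoord₀ : Periodic (loopCoord₀ p₀ p₂ r) (2 * π) := fun t ↦ by
  simp only [loopCoord₀, sin_add_two_pi, show 2 * (t + 2 * π) = 2 * t + 2 * π + 2 * π by ring]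

theorem periodic_loopCoord₁ : Periodic (loopCoord₁ p₁ r) (2 * π) := fun t ↦ by
  simp only [loopCoord₁, sin_add_two_pi]

theorem periodic_loopCoord₂ : Periodic (loopCoord₂ p₂ r) (2 * π) := fun t ↦ by
  simp only [loopCoord₂, cos_add_two_pi]

theorem timelike_loopCoord {c : ℝ} (hcr : 2 < c * r) (t : ℝ) :
    deriv (loopCoord₁ p₁ r) t ^ 2 + deriv (loopCoord₂ p₂ r) t ^ 2 <
      c ^ 2 * (deriv (loopCoord₀ p₀ p₂ r) t + loopCoord₂ p₂ r t * deriv (loopCoord₁ p₁ r) t) ^ 2 := by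
  rw [deriv_loopCoord₁_sq_add_deriv_loopCoord₂_sq, deriv_loopCoord₀_add_mul_deriv_loopCoord₁]
  nlinarith [mul_self_nonneg r, mul_lt_mul'' hcr hcr zero_le_two zero_le_two]

end Loop

/-- through every point of `(ℝ³, g^c₃)` there exists a closed
timelike path. -/
theorem stmt_9 (c : ℝ) (hc : 0 < c) (p₀ p₁ p₂ : ℝ) :
    ∃ a b : ℝ, a < b ∧
      ∃ γ₀ γ₁ γ₂ : ℝ → ℝ,
        ContDiffOn ℝ 1 γ₀ (Icc a b) ∧
        ContDiffOn ℝ 1 γ₁ (Icc a b) ∧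
        ContDiffOn ℝ 1 γ₂ (Icc a b) ∧
        TimelikeOn c γ₀ γ₁ γ₂ (Icc a b) ∧
        γ₀ a = p₀ ∧ γ₁ a = p₁ ∧ γ₂ a = p₂ ∧
        γ₀ b = p₀ ∧ γ₁ b = p₁ ∧ γ₂ b = p₂ ∧
        derivWithin γ₀ (Icc a b) a = derivWithin γ₀ (Icc a b) b ∧
        derivWithin γ₁ (Icc a b) a = derivWithin γ₁ (Icc a b) b ∧
        derivWithin γ₂ (Icc a b) a = derivWithin γ₂ (Icc a b) b := by
  set r := 3 / c
  have hcr : 2 < c * r := by rw [mul_div_cancel₀ 3 hc.ne']; norm_num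
  have h₀ := contDiff_loopCoord₀ p₀ p₂ r
  have h₁ := contDiff_loopCoord₁ p₁ r
  have h₂ := contDiff_loopCoord₂ p₂ r
  have hper₀ := periodic_loopCoord₀ p₀ p₂ r
  have hper₁ := periodic_loopCoord₁ p₁ r
  have hper₂ := periodic_loopCoord₂ p₂ r
  have hd₀ := h₀.differentiable one_ne_zero
  have hd₁ := h₁.differentiable one_ne_zero
  have hd₂ := h₂.differentiable one_ne_zero
  refine ⟨0, 2 * π, two_pi_pos, loopCoord₀ p₀ p₂ r, loopCoord₁ p₁ r, loopCoord₂ p₂ r,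
    h₀.contDiffOn, h₁.contDiffOn, h₂.contDiffOn,
    timelikeOn_Icc_of_deriv two_pi_pos hd₀ hd₁ hd₂ fun t _ ↦ timelike_loopCoord p₀ p₁ p₂ r hcr t,
    ?_, ?_, ?_, ?_, ?_, ?_, ?_, ?_, ?_⟩
  · simp [loopCoord₀]
  · simp [loopCoord₁]
  · simp [loopCoord₂]
  · exact hper₀.eq.trans (by simp [loopCoord₀])
  · exact hper₁.eq.trans (by simp [loopCoord₁])
  · exact hper₂.eq.trans (by simp [loopCoord₂])
  · exact Periodic.derivWithin_Icc_left_eq_right two_pi_pos (by rwa [sub_zero]) hd₀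
  · exact Periodic.derivWithin_Icc_left_eq_right two_pi_pos (by rwa [sub_zero]) hd₁
  · exact Periodic.derivWithin_Icc_left_eq_right two_pi_pos (by rwa [sub_zero]) hd₂
end

section
/- Let c > 0, a < b, and let w : [a,b] → ℝ³ be a C¹ path which is g^c₃-timelike. Then there exist a₀ < a, b₀ > b, real numbers p_a, p_b, a sign ν ∈ {1,−1}, and a C¹ extension W : [a₀,b₀] → ℝ³ of w which is g^c₃-timelike on all of [a₀,b₀] and satisfies W(a₀) = (p_a, 0, 0), W(b₀) = (p_b, 0, 0), and W'(a₀) = W'(b₀) = ν·(1/c², 0, 0). -/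
open Set

lemma glue_s11 {a b α β : ℝ} (hαa : α < a) (hab : a < b) (hbβ : b < β)
    {L w R L' R' : ℝ → ℝ}
    (hL : ∀ t, HasDerivAt L (L' t) t) (hL'c : Continuous L')
    (hR : ∀ t, HasDerivAt R (R' t) t) (hR'c : Continuous R')
    (hw : ContDiffOn ℝ 1 w (Icc a b))
    (hLa : L a = w a) (hRb : R b = w b)
    (hL'a : L' a = derivWithin w (Icc a b) a) (hR'b : R' b = derivWithin w (Icc a b) b) :
    ContDiffOn ℝ 1 (fun t => if t ≤ a then L t else if t ≤ b then w t else R t) (Icc α β) ∧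
    (∀ t ∈ Icc a b, (fun t => if t ≤ a then L t else if t ≤ b then w t else R t) t = w t) ∧
    (∀ t ∈ Icc α β, derivWithin (fun t => if t ≤ a then L t else if t ≤ b then w t else R t) (Icc α β) t
      = (fun t => if t ≤ a then L' t else if t ≤ b then derivWithin w (Icc a b) t else R' t) t) := by
  set W : ℝ → ℝ := fun t => if t ≤ a then L t else if t ≤ b then w t else R t with hW
  set D : ℝ → ℝ := fun t => if t ≤ a then L' t else if t ≤ b then derivWithin w (Icc a b) t else R' t with hD
  have hαβ : α < β := hαa.trans (hab.trans hbβ)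
  have udo := uniqueDiffOn_Icc hαβ
  have udab := uniqueDiffOn_Icc hab
  have hWL : ∀ t ∈ Iic a, W t = L t := fun t ht => if_pos ht
  have hWw : ∀ t ∈ Icc a b, W t = w t := by
    intro t ht
    rcases eq_or_lt_of_le ht.1 with h | h
    · simp [W, ← h, hLa]
    · simp [W, not_le.2 h, ht.2]
  have hWR : ∀ t ∈ Ici b, W t = R t := by
    intro t ht
    rcases eq_or_lt_of_le (mem_Ici.1 ht) with h | h
    · simp [W, ← h, not_le.2 hab, hRb]
    · simp [W, not_le.2 (hab.trans h), not_le.2 h]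
  have hDL : ∀ t ∈ Iic a, D t = L' t := fun t ht => if_pos ht
  have hDw : ∀ t ∈ Icc a b, D t = derivWithin w (Icc a b) t := by
    intro t ht
    rcases eq_or_lt_of_le ht.1 with h | h
    · simp [D, ← h, hL'a]
    · simp [D, not_le.2 h, ht.2]
  have hDR : ∀ t ∈ Ici b, D t = R' t := by
    intro t ht
    rcases eq_or_lt_of_le (mem_Ici.1 ht) with h | h
    · simp [D, ← h, not_le.2 hab, hR'b]
    · simp [D, not_le.2 (hab.trans h), not_le.2 h]
  have hwd : ∀ t ∈ Icc a b, HasDerivWithinAt w (derivWithin w (Icc a b) t) (Icc a b) t := by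
    intro t ht
    exact ((hw.differentiableOn one_ne_zero) t ht).hasDerivWithinAt
  -- derivative at every point
  have hAt : ∀ t ∈ Icc α β, HasDerivWithinAt W (D t) (Icc α β) t := by
    intro t ht
    rcases lt_trichotomy t a with h | h | h
    · rw [hDL t h.le]
      refine ((hL t).congr_of_eventuallyEq ?_).hasDerivWithinAt
      filter_upwards [Iio_mem_nhds h] with y hy using hWL y (mem_Iic.2 hy.le)
    · subst h
      have h1 : HasDerivWithinAt W (L' t) (Iic t) t :=
        ((hL t).hasDerivWithinAt).congr (fun y hy => hWL y hy) (hWL t (mem_Iic.2 le_rfl))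
      have h2 : HasDerivWithinAt W (L' t) (Icc t b) t := by
        rw [hL'a]
        exact (hwd t ⟨le_rfl, hab.le⟩).congr (fun y hy => hWw y hy) (hWw t ⟨le_rfl, hab.le⟩)
      rw [hDL t (mem_Iic.2 le_rfl)]
      refine (h1.union h2).mono_of_mem_nhdsWithin ?_
      rw [Iic_union_Icc_eq_Iic hab.le]
      exact mem_nhdsWithin_of_mem_nhds (Iic_mem_nhds hab)
    · rcases lt_trichotomy t b with h' | h' | h'
      · have htm : Icc a b ∈ nhds t := Icc_mem_nhds h h'
        have hdw : HasDerivAt w (derivWithin w (Icc a b) t) t := by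
          rw [derivWithin_of_mem_nhds htm]
          exact ((hw.differentiableOn one_ne_zero).differentiableAt htm).hasDerivAt
        rw [hDw t ⟨h.le, h'.le⟩]
        refine (hdw.congr_of_eventuallyEq ?_).hasDerivWithinAt
        filter_upwards [Ioo_mem_nhds h h'] with y hy using hWw y ⟨hy.1.le, hy.2.le⟩
      · subst h'
        have h1 : HasDerivWithinAt W (R' t) (Icc a t) t := by
          rw [hR'b]
          exact (hwd t ⟨hab.le, le_rfl⟩).congr (fun y hy => hWw y hy) (hWw t ⟨hab.le, le_rfl⟩)
        have h2 : HasDerivWithinAt W (R' t) (Ici t) t :=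
          ((hR t).hasDerivWithinAt).congr (fun y hy => hWR y hy) (hWR t (mem_Ici.2 le_rfl))
        rw [hDR t (mem_Ici.2 le_rfl)]
        refine (h1.union h2).mono_of_mem_nhdsWithin ?_
        rw [Icc_union_Ici_eq_Ici hab.le]
        exact mem_nhdsWithin_of_mem_nhds (Ici_mem_nhds hab)
      · rw [hDR t h'.le]
        refine ((hR t).congr_of_eventuallyEq ?_).hasDerivWithinAt
        filter_upwards [Ioi_mem_nhds h'] with y hy using hWR y (mem_Ici.2 hy.le)
  have hdWD : ∀ t ∈ Icc α β, derivWithin W (Icc α β) t = D t :=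
    fun t ht => (hAt t ht).derivWithin (udo t ht)
  -- continuity of D
  have hdwc : ContinuousOn (derivWithin w (Icc a b)) (Icc a b) :=
    hw.continuousOn_derivWithin udab le_rfl
  have hDc : ContinuousOn D (Icc α β) := by
    intro t ht
    rcases lt_trichotomy t a with h | h | h
    · refine (hL'c.continuousAt.congr ?_).continuousWithinAt
      filter_upwards [Iio_mem_nhds h] with y hy using (hDL y (mem_Iic.2 hy.le)).symm
    · subst h
      have h1 : ContinuousWithinAt D (Iic t) t :=
        (hL'c.continuousAt.continuousWithinAt).congr (fun y hy => hDL y hy) (hDL t (mem_Iic.2 le_rfl))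
      have h2 : ContinuousWithinAt D (Icc t b) t :=
        ((hdwc t ⟨le_rfl, hab.le⟩).congr (fun y hy => hDw y hy) (hDw t ⟨le_rfl, hab.le⟩))
      refine (h1.union h2).mono_of_mem_nhdsWithin ?_
      rw [Iic_union_Icc_eq_Iic hab.le]
      exact mem_nhdsWithin_of_mem_nhds (Iic_mem_nhds hab)
    · rcases lt_trichotomy t b with h' | h' | h' 
      · have htm : Icc a b ∈ nhdsWithin t (Icc α β) :=
          mem_nhdsWithin_of_mem_nhds (Icc_mem_nhds h h')
        refine ((hdwc t ⟨h.le, h'.le⟩).mono_of_mem_nhdsWithin htm).congr_of_eventuallyEq ?_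
          (hDw t ⟨h.le, h'.le⟩)
        exact Filter.eventuallyEq_of_mem htm (fun y hy => hDw y hy)
      · subst h'
        have h1 : ContinuousWithinAt D (Icc a t) t :=
          ((hdwc t ⟨hab.le, le_rfl⟩).congr (fun y hy => hDw y hy) (hDw t ⟨hab.le, le_rfl⟩))
        have h2 : ContinuousWithinAt D (Ici t) t :=
          (hR'c.continuousAt.continuousWithinAt).congr (fun y hy => hDR y hy) (hDR t (mem_Ici.2 le_rfl))
        refine (h1.union h2).mono_of_mem_nhdsWithin ?_
        rw [Icc_union_Ici_eq_Ici hab.le]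
        exact mem_nhdsWithin_of_mem_nhds (Ici_mem_nhds hab)
      · refine (hR'c.continuousAt.congr ?_).continuousWithinAt
        filter_upwards [Ioi_mem_nhds h'] with y hy using (hDR y (mem_Ici.2 hy.le)).symm
  -- C¹
  have hCD : ContDiffOn ℝ 1 W (Icc α β) := by
    have h01 : (1 : WithTop ℕ∞) = 0 + 1 := by norm_num
    rw [h01, contDiffOn_succ_iff_derivWithin udo]
    refine ⟨fun t ht => (hAt t ht).differentiableWithinAt, ?_, ?_⟩
    · simp
    · rw [contDiffOn_zero]
      exact hDc.congr hdWD
  exact ⟨hCD, hWw, hdWD⟩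

noncomputable def hp (A B s : ℝ) : ℝ := A*(3*s^2-2*s^3) + B*(s^3-s^2)
noncomputable def hp' (A B s : ℝ) : ℝ := A*(6*s-6*s^2) + B*(3*s^2-2*s)

lemma hp_deriv (A B s : ℝ) : HasDerivAt (hp A B) (hp' A B s) s := by
  have h2 : HasDerivAt (fun s:ℝ => s^2) (2*s) s := by simpa using hasDerivAt_pow 2 s
  have h3 : HasDerivAt (fun s:ℝ => s^3) (3*s^2) s := by simpa using hasDerivAt_pow 3 s
  have := (((h2.const_mul 3).sub (h3.const_mul 2)).const_mul A).add
    (((h3).sub h2).const_mul B)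
  show HasDerivAt (fun s => A*(3*s^2-2*s^3) + B*(s^3-s^2)) (hp' A B s) s
  exact this.congr_deriv (by unfold hp'; ring)

lemma hp_cont (A B : ℝ) : Continuous (hp' A B) := by
  unfold hp'; continuity

set_option maxHeartbeats 1000000 in
lemma piece (c ν ε j A₁ A₂ d₀ d₁ d₂ v₀ : ℝ) (hc : 0 < c)
    (hν : ν = 1 ∨ ν = -1) (hε : ε = 1 ∨ ε = -1)
    (hsign : 0 < ν * (d₀ + A₂ * d₁))
    (hj : d₁^2 + d₂^2 < c^2 * (d₀ + A₂*d₁)^2) :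
    ∃ P₀ P₁ P₂ P₀' P₁' P₂' : ℝ → ℝ,
      (∀ t, HasDerivAt P₀ (P₀' t) t) ∧ (∀ t, HasDerivAt P₁ (P₁' t) t) ∧
      (∀ t, HasDerivAt P₂ (P₂' t) t) ∧
      Continuous P₀' ∧ Continuous P₁' ∧ Continuous P₂' ∧
      P₀ j = v₀ ∧ P₁ j = A₁ ∧ P₂ j = A₂ ∧
      P₀' j = d₀ ∧ P₁' j = d₁ ∧ P₂' j = d₂ ∧
      P₁ (j-ε) = 0 ∧ P₂ (j-ε) = 0 ∧
      P₀' (j-ε) = ν * (1/c^2) ∧ P₁' (j-ε) = 0 ∧ P₂' (j-ε) = 0 ∧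
      (∀ t, 0 ≤ ε*(t-j)+1 → ε*(t-j)+1 ≤ 1 →
        (P₁' t)^2 + (P₂' t)^2 < c^2 * (P₀' t + P₂ t * P₁' t)^2) := by
  set q : ℝ := d₀ + A₂ * d₁ with hq
  have hε2 : ε^2 = 1 := by rcases hε with h | h <;> simp [h]
  have hν2 : ν^2 = 1 := by rcases hν with h | h <;> simp [h]
  have hc2 : (0:ℝ) < c^2 := by positivity
  have hd2pos : 0 < q^2 - (d₁^2 + d₂^2)/c^2 := by
    rw [sub_pos, div_lt_iff₀ hc2]
    linarith [hj]
  set d : ℝ := Real.sqrt (q^2 - (d₁^2 + d₂^2)/c^2) with hdd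
  have hdpos : 0 < d := Real.sqrt_pos.2 hd2pos
  have hdsq : d^2 = q^2 - (d₁^2 + d₂^2)/c^2 := Real.sq_sqrt hd2pos.le
  -- the reparametrisation
  set σ : ℝ → ℝ := fun t => ε*(t-j)+1 with hσ
  have hσd : ∀ t, HasDerivAt σ ε t := by
    intro t
    simpa [σ] using (((hasDerivAt_id t).sub_const j).const_mul ε).add_const 1
  have hσj : σ j = 1 := by simp [σ]
  have hσe : σ (j-ε) = 0 := by
    simp only [σ]; linear_combination -hε2
  have hσc : Continuous σ := by unfold σ; continuity
  set P₁ : ℝ → ℝ := fun t => hp A₁ (ε*d₁) (σ t) with hP₁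
  set P₁' : ℝ → ℝ := fun t => ε * hp' A₁ (ε*d₁) (σ t) with hP₁'
  set P₂ : ℝ → ℝ := fun t => hp A₂ (ε*d₂) (σ t) with hP₂
  set P₂' : ℝ → ℝ := fun t => ε * hp' A₂ (ε*d₂) (σ t) with hP₂'
  set F : ℝ → ℝ := fun t => (P₁' t)^2 + (P₂' t)^2 with hF
  set G : ℝ → ℝ := fun t => (1 - σ t)/c^2 + σ t * d with hG
  set QL : ℝ → ℝ := fun t => ν * Real.sqrt (F t/c^2 + (G t)^2) with hQL
  set P₀' : ℝ → ℝ := fun t => QL t - P₂ t * P₁' t with hP₀'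
  set P₀ : ℝ → ℝ := fun t => v₀ + ∫ u in j..t, P₀' u with hP₀
  have hP₁d : ∀ t, HasDerivAt P₁ (P₁' t) t := by
    intro t
    have := (hp_deriv A₁ (ε*d₁) (σ t)).comp t (hσd t)
    simpa [hP₁, hP₁', Function.comp_def, mul_comm] using this
  have hP₂d : ∀ t, HasDerivAt P₂ (P₂' t) t := by
    intro t
    have := (hp_deriv A₂ (ε*d₂) (σ t)).comp t (hσd t)
    simpa [hP₂, hP₂', Function.comp_def, mul_comm] using this
  have hP₁'c : Continuous P₁' := (continuous_const.mul ((hp_cont _ _).comp hσc))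
  have hP₂'c : Continuous P₂' := (continuous_const.mul ((hp_cont _ _).comp hσc))
  have hP₁c : Continuous P₁ := continuous_iff_continuousAt.2 fun t => (hP₁d t).continuousAt
  have hP₂c : Continuous P₂ := continuous_iff_continuousAt.2 fun t => (hP₂d t).continuousAt
  have hFc : Continuous F := (hP₁'c.pow 2).add (hP₂'c.pow 2)
  have hGc : Continuous G := ((continuous_const.sub hσc).div_const _).add (hσc.mul continuous_const)
  have hQLc : Continuous QL :=
    continuous_const.mul (Real.continuous_sqrt.comp ((hFc.div_const _).add (hGc.pow 2)))
  have hP₀'c : Continuous P₀' := hQLc.sub (hP₂c.mul hP₁'c)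
  have hP₀d : ∀ t, HasDerivAt P₀ (P₀' t) t := fun t =>
    ((hP₀'c.integral_hasStrictDerivAt j t).hasDerivAt).const_add v₀
  -- values of hp
  have hp0 : ∀ A B : ℝ, hp A B 0 = 0 := by intro A B; unfold hp; norm_num
  have hp1 : ∀ A B : ℝ, hp A B 1 = A := by intro A B; unfold hp; ring
  have hp'0 : ∀ A B : ℝ, hp' A B 0 = 0 := by intro A B; unfold hp'; norm_num
  have hp'1 : ∀ A B : ℝ, hp' A B 1 = B := by intro A B; unfold hp'; ring
  -- junction values
  have hP₁j : P₁ j = A₁ := by rw [hP₁]; simp only; rw [hσj, hp1]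
  have hP₂j : P₂ j = A₂ := by rw [hP₂]; simp only; rw [hσj, hp1]
  have hP₁'j : P₁' j = d₁ := by
    rw [hP₁']; simp only; rw [hσj, hp'1]; linear_combination d₁*hε2
  have hP₂'j : P₂' j = d₂ := by
    rw [hP₂']; simp only; rw [hσj, hp'1]; linear_combination d₂*hε2
  have hP₁e : P₁ (j-ε) = 0 := by rw [hP₁]; simp only; rw [hσe, hp0]
  have hP₂e : P₂ (j-ε) = 0 := by rw [hP₂]; simp only; rw [hσe, hp0]
  have hP₁'e : P₁' (j-ε) = 0 := by rw [hP₁']; simp only; rw [hσe, hp'0, mul_zero]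
  have hP₂'e : P₂' (j-ε) = 0 := by rw [hP₂']; simp only; rw [hσe, hp'0, mul_zero]
  have hQLj : QL j = q := by
    have hFj : F j = d₁^2 + d₂^2 := by rw [hF]; simp only; rw [hP₁'j, hP₂'j]
    have hGj : G j = d := by rw [hG]; simp only; rw [hσj]; ring
    have harg : F j / c^2 + (G j)^2 = q^2 := by
      rw [hFj, hGj, hdsq]; ring
    rw [hQL]; simp only; rw [harg, Real.sqrt_sq_eq_abs]
    rcases hν with h | h
    · rw [h] at hsign ⊢
      rw [one_mul] at hsign ⊢
      exact abs_of_pos hsign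
    · rw [h] at hsign ⊢
      have hqneg : q < 0 := by linarith
      rw [abs_of_neg hqneg]; ring
  have hP₀'j : P₀' j = d₀ := by
    rw [hP₀']; simp only; rw [hQLj, hP₂j, hP₁'j, hq]; ring
  have hP₀j : P₀ j = v₀ := by
    rw [hP₀]; simp only; rw [intervalIntegral.integral_same, add_zero]
  have hQLe : QL (j-ε) = ν * (1/c^2) := by
    have hFe : F (j-ε) = 0 := by rw [hF]; simp only; rw [hP₁'e, hP₂'e]; ring
    have hGe : G (j-ε) = 1/c^2 := by rw [hG]; simp only; rw [hσe]; ring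
    rw [hQL]; simp only; rw [hFe, hGe]
    rw [zero_div, zero_add, Real.sqrt_sq (by positivity)]
  have hP₀'e : P₀' (j-ε) = ν * (1/c^2) := by
    rw [hP₀']; simp only; rw [hQLe, hP₂e]; ring
  -- timelike inequality
  have htime : ∀ t, 0 ≤ ε*(t-j)+1 → ε*(t-j)+1 ≤ 1 →
      (P₁' t)^2 + (P₂' t)^2 < c^2 * (P₀' t + P₂ t * P₁' t)^2 := by
    intro t hs0 hs1
    have hσt0 : 0 ≤ σ t := hs0
    have hσt1 : σ t ≤ 1 := hs1
    have hFt : 0 ≤ F t := by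
      rw [hF]; simp only; positivity
    have hFF : F t = (P₁' t)^2 + (P₂' t)^2 := by rw [hF]
    have hsum : P₀' t + P₂ t * P₁' t = QL t := by rw [hP₀']; ring
    have hGG : G t = (1 - σ t)*(1/c^2) + σ t * d := by rw [hG]; simp only; ring
    have hQQ : QL t = ν * Real.sqrt (F t/c^2 + (G t)^2) := by rw [hQL]
    clear_value P₀ P₀' QL G F P₂' P₂ P₁' P₁ σ d q
    have hinv : (0:ℝ) < 1/c^2 := by positivity
    have hGt : 0 < G t := by
      rw [hGG]
      rcases le_or_gt (σ t) (1/2) with h | h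
      · have h1 : (0:ℝ) < 1 - σ t := by linarith
        linarith [mul_pos h1 hinv, mul_nonneg hσt0 hdpos.le]
      · have h2 : (0:ℝ) < σ t := by linarith
        linarith [mul_pos h2 hdpos, mul_nonneg (by linarith : (0:ℝ) ≤ 1 - σ t) hinv.le]
    have hX : 0 ≤ F t/c^2 + (G t)^2 := add_nonneg (div_nonneg hFt hc2.le) (sq_nonneg _)
    have hsq : (QL t)^2 = F t/c^2 + (G t)^2 := by
      rw [hQQ, mul_pow, hν2, one_mul, Real.sq_sqrt hX]
    have hc0 : c ≠ 0 := ne_of_gt hc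
    have hkey : c^2 * (QL t)^2 = F t + c^2 * (G t)^2 := by
      rw [hsq]; field_simp
    have hGsq : 0 < c^2 * (G t)^2 := mul_pos hc2 (pow_pos hGt 2)
    rw [hsum, ← hFF, hkey]
    linarith
  exact ⟨P₀, P₁, P₂, P₀', P₁', P₂', hP₀d, hP₁d, hP₂d, hP₀'c, hP₁'c, hP₂'c,
    hP₀j, hP₁j, hP₂j, hP₀'j, hP₁'j, hP₂'j, hP₁e, hP₂e, hP₀'e, hP₁'e, hP₂'e, htime⟩

/-- every timelike path of `g^c₃` extends to a timelike path whose
endpoints lie on the `x₀`-axis with derivative `ν·(1/c², 0, 0)` there. -/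
theorem stmt_11 (c a b : ℝ) (hc : 0 < c) (hab : a < b) (w₀ w₁ w₂ : ℝ → ℝ)
    (hw₀ : ContDiffOn ℝ 1 w₀ (Icc a b))
    (hw₁ : ContDiffOn ℝ 1 w₁ (Icc a b))
    (hw₂ : ContDiffOn ℝ 1 w₂ (Icc a b))
    (htl : TimelikeOn c w₀ w₁ w₂ (Icc a b)) :
    ∃ a₀ < a, ∃ b₀ > b, ∃ pa pb ν : ℝ, (ν = 1 ∨ ν = -1) ∧
      ∃ W₀ W₁ W₂ : ℝ → ℝ,
        ContDiffOn ℝ 1 W₀ (Icc a₀ b₀) ∧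
        ContDiffOn ℝ 1 W₁ (Icc a₀ b₀) ∧
        ContDiffOn ℝ 1 W₂ (Icc a₀ b₀) ∧
        (∀ t ∈ Icc a b, W₀ t = w₀ t ∧ W₁ t = w₁ t ∧ W₂ t = w₂ t) ∧
        TimelikeOn c W₀ W₁ W₂ (Icc a₀ b₀) ∧
        W₀ a₀ = pa ∧ W₁ a₀ = 0 ∧ W₂ a₀ = 0 ∧
        W₀ b₀ = pb ∧ W₁ b₀ = 0 ∧ W₂ b₀ = 0 ∧
        derivWithin W₀ (Icc a₀ b₀) a₀ = ν * (1 / c^2) ∧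
        derivWithin W₁ (Icc a₀ b₀) a₀ = 0 ∧
        derivWithin W₂ (Icc a₀ b₀) a₀ = 0 ∧
        derivWithin W₀ (Icc a₀ b₀) b₀ = ν * (1 / c^2) ∧
        derivWithin W₁ (Icc a₀ b₀) b₀ = 0 ∧
        derivWithin W₂ (Icc a₀ b₀) b₀ = 0 := by
  have udab := uniqueDiffOn_Icc hab
  set dw₀ := derivWithin w₀ (Icc a b) with hdw₀
  set dw₁ := derivWithin w₁ (Icc a b) with hdw₁
  set dw₂ := derivWithin w₂ (Icc a b) with hdw₂
  set q : ℝ → ℝ := fun t => dw₀ t + w₂ t * dw₁ t with hqdef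
  have hqc : ContinuousOn q (Icc a b) :=
    (hw₀.continuousOn_derivWithin udab le_rfl).add
      ((hw₂.continuousOn).mul (hw₁.continuousOn_derivWithin udab le_rfl))
  have hma : a ∈ Icc a b := ⟨le_rfl, hab.le⟩
  have hmb : b ∈ Icc a b := ⟨hab.le, le_rfl⟩
  have hqne : ∀ t ∈ Icc a b, q t ≠ 0 := by
    intro t ht h
    have h2 := htl t ht
    rw [← hdw₀, ← hdw₁, ← hdw₂] at h2
    have : c^2 * (q t)^2 = 0 := by rw [h]; ring
    rw [hqdef] at this
    simp only at this h2
    nlinarith [sq_nonneg (dw₁ t), sq_nonneg (dw₂ t)]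
  set ν : ℝ := if 0 < q a then 1 else -1 with hνdef
  have hν : ν = 1 ∨ ν = -1 := by
    rw [hνdef]; split <;> simp
  have hνa : 0 < ν * q a := by
    rw [hνdef]; split
    · simpa using ‹0 < q a›
    · rcases (hqne a hma).lt_or_gt with h | h
      · nlinarith
      · exact absurd h ‹¬ 0 < q a›
  have hsq : ∀ t ∈ Icc a b, 0 < ν * q t := by
    intro t ht
    have hν0 : ν ≠ 0 := by rcases hν with h|h <;> rw [h] <;> norm_num
    rcases (mul_ne_zero hν0 (hqne t ht)).lt_or_gt with h | h
    swap
    · exact h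
    · exfalso
      have hcont : ContinuousOn (fun u => ν * q u) (Icc a t) :=
        (continuousOn_const.mul hqc).mono (Icc_subset_Icc le_rfl ht.2)
      have h0 : (0:ℝ) ∈ Icc (ν * q t) (ν * q a) := ⟨h.le, hνa.le⟩
      have := intermediate_value_Icc' ht.1 hcont h0
      obtain ⟨u, hu, hu0⟩ := this
      have hu0' : ν * q u = 0 := hu0
      have : q u = 0 := (mul_eq_zero.1 hu0').resolve_left hν0
      exact hqne u ⟨hu.1, hu.2.trans ht.2⟩ this
  -- data at the two junctions
  have hja : dw₁ a ^2 + dw₂ a ^2 < c^2 * (dw₀ a + w₂ a * dw₁ a)^2 := htl a hma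
  have hjb : dw₁ b ^2 + dw₂ b ^2 < c^2 * (dw₀ b + w₂ b * dw₁ b)^2 := htl b hmb
  obtain ⟨L₀, L₁, L₂, L₀', L₁', L₂', hL₀d, hL₁d, hL₂d, hL₀'c, hL₁'c, hL₂'c,
      hL₀a, hL₁a, hL₂a, hL₀'a, hL₁'a, hL₂'a, hL₁e, hL₂e, hL₀'e, hL₁'e, hL₂'e, hLtime⟩ :=
    piece c ν 1 a (w₁ a) (w₂ a) (dw₀ a) (dw₁ a) (dw₂ a) (w₀ a) hc hν (Or.inl rfl)
      (hsq a hma) hja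
  obtain ⟨R₀, R₁, R₂, R₀', R₁', R₂', hR₀d, hR₁d, hR₂d, hR₀'c, hR₁'c, hR₂'c,
      hR₀b, hR₁b, hR₂b, hR₀'b, hR₁'b, hR₂'b, hR₁e, hR₂e, hR₀'e, hR₁'e, hR₂'e, hRtime⟩ :=
    piece c ν (-1) b (w₁ b) (w₂ b) (dw₀ b) (dw₁ b) (dw₂ b) (w₀ b) hc hν (Or.inr rfl)
      (hsq b hmb) hjb
  have hbb : b - (-1 : ℝ) = b + 1 := by ring
  rw [hbb] at hR₁e hR₂e hR₀'e hR₁'e hR₂'e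
  have haa : a - (1:ℝ) = a - 1 := rfl
  have hαa : a - 1 < a := by linarith
  have hbβ : b < b + 1 := by linarith
  obtain ⟨hCD₀, hWw₀, hdWD₀⟩ := glue_s11 (α := a-1) (β := b+1) hαa hab hbβ
    hL₀d hL₀'c hR₀d hR₀'c hw₀ hL₀a hR₀b hL₀'a hR₀'b
  obtain ⟨hCD₁, hWw₁, hdWD₁⟩ := glue_s11 (α := a-1) (β := b+1) hαa hab hbβ
    hL₁d hL₁'c hR₁d hR₁'c hw₁ hL₁a hR₁b hL₁'a hR₁'b
  obtain ⟨hCD₂, hWw₂, hdWD₂⟩ := glue_s11 (α := a-1) (β := b+1) hαa hab hbβ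
    hL₂d hL₂'c hR₂d hR₂'c hw₂ hL₂a hR₂b hL₂'a hR₂'b
  have hmα : a - 1 ∈ Icc (a-1) (b+1) := ⟨le_rfl, by linarith⟩
  have hmβ : b + 1 ∈ Icc (a-1) (b+1) := ⟨by linarith, le_rfl⟩
  have hα1 : (a - 1 ≤ a) := by linarith
  have hβ1 : ¬ (b + 1 ≤ a) := by linarith
  have hβ2 : ¬ (b + 1 ≤ b) := by linarith
  refine ⟨a - 1, hαa, b + 1, hbβ, L₀ (a-1), R₀ (b+1), ν, hν, _, _, _,
    hCD₀, hCD₁, hCD₂, ?_, ?_, ?_, ?_, ?_, ?_, ?_, ?_, ?_, ?_, ?_, ?_, ?_, ?_⟩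
  · exact fun t ht => ⟨hWw₀ t ht, hWw₁ t ht, hWw₂ t ht⟩
  · -- timelike
    intro t ht
    rw [hdWD₀ t ht, hdWD₁ t ht, hdWD₂ t ht]
    simp only
    by_cases h1 : t ≤ a
    · rw [if_pos h1, if_pos h1, if_pos h1, if_pos h1]
      exact hLtime t (by simpa using by linarith [ht.1] : 0 ≤ 1*(t-a)+1) (by linarith)
    · rw [if_neg h1, if_neg h1, if_neg h1, if_neg h1]
      by_cases h2 : t ≤ b
      · rw [if_pos h2, if_pos h2, if_pos h2, if_pos h2]
        exact htl t ⟨(not_le.1 h1).le, h2⟩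
      · rw [if_neg h2, if_neg h2, if_neg h2, if_neg h2]
        refine hRtime t ?_ ?_
        · simp only [neg_one_mul]; linarith [ht.2]
        · simp only [neg_one_mul]; linarith [not_le.1 h2]
  · simp only [if_pos hα1]
  · simp only [if_pos hα1]; exact hL₁e
  · simp only [if_pos hα1]; exact hL₂e
  · simp only [if_neg hβ1, if_neg hβ2]
  · simp only [if_neg hβ1, if_neg hβ2]; exact hR₁e
  · simp only [if_neg hβ1, if_neg hβ2]; exact hR₂e
  · rw [hdWD₀ _ hmα]; simp only [if_pos hα1]; exact hL₀'e
  · rw [hdWD₁ _ hmα]; simp only [if_pos hα1]; exact hL₁'e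
  · rw [hdWD₂ _ hmα]; simp only [if_pos hα1]; exact hL₂'e
  · rw [hdWD₀ _ hmβ]; simp only [if_neg hβ1, if_neg hβ2]; exact hR₀'e
  · rw [hdWD₁ _ hmβ]; simp only [if_neg hβ1, if_neg hβ2]; exact hR₁'e
  · rw [hdWD₂ _ hmβ]; simp only [if_neg hβ1, if_neg hβ2]; exact hR₂'e
end

section
/- Semi-dominant energy inequality for g^cₙ: let m ∈ ℕ, c > 0, and Λ ∈ ℝ with c² ≥ 4·Λ. Then for all v₀, v₁, v₂ ∈ ℝ and v̂ ∈ ℝᵐ with v₀² ≥ v₁² + v₂² + ‖v̂‖², one has ((3/4)·c² − Λ)²·v₀² ≥ ((1/4)·c² + Λ)²·(v₁² + v₂²) + ((1/4)·c² − Λ)²·‖v̂‖². -/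
/-! With `ρ = (3/4)c² − Λ`, `p = (1/4)c² + Λ` and `q = (1/4)c² − Λ`, the hypothesis `c² ≥ 4Λ`
gives `|p| ≤ ρ` and `|q| ≤ ρ`, so the inequality reduces to `ρ²(v₁² + v₂² + ‖v̂‖²) ≤ ρ²v₀²`. -/

lemma mul_add_mul_le_mul_of_le {α β γ x y t : ℝ} (hβ : β ≤ α) (hγ : γ ≤ α)
    (hx : 0 ≤ x) (hy : 0 ≤ y) (hα : 0 ≤ α) (ht : x + y ≤ t) :
    β * x + γ * y ≤ α * t :=
  calc β * x + γ * y ≤ α * x + α * y := by gcongr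
    _ = α * (x + y) := by ring
    _ ≤ α * t := by gcongr

theorem stmt_13_general (m : ℕ) (c Λ : ℝ) (hΛ : c^2 ≥ 4 * Λ)
    (v₀ v₁ v₂ : ℝ) (vh : EuclideanSpace ℝ (Fin m))
    (htl : v₀^2 ≥ v₁^2 + v₂^2 + ‖vh‖^2) :
    (3/4 * c^2 - Λ)^2 * v₀^2 ≥
      (1/4 * c^2 + Λ)^2 * (v₁^2 + v₂^2) + (1/4 * c^2 - Λ)^2 * ‖vh‖^2 := by
  have hc : 0 ≤ c ^ 2 := sq_nonneg c
  have hp : (1/4 * c^2 + Λ)^2 ≤ (3/4 * c^2 - Λ)^2 := sq_le_sq' (by linarith) (by linarith)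
  have hq : (1/4 * c^2 - Λ)^2 ≤ (3/4 * c^2 - Λ)^2 := sq_le_sq' (by linarith) (by linarith)
  exact mul_add_mul_le_mul_of_le hp hq (by positivity) (by positivity) (sq_nonneg _) htl

/-- semi-dominant energy inequality for `g^cₙ`. In the orthonormal
frame `(e₀,…,e_{n−1})`, the energy-momentum tensor of `g^cₙ` is
`diag((3/4)c² − Λ, (1/4)c² + Λ, (1/4)c² + Λ, 0, …, 0)`; this inequality says that
`−♯T(v,·)` is causal for every timelike `v = v₀e₀+v₁e₁+v₂e₂+v̂` when `c² ≥ 4Λ`. -/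
theorem stmt_13 (m : ℕ) (c Λ : ℝ) (hc : 0 < c) (hΛ : c^2 ≥ 4 * Λ)
    (v₀ v₁ v₂ : ℝ) (vh : EuclideanSpace ℝ (Fin m))
    (htl : v₀^2 ≥ v₁^2 + v₂^2 + ‖vh‖^2) :
    (3/4 * c^2 - Λ)^2 * v₀^2 ≥
      (1/4 * c^2 + Λ)^2 * (v₁^2 + v₂^2) + (1/4 * c^2 - Λ)^2 * ‖vh‖^2 :=
  stmt_13_general m c Λ hΛ v₀ v₁ v₂ vh htl
end

section
/- Cauchy estimate for graphs of leaves: let p, q ≥ 1, let B ⊆ ℝᵖ be the closed ball of radius r_B > 0 centered at 0, let J ⊆ ℝ^q be a closed ball centered at 0, let C > 0 with r_B·C < 1, and let λ, μ, ν : B × J → (ℝᵖ →L[ℝ] ℝ^q) be continuous maps (with the operator norm on continuous linear maps), where λ is C-Lipschitz with respect to the Euclidean distance on B × J. Let t ∈ J, and let f, g : B → J be differentiable maps with f(0) = g(0) = t such that for all z ∈ B the derivative of f at z equals μ(z, f(z)) and the derivative of g at z equals ν(z, g(z)). Then for all z ∈ B: ‖f(z) − g(z)‖ ≤ (r_B/(1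 − r_B·C))·(sup_{B×J}‖μ − λ‖ + sup_{B×J}‖ν − λ‖). -/
/-!
Let `S` be the supremum of `‖f - g‖` over `B`. At every point of `B` the derivatives of `f`
and `g` differ by at most `M + N + C * S`, where `M`, `N` are the two suprema of the statement:
pass from `μ` to `λ` at `(z, f z)`, move along the fibre to `(z, g z)` at Lipschitz cost
`C * ‖f z - g z‖`, and pass back to `ν`. Since `f 0 = g 0`, the mean value theorem gives
`S ≤ r_B (M + N + C S)`, and `r_B C < 1` lets one absorb the `S` on the right.
-/

open Metric Set

lemma le_div_mul_of_le_mul_add_mul_self {S A r C : ℝ} (hS : S ≤ r * (A + C * S))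
    (hrC : r * C < 1) : S ≤ r / (1 - r * C) * A := by
  rw [div_mul_eq_mul_div, le_div_iff₀ (by linarith)]
  linarith

theorem Convex.norm_sub_le_of_norm_hasFDerivWithin_sub_le_add_mul
    {E F : Type*} [NormedAddCommGroup E] [NormedSpace ℝ E]
    [NormedAddCommGroup F] [NormedSpace ℝ F]
    {s : Set E} (hs : Convex ℝ s) {x₀ : E} (hx₀ : x₀ ∈ s) {r A C : ℝ}
    (hsr : s ⊆ closedBall x₀ r) (hC : 0 ≤ C) (hrC : r * C < 1)
    {f g : E → F} {f' g' : E → E →L[ℝ] F}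
    (hf : ∀ x ∈ s, HasFDerivWithinAt f (f' x) s x)
    (hg : ∀ x ∈ s, HasFDerivWithinAt g (g' x) s x)
    (hfg₀ : f x₀ = g x₀)
    (hbdd : BddAbove ((fun x => ‖f x - g x‖) '' s))
    (hderiv : ∀ x ∈ s, ‖f' x - g' x‖ ≤ A + C * ‖f x - g x‖) :
    ∀ z ∈ s, ‖f z - g z‖ ≤ r / (1 - r * C) * A := by
  set S := sSup ((fun x => ‖f x - g x‖) '' s)
  have hle_S : ∀ x ∈ s, ‖f x - g x‖ ≤ S := fun x hx => le_csSup hbdd (mem_image_of_mem _ hx)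
  have hderiv_S : ∀ x ∈ s, ‖f' x - g' x‖ ≤ A + C * S := fun x hx =>
    (hderiv x hx).trans (by gcongr; exact hle_S x hx)
  have hS : S ≤ r * (A + C * S) := by
    refine csSup_le ⟨_, mem_image_of_mem _ hx₀⟩ ?_
    rintro _ ⟨w, hw, rfl⟩
    have hmvt := hs.norm_image_sub_le_of_norm_hasFDerivWithin_le
      (fun x hx => (hf x hx).sub (hg x hx)) hderiv_S hx₀ hw
    have hbound_nonneg : 0 ≤ A + C * S := (norm_nonneg _).trans (hderiv_S x₀ hx₀)
    calc ‖f w - g w‖ = ‖(f w - g w) - (f x₀ - g x₀)‖ := by rw [hfg₀, sub_self, sub_zero]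
      _ ≤ (A + C * S) * ‖w - x₀‖ := hmvt
      _ ≤ (A + C * S) * r := by gcongr; exact mem_closedBall_iff_norm.mp (hsr hw)
      _ = r * (A + C * S) := mul_comm _ _
  exact fun z hz => (hle_S z hz).trans (le_div_mul_of_le_mul_add_mul_self hS hrC)

theorem stmt_14_general (p q : ℕ)
    (rB rJ C : ℝ) (hrB : 0 < rB) (hC : 0 < C) (hrBC : rB * C < 1)
    (lam mu nu : EuclideanSpace ℝ (Fin p) × EuclideanSpace ℝ (Fin q) →
      (EuclideanSpace ℝ (Fin p) →L[ℝ] EuclideanSpace ℝ (Fin q)))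
    (hlam : ContinuousOn lam (closedBall 0 rB ×ˢ closedBall 0 rJ))
    (hmu : ContinuousOn mu (closedBall 0 rB ×ˢ closedBall 0 rJ))
    (hnu : ContinuousOn nu (closedBall 0 rB ×ˢ closedBall 0 rJ))
    (hlip : ∀ x ∈ closedBall (0 : EuclideanSpace ℝ (Fin p)) rB ×ˢ
        closedBall (0 : EuclideanSpace ℝ (Fin q)) rJ,
      ∀ y ∈ closedBall (0 : EuclideanSpace ℝ (Fin p)) rB ×ˢ
        closedBall (0 : EuclideanSpace ℝ (Fin q)) rJ,
      ‖lam x - lam y‖ ≤ C * Real.sqrt (dist x.1 y.1 ^ 2 + dist x.2 y.2 ^ 2))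
    (t : EuclideanSpace ℝ (Fin q))
    (f g : EuclideanSpace ℝ (Fin p) → EuclideanSpace ℝ (Fin q))
    (hfJ : ∀ z ∈ closedBall (0 : EuclideanSpace ℝ (Fin p)) rB, f z ∈ closedBall 0 rJ)
    (hgJ : ∀ z ∈ closedBall (0 : EuclideanSpace ℝ (Fin p)) rB, g z ∈ closedBall 0 rJ)
    (hf0 : f 0 = t) (hg0 : g 0 = t)
    (hfd : ∀ z ∈ closedBall (0 : EuclideanSpace ℝ (Fin p)) rB,
      HasFDerivWithinAt f (mu (z, f z)) (closedBall 0 rB) z)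
    (hgd : ∀ z ∈ closedBall (0 : EuclideanSpace ℝ (Fin p)) rB,
      HasFDerivWithinAt g (nu (z, g z)) (closedBall 0 rB) z) :
    ∀ z ∈ closedBall (0 : EuclideanSpace ℝ (Fin p)) rB,
      ‖f z - g z‖ ≤ rB / (1 - rB * C) *
        (sSup ((fun x => ‖mu x - lam x‖) ''
            (closedBall 0 rB ×ˢ closedBall 0 rJ)) +
         sSup ((fun x => ‖nu x - lam x‖) ''
            (closedBall 0 rB ×ˢ closedBall 0 rJ))) := by
  set B := closedBall (0 : EuclideanSpace ℝ (Fin p)) rB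
  set K := B ×ˢ closedBall (0 : EuclideanSpace ℝ (Fin q)) rJ
  have hK : IsCompact K := (isCompact_closedBall _ _).prod (isCompact_closedBall _ _)
  set M := sSup ((fun x => ‖mu x - lam x‖) '' K)
  set N := sSup ((fun x => ‖nu x - lam x‖) '' K)
  have hB : IsCompact B := isCompact_closedBall _ _
  have hfg_cont : ContinuousOn (fun x => ‖f x - g x‖) B := fun x hx =>
    ((hfd x hx).continuousWithinAt.sub (hgd x hx).continuousWithinAt).norm
  refine (convex_closedBall 0 rB).norm_sub_le_of_norm_hasFDerivWithin_sub_le_add_mul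
    (mem_closedBall_self hrB.le) subset_rfl hC.le hrBC hfd hgd (hf0.trans hg0.symm)
    (hB.bddAbove_image hfg_cont) fun x hx => ?_
  have hfx : (x, f x) ∈ K := mk_mem_prod hx (hfJ x hx)
  have hgx : (x, g x) ∈ K := mk_mem_prod hx (hgJ x hx)
  have hM : ‖mu (x, f x) - lam (x, f x)‖ ≤ M :=
    le_csSup (hK.bddAbove_image (hmu.sub hlam).norm) (mem_image_of_mem _ hfx)
  have hN : ‖nu (x, g x) - lam (x, g x)‖ ≤ N :=
    le_csSup (hK.bddAbove_image (hnu.sub hlam).norm) (mem_image_of_mem _ hgx)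
  have hfibre : ‖lam (x, f x) - lam (x, g x)‖ ≤ C * ‖f x - g x‖ := by
    simpa [Real.sqrt_sq dist_nonneg, dist_eq_norm] using hlip _ hfx _ hgx
  calc ‖mu (x, f x) - nu (x, g x)‖
      = ‖(mu (x, f x) - lam (x, f x)) + (lam (x, f x) - lam (x, g x))
          - (nu (x, g x) - lam (x, g x))‖ := by abel_nf
    _ ≤ ‖mu (x, f x) - lam (x, f x)‖ + ‖lam (x, f x) - lam (x, g x)‖
          + ‖nu (x, g x) - lam (x, g x)‖ := norm_sub_le_of_le (norm_add_le _ _) le_rfl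
    _ ≤ M + N + C * ‖f x - g x‖ := by linarith

/-- Cauchy estimate for graphs of leaves. If `f, g : B → J` are
graphs of local leaves of the distributions encoded by `μ` and `ν` through the
point `(0,t)`, and `λ` is `C`-Lipschitz (w.r.t. the Euclidean distance on
`B × J`), then `‖f − g‖` is controlled by the sup-distances of `μ` and `ν`
from `λ` on `B × J`. -/
theorem stmt_14 (p q : ℕ) (hp : 1 ≤ p) (hq : 1 ≤ q)
    (rB rJ C : ℝ) (hrB : 0 < rB) (hC : 0 < C) (hrBC : rB * C < 1)
    (lam mu nu : EuclideanSpace ℝ (Fin p) × EuclideanSpace ℝ (Fin q) →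
      (EuclideanSpace ℝ (Fin p) →L[ℝ] EuclideanSpace ℝ (Fin q)))
    (hlam : ContinuousOn lam (closedBall 0 rB ×ˢ closedBall 0 rJ))
    (hmu : ContinuousOn mu (closedBall 0 rB ×ˢ closedBall 0 rJ))
    (hnu : ContinuousOn nu (closedBall 0 rB ×ˢ closedBall 0 rJ))
    (hlip : ∀ x ∈ closedBall (0 : EuclideanSpace ℝ (Fin p)) rB ×ˢ
        closedBall (0 : EuclideanSpace ℝ (Fin q)) rJ,
      ∀ y ∈ closedBall (0 : EuclideanSpace ℝ (Fin p)) rB ×ˢ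
        closedBall (0 : EuclideanSpace ℝ (Fin q)) rJ,
      ‖lam x - lam y‖ ≤ C * Real.sqrt (dist x.1 y.1 ^ 2 + dist x.2 y.2 ^ 2))
    (t : EuclideanSpace ℝ (Fin q)) (ht : t ∈ closedBall 0 rJ)
    (f g : EuclideanSpace ℝ (Fin p) → EuclideanSpace ℝ (Fin q))
    (hfJ : ∀ z ∈ closedBall (0 : EuclideanSpace ℝ (Fin p)) rB, f z ∈ closedBall 0 rJ)
    (hgJ : ∀ z ∈ closedBall (0 : EuclideanSpace ℝ (Fin p)) rB, g z ∈ closedBall 0 rJ)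
    (hf0 : f 0 = t) (hg0 : g 0 = t)
    (hfd : ∀ z ∈ closedBall (0 : EuclideanSpace ℝ (Fin p)) rB,
      HasFDerivWithinAt f (mu (z, f z)) (closedBall 0 rB) z)
    (hgd : ∀ z ∈ closedBall (0 : EuclideanSpace ℝ (Fin p)) rB,
      HasFDerivWithinAt g (nu (z, g z)) (closedBall 0 rB) z) :
    ∀ z ∈ closedBall (0 : EuclideanSpace ℝ (Fin p)) rB,
      ‖f z - g z‖ ≤ rB / (1 - rB * C) *
        (sSup ((fun x => ‖mu x - lam x‖) ''
            (closedBall 0 rB ×ˢ closedBall 0 rJ)) +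
         sSup ((fun x => ‖nu x - lam x‖) ''
            (closedBall 0 rB ×ˢ closedBall 0 rJ))) :=
  stmt_14_general p q rB rJ C hrB hC hrBC lam mu nu hlam hmu hnu hlip t f g hfJ hgJ hf0 hg0 hfd hgd
end

section
/- C⁰-limits of integrable distributions are integrable (local graph form, Proposition 3.1): let p, q ≥ 1, let B ⊆ ℝᵖ be the closed ball of radius r_B > 0 centered at 0, let J ⊆ ℝ^q be a closed ball centered at 0, let C > 0 with r_B·C < 1, let λ : B × J → (ℝᵖ →L[ℝ] ℝ^q) be C-Lipschitz, and let (λ_k)_{k∈ℕ} be a sequence of continuous maps B × J → (ℝᵖ →L[ℝ] ℝ^q) converging uniformly to λ. Let t ∈ J and suppose that for every k there is a differentiable map f_k : B → J with f_k(0) = t whose derivative at each z ∈ B equals λ_k(z, f_k(z)). Then there exists a differentiable map f : B → J with f(0) = t whose derivative at each z ∈ B equals λ(z, f(z)), the maps f_k converge uniformly to f, and the derivatives z ↦ D f_k(z) converge uniformly to z ↦ D f(z). -/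
open Metric Set Filter Topology

private lemma stmt15_sqrt_helper {a b : ℝ} (ha : 0 ≤ a) (hb : 0 ≤ b) :
    Real.sqrt (a ^ 2 + b ^ 2) ≤ a + b := by
  rw [show a + b = Real.sqrt ((a + b) ^ 2) from (Real.sqrt_sq (by positivity)).symm]
  exact Real.sqrt_le_sqrt (by nlinarith)

set_option maxHeartbeats 1000000 in
/-- C⁰-limits of integrable distributions are integrable, in local
graph form (Proposition 3.1). The distribution encoded by `λ_k` (whose plane at
`(z,y)` is the graph of the linear map `λ_k (z,y)`) has a leaf through `(0,t)`
which is the graph of `f_k : B → J`; if `λ_k → λ` uniformly on `B × J` and `λ`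
is `C`-Lipschitz with `r_B·C < 1`, then the distribution encoded by `λ` also has
a leaf through `(0,t)` over `B`, obtained as the uniform `C¹`-limit of the `f_k`. -/
theorem stmt_15 (p q : ℕ) (hp : 1 ≤ p) (hq : 1 ≤ q)
    (rB rJ C : ℝ) (hrB : 0 < rB) (hC : 0 < C) (hrBC : rB * C < 1)
    (lam : EuclideanSpace ℝ (Fin p) × EuclideanSpace ℝ (Fin q) →
      (EuclideanSpace ℝ (Fin p) →L[ℝ] EuclideanSpace ℝ (Fin q)))
    (lamk : ℕ → EuclideanSpace ℝ (Fin p) × EuclideanSpace ℝ (Fin q) →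
      (EuclideanSpace ℝ (Fin p) →L[ℝ] EuclideanSpace ℝ (Fin q)))
    (hlip : ∀ x ∈ closedBall (0 : EuclideanSpace ℝ (Fin p)) rB ×ˢ
        closedBall (0 : EuclideanSpace ℝ (Fin q)) rJ,
      ∀ y ∈ closedBall (0 : EuclideanSpace ℝ (Fin p)) rB ×ˢ
        closedBall (0 : EuclideanSpace ℝ (Fin q)) rJ,
      ‖lam x - lam y‖ ≤ C * Real.sqrt (dist x.1 y.1 ^ 2 + dist x.2 y.2 ^ 2))
    (hlamk : ∀ k : ℕ, ContinuousOn (lamk k) (closedBall 0 rB ×ˢ closedBall 0 rJ))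
    (hconv : TendstoUniformlyOn lamk lam atTop (closedBall 0 rB ×ˢ closedBall 0 rJ))
    (t : EuclideanSpace ℝ (Fin q)) (ht : t ∈ closedBall 0 rJ)
    (fk : ℕ → EuclideanSpace ℝ (Fin p) → EuclideanSpace ℝ (Fin q))
    (hfkJ : ∀ k : ℕ, ∀ z ∈ closedBall (0 : EuclideanSpace ℝ (Fin p)) rB,
      fk k z ∈ closedBall 0 rJ)
    (hfk0 : ∀ k : ℕ, fk k 0 = t)
    (hfkd : ∀ k : ℕ, ∀ z ∈ closedBall (0 : EuclideanSpace ℝ (Fin p)) rB,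
      HasFDerivWithinAt (fk k) (lamk k (z, fk k z)) (closedBall 0 rB) z) :
    ∃ f : EuclideanSpace ℝ (Fin p) → EuclideanSpace ℝ (Fin q),
      (∀ z ∈ closedBall (0 : EuclideanSpace ℝ (Fin p)) rB, f z ∈ closedBall 0 rJ) ∧
      f 0 = t ∧
      (∀ z ∈ closedBall (0 : EuclideanSpace ℝ (Fin p)) rB,
        HasFDerivWithinAt f (lam (z, f z)) (closedBall 0 rB) z) ∧
      TendstoUniformlyOn fk f atTop (closedBall 0 rB) ∧
      TendstoUniformlyOn (fun k z => lamk k (z, fk k z)) (fun z => lam (z, f z))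
        atTop (closedBall 0 rB) := by
  classical
  set B : Set (EuclideanSpace ℝ (Fin p)) := closedBall 0 rB with hBdef
  set J : Set (EuclideanSpace ℝ (Fin q)) := closedBall 0 rJ with hJdef
  have hrJ : (0 : ℝ) ≤ rJ := le_trans dist_nonneg (mem_closedBall.1 ht)
  have h0B : (0 : EuclideanSpace ℝ (Fin p)) ∈ B := mem_closedBall_self hrB.le
  have h0J : (0 : EuclideanSpace ℝ (Fin q)) ∈ J := mem_closedBall_self hrJ
  have hBconv : Convex ℝ B := convex_closedBall _ _
  have hBcompact : IsCompact B := isCompact_closedBall _ _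
  have hD : (0 : ℝ) < 1 - rB * C := by linarith
  have hfkcont : ∀ k, ContinuousOn (fk k) B := fun k z hz =>
    (hfkd k z hz).continuousWithinAt
  -- Lipschitz in the second variable only
  have hlam_dist : ∀ z ∈ B, ∀ y₁ ∈ J, ∀ y₂ ∈ J,
      ‖lam (z, y₁) - lam (z, y₂)‖ ≤ C * dist y₁ y₂ := by
    intro z hz y₁ h1 y₂ h2
    have := hlip (z, y₁) ⟨hz, h1⟩ (z, y₂) ⟨hz, h2⟩
    simpa [Real.sqrt_sq dist_nonneg] using this
  -- key Cauchy estimate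
  have hkeyC : ∀ ε > (0 : ℝ), ∃ N, ∀ k ≥ N, ∀ m ≥ N, ∀ z ∈ B,
      dist (fk k z) (fk m z) ≤ 2 * rB * ε / (1 - rB * C) := by
    intro ε hε
    obtain ⟨N, hN⟩ := eventually_atTop.1
      ((Metric.tendstoUniformlyOn_iff.1 hconv) ε hε)
    refine ⟨N, fun k hk m hm => ?_⟩
    obtain ⟨z0, hz0B, hz0max⟩ := hBcompact.exists_isMaxOn ⟨0, h0B⟩
      (continuous_norm.comp_continuousOn ((hfkcont k).sub (hfkcont m)))
    set S := ‖fk k z0 - fk m z0‖ with hSdef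
    have hS0 : 0 ≤ S := norm_nonneg _
    have hderiv : ∀ x ∈ B, HasFDerivWithinAt (fun z => fk k z - fk m z)
        (lamk k (x, fk k x) - lamk m (x, fk m x)) B x := fun x hx =>
      (hfkd k x hx).sub (hfkd m x hx)
    have hbound : ∀ x ∈ B, ‖lamk k (x, fk k x) - lamk m (x, fk m x)‖ ≤ 2 * ε + C * S := by
      intro x hx
      have e1 : dist (lam (x, fk k x)) (lamk k (x, fk k x)) < ε :=
        hN k hk (x, fk k x) ⟨hx, hfkJ k x hx⟩
      have e2 : dist (lam (x, fk m x)) (lamk m (x, fk m x)) < ε :=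
        hN m hm (x, fk m x) ⟨hx, hfkJ m x hx⟩
      have e3 : dist (lam (x, fk k x)) (lam (x, fk m x)) ≤ C * dist (fk k x) (fk m x) := by
        rw [dist_eq_norm]
        exact hlam_dist x hx _ (hfkJ k x hx) _ (hfkJ m x hx)
      have e4 : dist (fk k x) (fk m x) ≤ S := by
        simpa [dist_eq_norm] using hz0max hx
      have tri := dist_triangle4 (lamk k (x, fk k x)) (lam (x, fk k x))
        (lam (x, fk m x)) (lamk m (x, fk m x))
      have e1' : dist (lamk k (x, fk k x)) (lam (x, fk k x)) < ε := by
        rw [dist_comm]; exact e1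
      rw [← dist_eq_norm]
      have e5 : C * dist (fk k x) (fk m x) ≤ C * S :=
        mul_le_mul_of_nonneg_left e4 hC.le
      linarith
    have hMVT : ∀ z ∈ B, ‖fk k z - fk m z‖ ≤ (2 * ε + C * S) * rB := by
      intro z hz
      have h1 := Convex.norm_image_sub_le_of_norm_hasFDerivWithin_le hderiv hbound hBconv h0B hz
      have h2 : fk k 0 - fk m 0 = 0 := by rw [hfk0, hfk0, sub_self]
      rw [h2, sub_zero] at h1
      have h3 : ‖z - 0‖ ≤ rB := by
        simpa [dist_eq_norm] using mem_closedBall.1 hz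
      have h4 : 0 ≤ 2 * ε + C * S := by positivity
      calc ‖fk k z - fk m z‖ ≤ (2 * ε + C * S) * ‖z - 0‖ := h1
        _ ≤ (2 * ε + C * S) * rB := mul_le_mul_of_nonneg_left h3 h4
    have hSle : S ≤ 2 * rB * ε / (1 - rB * C) := by
      have h1 := hMVT z0 hz0B
      rw [le_div_iff₀ hD]
      nlinarith
    intro z hz
    have h2 := hMVT z hz
    rw [dist_eq_norm]
    have h3 : C * S ≤ C * (2 * rB * ε / (1 - rB * C)) := mul_le_mul_of_nonneg_left hSle hC.le
    have h4 : (2 * ε + C * (2 * rB * ε / (1 - rB * C))) * rB = 2 * rB * ε / (1 - rB * C) := by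
      rw [eq_div_iff hD.ne']
      have hX : C * (2 * rB * ε / (1 - rB * C)) * (1 - rB * C) = C * (2 * rB * ε) := by
        rw [mul_assoc, div_mul_cancel₀]; exact hD.ne'
      linear_combination rB * hX
    nlinarith
  have hcauchy : UniformCauchySeqOn fk atTop B := by
    rw [Metric.uniformCauchySeqOn_iff]
    intro ε hε
    have hε' : 0 < ε * (1 - rB * C) / (2 * rB + 2) := by positivity
    obtain ⟨N, hN⟩ := hkeyC _ hε'
    refine ⟨N, fun k hk m hm z hz => lt_of_le_of_lt (hN k hk m hm z hz) ?_⟩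
    rw [div_lt_iff₀ hD]
    have h2rB : (0 : ℝ) < 2 * rB + 2 := by linarith
    rw [show 2 * rB * (ε * (1 - rB * C) / (2 * rB + 2)) =
      (2 * rB * ε * (1 - rB * C)) / (2 * rB + 2) by ring, div_lt_iff₀ h2rB]
    nlinarith [mul_pos hε hD]
  -- the limit function
  set f : EuclideanSpace ℝ (Fin p) → EuclideanSpace ℝ (Fin q) :=
    fun z => limUnder atTop (fun k => fk k z) with hfdef
  have hpt : ∀ z ∈ B, Tendsto (fun k => fk k z) atTop (𝓝 (f z)) := fun z hz =>
    (hcauchy.cauchySeq hz).tendsto_limUnder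
  have hunif : TendstoUniformlyOn fk f atTop B :=
    hcauchy.tendstoUniformlyOn_of_tendsto hpt
  have hf0 : f 0 = t := by
    refine tendsto_nhds_unique (hpt 0 h0B) ?_
    simpa [hfk0] using (tendsto_const_nhds : Tendsto (fun _ : ℕ => t) atTop (𝓝 t))
  have hfJ : ∀ z ∈ B, f z ∈ J := fun z hz =>
    IsClosed.mem_of_tendsto isClosed_closedBall (hpt z hz)
      (Eventually.of_forall fun k => hfkJ k z hz)
  -- uniform convergence of the derivatives
  have hgconv : TendstoUniformlyOn (fun k z => lamk k (z, fk k z))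
      (fun z => lam (z, f z)) atTop B := by
    rw [Metric.tendstoUniformlyOn_iff]
    intro ε hε
    have h1 := (Metric.tendstoUniformlyOn_iff.1 hconv) (ε / 2) (by positivity)
    have h2 := (Metric.tendstoUniformlyOn_iff.1 hunif) (ε / (2 * C)) (by positivity)
    filter_upwards [h1, h2] with k hk1 hk2 z hz
    have e1 : dist (lam (z, fk k z)) (lamk k (z, fk k z)) < ε / 2 :=
      hk1 (z, fk k z) ⟨hz, hfkJ k z hz⟩
    have e2 : dist (lam (z, f z)) (lam (z, fk k z)) ≤ C * dist (f z) (fk k z) := by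
      rw [dist_eq_norm]
      exact hlam_dist z hz _ (hfJ z hz) _ (hfkJ k z hz)
    have e3 : dist (f z) (fk k z) < ε / (2 * C) := hk2 z hz
    have e4 : C * dist (f z) (fk k z) < ε / 2 := by
      have := mul_lt_mul_of_pos_left e3 hC
      calc C * dist (f z) (fk k z) < C * (ε / (2 * C)) := this
        _ = ε / 2 := by field_simp
    calc dist (lam (z, f z)) (lamk k (z, fk k z))
        ≤ dist (lam (z, f z)) (lam (z, fk k z)) + dist (lam (z, fk k z)) (lamk k (z, fk k z)) :=
          dist_triangle _ _ _
      _ < ε := by linarith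
  -- bound on lam
  set M0 : ℝ := ‖lam (0, 0)‖ + C * (rB + rJ) with hM0def
  have hM0nn : 0 ≤ M0 := by positivity
  have hM0 : ∀ x ∈ B ×ˢ J, ‖lam x‖ ≤ M0 := by
    intro x hx
    have h := hlip x hx (0, 0) ⟨h0B, h0J⟩
    have hs : Real.sqrt (dist x.1 (0 : EuclideanSpace ℝ (Fin p)) ^ 2 +
        dist x.2 (0 : EuclideanSpace ℝ (Fin q)) ^ 2) ≤ rB + rJ :=
      le_trans (stmt15_sqrt_helper dist_nonneg dist_nonneg)
        (add_le_add (mem_closedBall.1 hx.1) (mem_closedBall.1 hx.2))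
    have h2 : ‖lam x - lam (0, 0)‖ ≤ C * (rB + rJ) :=
      h.trans (mul_le_mul_of_nonneg_left hs hC.le)
    calc ‖lam x‖ = ‖lam x - lam (0, 0) + lam (0, 0)‖ := by rw [sub_add_cancel]
      _ ≤ ‖lam x - lam (0, 0)‖ + ‖lam (0, 0)‖ := norm_add_le _ _
      _ ≤ M0 := by rw [hM0def]; linarith
  set M : ℝ := M0 + 1 with hMdef
  set K : ℝ := C * (1 + M) with hKdef
  have hMnn : 0 ≤ M := by linarith
  have hK : 0 < K := by rw [hKdef]; positivity
  -- key quadratic estimate for the limit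
  have hkeyest : ∀ z ∈ B, ∀ w ∈ B,
      ‖f w - f z - lam (z, f z) (w - z)‖ ≤ K * dist w z ^ 2 := by
    intro z hz w hw
    rcases eq_or_ne w z with rfl | hne
    · simp
    have hdwz : 0 < dist w z := dist_pos.2 hne
    by_contra hcon
    push_neg at hcon
    set δ : ℝ := ‖f w - f z - lam (z, f z) (w - z)‖ - K * dist w z ^ 2 with hδdef
    have hδpos : 0 < δ := by linarith
    set δ' : ℝ := δ / (2 * (2 * dist w z)) with hδ'def
    have hδ'pos : 0 < δ' := by positivity
    have hev1 := (Metric.tendstoUniformlyOn_iff.1 hconv) δ' hδ'pos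
    have hev2 := (Metric.tendstoUniformlyOn_iff.1 hconv) 1 one_pos
    -- the sequence of difference quotients converges
    have happ : Tendsto (fun k => lamk k (z, fk k z) (w - z)) atTop
        (𝓝 (lam (z, f z) (w - z))) := by
      have h1 : Tendsto (fun k => lamk k (z, fk k z)) atTop (𝓝 (lam (z, f z))) :=
        hgconv.tendsto_at hz
      exact (isBoundedBilinearMap_apply.continuous.tendsto
        (lam (z, f z), w - z)).comp (h1.prodMk_nhds tendsto_const_nhds)
    have htend : Tendsto (fun k => ‖fk k w - fk k z - lamk k (z, fk k z) (w - z)‖) atTop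
        (𝓝 ‖f w - f z - lam (z, f z) (w - z)‖) :=
      (((hpt w hw).sub (hpt z hz)).sub happ).norm
    have hle : ‖f w - f z - lam (z, f z) (w - z)‖ ≤ K * dist w z ^ 2 + δ / 2 := by
      refine le_of_tendsto htend ?_
      filter_upwards [hev1, hev2] with k hk1 hk2
      have hlamkM : ∀ x ∈ B ×ˢ J, ‖lamk k x‖ ≤ M := by
        intro x hx
        have h1 := hk2 x hx
        have h2 := hM0 x hx
        rw [dist_eq_norm] at h1
        calc ‖lamk k x‖ = ‖lamk k x - lam x + lam x‖ := by rw [sub_add_cancel]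
          _ ≤ ‖lamk k x - lam x‖ + ‖lam x‖ := norm_add_le _ _
          _ ≤ M := by rw [← norm_sub_rev] at h1; rw [hMdef]; linarith
      have hfkLip : ∀ x ∈ B, ∀ y ∈ B, ‖fk k y - fk k x‖ ≤ M * ‖y - x‖ := fun x hx y hy =>
        Convex.norm_image_sub_le_of_norm_hasFDerivWithin_le (hfkd k)
          (fun u hu => hlamkM _ ⟨hu, hfkJ k u hu⟩) hBconv hx hy
      set s : Set (EuclideanSpace ℝ (Fin p)) := closedBall z (dist w z) ∩ B with hsdef
      have hsconv : Convex ℝ s := (convex_closedBall _ _).inter hBconv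
      have hzs : z ∈ s := ⟨mem_closedBall_self dist_nonneg, hz⟩
      have hws : w ∈ s := ⟨mem_closedBall.2 le_rfl, hw⟩
      have hder : ∀ x ∈ s, HasFDerivWithinAt (fun u => fk k u - lamk k (z, fk k z) u)
          (lamk k (x, fk k x) - lamk k (z, fk k z)) s x := fun x hx =>
        ((hfkd k x hx.2).mono inter_subset_right).sub
          ((lamk k (z, fk k z)).hasFDerivWithinAt)
      have hbound2 : ∀ x ∈ s, ‖lamk k (x, fk k x) - lamk k (z, fk k z)‖ ≤
          2 * δ' + K * dist w z := by
        intro x hx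
        have hxB := hx.2
        have e1 : dist (lam (x, fk k x)) (lamk k (x, fk k x)) < δ' :=
          hk1 (x, fk k x) ⟨hxB, hfkJ k x hxB⟩
        have e2 : dist (lam (z, fk k z)) (lamk k (z, fk k z)) < δ' :=
          hk1 (z, fk k z) ⟨hz, hfkJ k z hz⟩
        have e3 : ‖lam (x, fk k x) - lam (z, fk k z)‖ ≤
            C * (dist x z + dist (fk k x) (fk k z)) := by
          have h := hlip (x, fk k x) ⟨hxB, hfkJ k x hxB⟩ (z, fk k z) ⟨hz, hfkJ k z hz⟩
          exact h.trans (mul_le_mul_of_nonneg_left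
            (stmt15_sqrt_helper dist_nonneg dist_nonneg) hC.le)
        have e4 : dist (fk k x) (fk k z) ≤ M * dist x z := by
          rw [dist_eq_norm, dist_eq_norm]
          exact hfkLip z hz x hxB
        have e5 : dist x z ≤ dist w z := mem_closedBall.1 hx.1
        have tri := dist_triangle4 (lamk k (x, fk k x)) (lam (x, fk k x))
          (lam (z, fk k z)) (lamk k (z, fk k z))
        have e1' : dist (lamk k (x, fk k x)) (lam (x, fk k x)) < δ' := by
          rw [dist_comm]; exact e1
        rw [← dist_eq_norm] at e3 ⊢
        have e6 : C * (dist x z + dist (fk k x) (fk k z)) ≤ K * dist w z := by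
          rw [hKdef]
          nlinarith [dist_nonneg (x := x) (y := z)]
        linarith
      have hmvt := Convex.norm_image_sub_le_of_norm_hasFDerivWithin_le hder hbound2 hsconv hzs hws
      have heq : (fun u => fk k u - lamk k (z, fk k z) u) w -
          (fun u => fk k u - lamk k (z, fk k z) u) z =
          fk k w - fk k z - lamk k (z, fk k z) (w - z) := by
        simp only [map_sub]
        abel
      rw [heq] at hmvt
      have hnorm : ‖w - z‖ = dist w z := (dist_eq_norm w z).symm
      rw [hnorm] at hmvt
      have hcalc : (2 * δ' + K * dist w z) * dist w z = δ / 2 + K * dist w z ^ 2 := by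
        rw [hδ'def]
        field_simp
      linarith [hmvt, hcalc.le, hcalc.ge]
    linarith
  -- the derivative of the limit
  have hfd : ∀ z ∈ B, HasFDerivWithinAt f (lam (z, f z)) B z := by
    intro z hz
    refine HasFDerivWithinAt.of_isLittleO (Asymptotics.isLittleO_iff.2 fun c hc => ?_)
    have hmem : closedBall z (c / K) ∈ 𝓝[B] z :=
      mem_nhdsWithin_of_mem_nhds (closedBall_mem_nhds z (by positivity))
    filter_upwards [hmem, self_mem_nhdsWithin] with w hw1 hw2
    have h1 := hkeyest z hz w hw2
    have h2 : dist w z ≤ c / K := mem_closedBall.1 hw1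
    have h3 : K * dist w z ^ 2 ≤ c * ‖w - z‖ := by
      rw [← dist_eq_norm]
      have h2' : dist w z * K ≤ c := (le_div_iff₀ hK).1 h2
      nlinarith [dist_nonneg (x := w) (y := z)]
    exact h1.trans h3
  exact ⟨f, hfJ, hf0, hfd, hunif, hgconv⟩
end
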